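/- arXiv:math/0511315 — 6 statements merged into one kernel-verified Lean document; each statement's English description precedes it below -/
import Mathlib

section
/- (Cayley's theorem) For every real skew-symmetric matrix A of order n (with the convention that Pf(A) = 0 when n is odd), det(A) = (Pf(A))^2. -/
open Matrix

/-- The Pfaffian of an `n × n` real matrix, defined (for `n` even) by the
standard averaged-over-permutations formula
`Pf(A) = (2^(n/2) (n/2)!)⁻¹ Σ_σ sgn(σ) Π_l A (σ(2l)) (σ(2l+1))`,
which for skew-symmetric `A` agrees with the sum over partitions of `{1,…,n}`
into `n/2` unordered pairs.  By convention `Pf(A) = 0` when `n` is odd. -/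
noncomputable def pf {n : ℕ} (A : Matrix (Fin n) (Fin n) ℝ) : ℝ :=
  if h : n % 2 = 0 then
    ((2 ^ (n / 2) * (n / 2).factorial : ℕ) : ℝ)⁻¹ *
      ∑ σ : Equiv.Perm (Fin n), ((Equiv.Perm.sign σ : ℤ) : ℝ) *
        ∏ i : Fin (n / 2),
          A (σ ⟨2 * i.val, by have := i.isLt; omega⟩)
            (σ ⟨2 * i.val + 1, by have := i.isLt; omega⟩)
  else 0

namespace CayleyAux
noncomputable def S {n : ℕ} (A : Matrix (Fin n) (Fin n) ℝ) : ℝ :=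
  ∑ σ : Equiv.Perm (Fin n), ((Equiv.Perm.sign σ : ℤ) : ℝ) *
    ∏ i : Fin (n / 2),
      A (σ ⟨2 * i.val, by have := i.isLt; omega⟩)
        (σ ⟨2 * i.val + 1, by have := i.isLt; omega⟩)
def pairE {n : ℕ} (h : n % 2 = 0) : Fin (n / 2) × Fin 2 ≃ Fin n where
  toFun x := ⟨2 * x.1.val + x.2.val, by have := x.1.isLt; have := x.2.isLt; omega⟩
  invFun p := (⟨p.val / 2, by have := p.isLt; omega⟩, ⟨p.val % 2, by omega⟩)
  left_inv := by
    rintro ⟨l, j⟩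
    have h1 := l.isLt; have h2 := j.isLt
    refine Prod.ext (Fin.ext ?_) (Fin.ext ?_) <;> simp <;> omega
  right_inv := by
    intro p; have := p.isLt
    refine Fin.ext ?_
    simp; omega
lemma pf_eq {n : ℕ} (h : n % 2 = 0) (A : Matrix (Fin n) (Fin n) ℝ) :
    pf A = ((2 ^ (n / 2) * (n / 2).factorial : ℕ) : ℝ)⁻¹ * S A := by
  rw [pf, dif_pos h]
  rfl

lemma pf_odd {n : ℕ} (h : ¬ n % 2 = 0) (A : Matrix (Fin n) (Fin n) ℝ) : pf A = 0 :=
  dif_neg h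

lemma pairE_zero {n : ℕ} (h : n % 2 = 0) (l : Fin (n / 2)) :
    pairE h (l, 0) = ⟨2 * l.val, by have := l.isLt; omega⟩ := rfl
lemma pairE_one {n : ℕ} (h : n % 2 = 0) (l : Fin (n / 2)) :
    pairE h (l, 1) = ⟨2 * l.val + 1, by have := l.isLt; omega⟩ := rfl

/-- the equivalence between functions `Fin n → Fin n` and families of pairs -/
def famE {n : ℕ} (h : n % 2 = 0) : (Fin n → Fin n) ≃ (Fin (n / 2) → Fin n × Fin n) where
  toFun G l := (G (pairE h (l, 0)), G (pairE h (l, 1)))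
  invFun g p :=
    if ((pairE h).symm p).2 = 0 then (g ((pairE h).symm p).1).1 else (g ((pairE h).symm p).1).2
  left_inv := by
    intro G; funext p
    obtain ⟨x, rfl⟩ := (pairE h).surjective p
    rcases x with ⟨l, j⟩
    fin_cases j <;> simp [Equiv.symm_apply_apply]
  right_inv := by
    intro g; funext l
    refine Prod.ext ?_ ?_ <;> simp [Equiv.symm_apply_apply]

lemma S_conj {n : ℕ} (h : n % 2 = 0) (A B : Matrix (Fin n) (Fin n) ℝ) :
    S (Bᵀ * A * B) = B.det * S A := by
  have entry : ∀ i j : Fin n, (Bᵀ * A * B) i j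
      = ∑ q : Fin n × Fin n, B q.1 i * A q.1 q.2 * B q.2 j := by
    intro i j
    calc (Bᵀ * A * B) i j = ∑ b, (∑ a, B a i * A a b) * B b j := by
          simp [Matrix.mul_apply, transpose_apply]
      _ = ∑ b, ∑ a, B a i * A a b * B b j := by
          simp [Finset.sum_mul]
      _ = ∑ a, ∑ b, B a i * A a b * B b j := Finset.sum_comm
      _ = ∑ q : Fin n × Fin n, B q.1 i * A q.1 q.2 * B q.2 j := by
          rw [Fintype.sum_prod_type]
  -- step 1: expand each product
  have step1 : S (Bᵀ * A * B) = ∑ G : Fin n → Fin n,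
      (∏ l : Fin (n / 2), A (G (pairE h (l, 0))) (G (pairE h (l, 1)))) *
        ∑ σ : Equiv.Perm (Fin n), ((Equiv.Perm.sign σ : ℤ) : ℝ) * ∏ p, B (G p) (σ p) := by
    rw [S]
    have inner : ∀ σ : Equiv.Perm (Fin n),
        ((Equiv.Perm.sign σ : ℤ) : ℝ) * ∏ i : Fin (n / 2),
          (Bᵀ * A * B) (σ ⟨2 * i.val, by have := i.isLt; omega⟩)
            (σ ⟨2 * i.val + 1, by have := i.isLt; omega⟩)
        = ∑ G : Fin n → Fin n,
            (∏ l : Fin (n / 2), A (G (pairE h (l, 0))) (G (pairE h (l, 1)))) *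
              (((Equiv.Perm.sign σ : ℤ) : ℝ) * ∏ p, B (G p) (σ p)) := by
      intro σ
      have e0 : ∀ l : Fin (n / 2),
          (⟨2 * l.val, by have := l.isLt; omega⟩ : Fin n) = pairE h (l, 0) := fun l => rfl
      have e1 : ∀ l : Fin (n / 2),
          (⟨2 * l.val + 1, by have := l.isLt; omega⟩ : Fin n) = pairE h (l, 1) := fun l => rfl
      calc ((Equiv.Perm.sign σ : ℤ) : ℝ) * ∏ i : Fin (n / 2),
          (Bᵀ * A * B) (σ ⟨2 * i.val, by have := i.isLt; omega⟩)
            (σ ⟨2 * i.val + 1, by have := i.isLt; omega⟩)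
          = ((Equiv.Perm.sign σ : ℤ) : ℝ) * ∏ l : Fin (n / 2),
            ∑ q : Fin n × Fin n,
              B q.1 (σ (pairE h (l, 0))) * A q.1 q.2 * B q.2 (σ (pairE h (l, 1))) := by
            rw [Finset.prod_congr rfl fun l _ => by rw [e0 l, e1 l, entry]]
        _ = ((Equiv.Perm.sign σ : ℤ) : ℝ) * ∑ g : Fin (n / 2) → Fin n × Fin n,
              ∏ l : Fin (n / 2),
                B (g l).1 (σ (pairE h (l, 0))) * A (g l).1 (g l).2 *
                  B (g l).2 (σ (pairE h (l, 1))) := by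
            rw [Finset.prod_univ_sum, Fintype.piFinset_univ]
        _ = ((Equiv.Perm.sign σ : ℤ) : ℝ) * ∑ G : Fin n → Fin n,
              ∏ l : Fin (n / 2),
                B (G (pairE h (l, 0))) (σ (pairE h (l, 0))) *
                  A (G (pairE h (l, 0))) (G (pairE h (l, 1))) *
                  B (G (pairE h (l, 1))) (σ (pairE h (l, 1))) := by
            rw [← Equiv.sum_comp (famE h) (fun g => ∏ l : Fin (n / 2),
              B (g l).1 (σ (pairE h (l, 0))) * A (g l).1 (g l).2 *
                B (g l).2 (σ (pairE h (l, 1))))]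
            rfl
        _ = ∑ G : Fin n → Fin n,
              (∏ l : Fin (n / 2), A (G (pairE h (l, 0))) (G (pairE h (l, 1)))) *
                (((Equiv.Perm.sign σ : ℤ) : ℝ) * ∏ p, B (G p) (σ p)) := by
            rw [Finset.mul_sum]
            refine Finset.sum_congr rfl fun G _ => ?_
            have hB : ∏ p : Fin n, B (G p) (σ p)
                = ∏ l : Fin (n / 2),
                    B (G (pairE h (l, 0))) (σ (pairE h (l, 0))) *
                      B (G (pairE h (l, 1))) (σ (pairE h (l, 1))) := by
              rw [← Equiv.prod_comp (pairE h) (fun p => B (G p) (σ p)),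
                Fintype.prod_prod_type]
              exact Finset.prod_congr rfl fun l _ => by rw [Fin.prod_univ_two]
            have hsplit : ∏ l : Fin (n / 2),
                B (G (pairE h (l, 0))) (σ (pairE h (l, 0))) *
                  A (G (pairE h (l, 0))) (G (pairE h (l, 1))) *
                  B (G (pairE h (l, 1))) (σ (pairE h (l, 1)))
                = (∏ l : Fin (n / 2), A (G (pairE h (l, 0))) (G (pairE h (l, 1)))) *
                  ∏ l : Fin (n / 2),
                    B (G (pairE h (l, 0))) (σ (pairE h (l, 0))) *
                      B (G (pairE h (l, 1))) (σ (pairE h (l, 1))) := by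
              rw [← Finset.prod_mul_distrib]
              exact Finset.prod_congr rfl fun l _ => by ring
            rw [hsplit, hB]; ring
    calc (∑ σ : Equiv.Perm (Fin n), ((Equiv.Perm.sign σ : ℤ) : ℝ) *
          ∏ i : Fin (n / 2),
            (Bᵀ * A * B) (σ ⟨2 * i.val, by have := i.isLt; omega⟩)
              (σ ⟨2 * i.val + 1, by have := i.isLt; omega⟩))
        = ∑ σ : Equiv.Perm (Fin n), ∑ G : Fin n → Fin n,
            (∏ l : Fin (n / 2), A (G (pairE h (l, 0))) (G (pairE h (l, 1)))) *
              (((Equiv.Perm.sign σ : ℤ) : ℝ) * ∏ p, B (G p) (σ p)) :=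
          Finset.sum_congr rfl fun σ _ => inner σ
      _ = ∑ G : Fin n → Fin n, ∑ σ : Equiv.Perm (Fin n),
            (∏ l : Fin (n / 2), A (G (pairE h (l, 0))) (G (pairE h (l, 1)))) *
              (((Equiv.Perm.sign σ : ℤ) : ℝ) * ∏ p, B (G p) (σ p)) := Finset.sum_comm
      _ = ∑ G : Fin n → Fin n,
            (∏ l : Fin (n / 2), A (G (pairE h (l, 0))) (G (pairE h (l, 1)))) *
              ∑ σ : Equiv.Perm (Fin n), ((Equiv.Perm.sign σ : ℤ) : ℝ) * ∏ p, B (G p) (σ p) :=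
          Finset.sum_congr rfl fun G _ => (Finset.mul_sum _ _ _).symm
  rw [step1]
  have detlem : ∀ G : Fin n → Fin n,
      (∑ σ : Equiv.Perm (Fin n), ((Equiv.Perm.sign σ : ℤ) : ℝ) * ∏ p, B (G p) (σ p))
        = (B.submatrix G id).det := by
    intro G
    rw [← Matrix.det_transpose (B.submatrix G id), Matrix.det_apply']
    rfl
  simp only [detlem]
  calc (∑ G : Fin n → Fin n,
        (∏ l : Fin (n / 2), A (G (pairE h (l, 0))) (G (pairE h (l, 1)))) *
          (B.submatrix G id).det)
      = ∑ G ∈ Finset.univ.filter (fun G : Fin n → Fin n => Function.Injective G),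
          (∏ l : Fin (n / 2), A (G (pairE h (l, 0))) (G (pairE h (l, 1)))) *
            (B.submatrix G id).det := by
        refine (Finset.sum_filter_of_ne ?_).symm
        intro G _ hne
        by_contra hni
        obtain ⟨x, y, hxy, hne'⟩ := Function.not_injective_iff.mp hni
        apply hne
        have hrow : (B.submatrix G id) x = (B.submatrix G id) y := by
          funext c; simp [submatrix_apply, hxy]
        rw [Matrix.det_zero_of_row_eq hne' hrow, mul_zero]
    _ = ∑ π : Equiv.Perm (Fin n),
          (∏ l : Fin (n / 2), A (π (pairE h (l, 0))) (π (pairE h (l, 1)))) *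
            (((Equiv.Perm.sign π : ℤ) : ℝ) * B.det) := by
        refine (Finset.sum_bij (fun (π : Equiv.Perm (Fin n)) _ => (π : Fin n → Fin n))
          ?_ ?_ ?_ ?_).symm
        · intro π _
          exact Finset.mem_filter.mpr ⟨Finset.mem_univ _, π.injective⟩
        · intro π1 _ π2 _ hco
          exact Equiv.coe_fn_injective hco
        · intro G hG
          have hGi : Function.Injective G := (Finset.mem_filter.mp hG).2
          refine ⟨Equiv.ofBijective G (Finite.injective_iff_bijective.mp hGi),
            Finset.mem_univ _, rfl⟩
        · intro π _
          rw [Matrix.det_permute]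
    _ = B.det * S A := by
        rw [S, Finset.mul_sum]
        refine Finset.sum_congr rfl fun π _ => ?_
        have hPA : (∏ l : Fin (n / 2), A (π (pairE h (l, 0))) (π (pairE h (l, 1))))
            = ∏ i : Fin (n / 2),
                A (π ⟨2 * i.val, by have := i.isLt; omega⟩)
                  (π ⟨2 * i.val + 1, by have := i.isLt; omega⟩) := rfl
        rw [hPA]; ring

def Jmat (n : ℕ) : Matrix (Fin n) (Fin n) ℝ := fun i j =>
  if i.val % 2 = 0 ∧ j.val = i.val + 1 then 1
  else if j.val % 2 = 0 ∧ i.val = j.val + 1 then -1 else 0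

lemma Jmat_pairE {n : ℕ} (h : n % 2 = 0) (a b : Fin (n / 2)) (i j : Fin 2) :
    Jmat n (pairE h (a, i)) (pairE h (b, j))
      = if a = b then !![(0 : ℝ), 1; -1, 0] i j else 0 := by
  fin_cases i <;> fin_cases j <;>
    rcases eq_or_ne a b with hab | hab <;>
      simp only [Jmat, pairE, Equiv.coe_fn_mk, hab, if_true, if_false, eq_self_iff_true,
        Fin.ext_iff] <;>
      norm_num <;>
      first
        | (intros; omega)
        | (split_ifs <;>
            first
              | rfl
              | omega
              | simp_all [Fin.ext_iff]
              | (exfalso; omega))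

lemma det_Jmat {n : ℕ} (h : n % 2 = 0) : (Jmat n).det = 1 := by
  rw [← Matrix.det_submatrix_equiv_self
    ((Equiv.prodComm (Fin 2) (Fin (n / 2))).trans (pairE h)) (Jmat n)]
  have hblock : (Jmat n).submatrix ((Equiv.prodComm (Fin 2) (Fin (n / 2))).trans (pairE h))
        ((Equiv.prodComm (Fin 2) (Fin (n / 2))).trans (pairE h))
      = Matrix.blockDiagonal (fun _ : Fin (n / 2) => !![(0 : ℝ), 1; -1, 0]) := by
    ext x y
    rcases x with ⟨i, a⟩; rcases y with ⟨j, b⟩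
    have heq : (Jmat n).submatrix ((Equiv.prodComm (Fin 2) (Fin (n / 2))).trans (pairE h))
          ((Equiv.prodComm (Fin 2) (Fin (n / 2))).trans (pairE h)) (i, a) (j, b)
        = Jmat n (pairE h (a, i)) (pairE h (b, j)) := rfl
    rw [heq, Jmat_pairE h, Matrix.blockDiagonal_apply]
  rw [hblock, Matrix.det_blockDiagonal]
  simp [Matrix.det_fin_two_of]


lemma sign_sq (β : Type*) [DecidableEq β] [Fintype β] (σ : Equiv.Perm β) :
    ((Equiv.Perm.sign σ : ℤ) : ℝ) * ((Equiv.Perm.sign σ : ℤ) : ℝ) = 1 := by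
  rcases Int.units_eq_one_or (Equiv.Perm.sign σ) with hs | hs <;> rw [hs] <;> norm_num

lemma fin2cases (x : Fin 2) : x = 0 ∨ x = 1 := by
  have := x.isLt
  have hv : x.val = 0 ∨ x.val = 1 := by omega
  rcases hv with hv | hv
  · exact Or.inl (Fin.ext hv)
  · exact Or.inr (Fin.ext hv)

lemma perm2 (u : Equiv.Perm (Fin 2)) :
    (u 0 = 0 ∧ u 1 = 1 ∧ u = 1) ∨ (u 0 = 1 ∧ u 1 = 0 ∧ u = Equiv.swap 0 1) := by
  have hne : u 0 ≠ u 1 := fun hc => absurd (u.injective hc) (by decide)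
  rcases fin2cases (u 0) with h0 | h0
  · have h1 : u 1 = 1 := by
      rcases fin2cases (u 1) with h1 | h1
      · exact absurd (h0.trans h1.symm) hne
      · exact h1
    left
    refine ⟨h0, h1, Equiv.ext fun x => ?_⟩
    rcases fin2cases x with rfl | rfl
    · simpa using h0
    · simpa using h1
  · have h1 : u 1 = 0 := by
      rcases fin2cases (u 1) with h1 | h1
      · exact h1
      · exact absurd (h0.trans h1.symm) hne
    right
    refine ⟨h0, h1, Equiv.ext fun x => ?_⟩
    rcases fin2cases x with rfl | rfl
    · rw [Equiv.swap_apply_left]; exact h0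
    · rw [Equiv.swap_apply_right]; exact h1

lemma S_Jmat {n : ℕ} (h : n % 2 = 0) :
    S (Jmat n) = ((2 ^ (n / 2) * (n / 2).factorial : ℕ) : ℝ) := by
  classical
  -- transfer the sum to permutations of `Fin (n/2) × Fin 2`
  have step1 : S (Jmat n) = ∑ τ : Equiv.Perm (Fin (n / 2) × Fin 2),
      ((Equiv.Perm.sign τ : ℤ) : ℝ) *
        ∏ l : Fin (n / 2), Jmat n (pairE h (τ (l, 0))) (pairE h (τ (l, 1))) := by
    rw [S, ← Equiv.sum_comp ((pairE h).permCongr)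
      (fun σ : Equiv.Perm (Fin n) => ((Equiv.Perm.sign σ : ℤ) : ℝ) *
        ∏ i : Fin (n / 2),
          Jmat n (σ ⟨2 * i.val, by have := i.isLt; omega⟩)
            (σ ⟨2 * i.val + 1, by have := i.isLt; omega⟩))]
    refine Finset.sum_congr rfl fun τ _ => ?_
    rw [Equiv.Perm.sign_permCongr]
    congr 1
    refine Finset.prod_congr rfl fun l _ => ?_
    have h0 : ((pairE h).permCongr τ) ⟨2 * l.val, by have := l.isLt; omega⟩
        = pairE h (τ (l, 0)) := by
      rw [Equiv.permCongr_apply]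
      exact congrArg (pairE h) (congrArg τ ((pairE h).symm_apply_apply (l, 0)))
    have h1 : ((pairE h).permCongr τ) ⟨2 * l.val + 1, by have := l.isLt; omega⟩
        = pairE h (τ (l, 1)) := by
      rw [Equiv.permCongr_apply]
      exact congrArg (pairE h) (congrArg τ ((pairE h).symm_apply_apply (l, 1)))
    rw [h0, h1]
  rw [step1]
  -- terms where some pair is not matched to a block vanish
  have step2 : (∑ τ : Equiv.Perm (Fin (n / 2) × Fin 2),
      ((Equiv.Perm.sign τ : ℤ) : ℝ) *
        ∏ l : Fin (n / 2), Jmat n (pairE h (τ (l, 0))) (pairE h (τ (l, 1))))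
      = ∑ τ ∈ Finset.univ.filter
          (fun τ : Equiv.Perm (Fin (n / 2) × Fin 2) => ∀ l, (τ (l, 0)).1 = (τ (l, 1)).1),
          ((Equiv.Perm.sign τ : ℤ) : ℝ) *
            ∏ l : Fin (n / 2), Jmat n (pairE h (τ (l, 0))) (pairE h (τ (l, 1))) := by
    refine (Finset.sum_filter_of_ne ?_).symm
    intro τ _ hne
    by_contra hcond
    apply hne
    obtain ⟨l, hl⟩ := not_forall.mp hcond
    have : ∏ l : Fin (n / 2), Jmat n (pairE h (τ (l, 0))) (pairE h (τ (l, 1))) = 0 := by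
      refine Finset.prod_eq_zero (Finset.mem_univ l) ?_
      rcases hx : τ (l, 0) with ⟨a, i⟩
      rcases hy : τ (l, 1) with ⟨b, j⟩
      rw [hx, hy] at hl
      rw [Jmat_pairE h, if_neg (by simpa using hl)]
    rw [this, mul_zero]
  rw [step2]
  -- the remaining terms are in bijection with pairs (block permutation, flips)
  have step3 : (∑ τ ∈ Finset.univ.filter
        (fun τ : Equiv.Perm (Fin (n / 2) × Fin 2) => ∀ l, (τ (l, 0)).1 = (τ (l, 1)).1),
        ((Equiv.Perm.sign τ : ℤ) : ℝ) *
          ∏ l : Fin (n / 2), Jmat n (pairE h (τ (l, 0))) (pairE h (τ (l, 1))))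
      = ∑ _p : Equiv.Perm (Fin (n / 2)) × (Fin (n / 2) → Equiv.Perm (Fin 2)), (1 : ℝ) := by
    refine (Finset.sum_bij
      (fun (p : Equiv.Perm (Fin (n / 2)) × (Fin (n / 2) → Equiv.Perm (Fin 2))) _ =>
        (Equiv.prodCongrRight p.2).trans (Equiv.prodCongrLeft fun _ => p.1))
      ?_ ?_ ?_ ?_).symm
    · intro p _
      refine Finset.mem_filter.mpr ⟨Finset.mem_univ _, fun l => rfl⟩
    · intro p1 _ p2 _ hco
      have happ : ∀ x : Fin (n / 2) × Fin 2,
          (p1.1 x.1, p1.2 x.1 x.2) = (p2.1 x.1, p2.2 x.1 x.2) := by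
        intro x
        have h5 := congrArg (fun E : Equiv.Perm (Fin (n / 2) × Fin 2) => E x) hco
        exact h5
      refine Prod.ext (Equiv.ext fun l => ?_) (funext fun l => Equiv.ext fun j => ?_)
      · exact congrArg Prod.fst (happ (l, 0))
      · exact congrArg Prod.snd (happ (l, j))
    · intro τ hτ
      have hcond : ∀ l, (τ (l, 0)).1 = (τ (l, 1)).1 := (Finset.mem_filter.mp hτ).2
      have hfst : ∀ (l : Fin (n / 2)) (i : Fin 2), (τ (l, i)).1 = (τ (l, 0)).1 := by
        intro l i
        fin_cases i
        · rfl
        · exact (hcond l).symm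
      have hsnd_ne : ∀ l : Fin (n / 2), (τ (l, 0)).2 ≠ (τ (l, 1)).2 := by
        intro l hsnd
        have h1 : τ (l, 0) = τ (l, 1) := Prod.ext (hcond l) hsnd
        have h2 := τ.injective h1
        simp [Prod.ext_iff] at h2
      have hρinj : Function.Injective (fun l => (τ (l, 0)).1) := by
        intro l l' hll0
        have hll' : (τ (l, 0)).1 = (τ (l', 0)).1 := hll0
        by_contra hne
        have hv0 := ((τ (l', 0)).2).isLt
        have hv1 := ((τ (l, 0)).2).isLt
        have hv2 := ((τ (l, 1)).2).isLt
        have hyz : ((τ (l, 0)).2).val ≠ ((τ (l, 1)).2).val := fun hc => hsnd_ne l (Fin.ext hc)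
        have h2 : ((τ (l', 0)).2).val = ((τ (l, 0)).2).val ∨
            ((τ (l', 0)).2).val = ((τ (l, 1)).2).val := by omega
        rcases h2 with h2 | h2
        · have h3 : τ (l', 0) = τ (l, 0) := Prod.ext hll'.symm (Fin.ext h2)
          have h4 := τ.injective h3
          simp only [Prod.mk.injEq] at h4
          exact hne h4.1.symm
        · have h3 : τ (l', 0) = τ (l, 1) := by
            refine Prod.ext ?_ (Fin.ext h2)
            exact hll'.symm.trans (hcond l)
          have h4 := τ.injective h3
          simp only [Prod.mk.injEq] at h4
          exact absurd h4.2 (by decide)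
      have hεinj : ∀ l : Fin (n / 2), Function.Injective (fun i : Fin 2 => (τ (l, i)).2) := by
        intro l i i' hii'
        have h3 : τ (l, i) = τ (l, i') := by
          refine Prod.ext ?_ hii'
          rw [hfst l i, hfst l i']
        have h4 := τ.injective h3
        simpa [Prod.ext_iff] using h4
      refine ⟨(Equiv.ofBijective _ (Finite.injective_iff_bijective.mp hρinj),
        fun l => Equiv.ofBijective _ (Finite.injective_iff_bijective.mp (hεinj l))),
        Finset.mem_univ _, ?_⟩
      refine Equiv.ext fun x => ?_
      rcases x with ⟨l, j⟩
      show (_, _) = τ (l, j)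
      refine Prod.ext ?_ rfl
      exact (hfst l j).symm
    · intro p _
      have hFmul : (Equiv.prodCongrRight p.2).trans (Equiv.prodCongrLeft fun _ => p.1)
          = (Equiv.prodCongrLeft fun _ : Fin 2 => p.1) * (Equiv.prodCongrRight p.2) := rfl
      have hsign : ((Equiv.Perm.sign ((Equiv.prodCongrRight p.2).trans
            (Equiv.prodCongrLeft fun _ => p.1)) : ℤ) : ℝ)
          = (((Equiv.Perm.sign p.1 : ℤ) : ℝ) * ((Equiv.Perm.sign p.1 : ℤ) : ℝ)) *
            ∏ l : Fin (n / 2), ((Equiv.Perm.sign (p.2 l) : ℤ) : ℝ) := by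
        rw [hFmul, _root_.map_mul, Equiv.Perm.sign_prodCongrLeft,
          Equiv.Perm.sign_prodCongrRight]
        simp only [Units.val_mul, Int.cast_mul, Units.coe_prod, Int.cast_prod,
          Fin.prod_univ_two]
      have hprod : ∏ l : Fin (n / 2),
          Jmat n (pairE h ((((Equiv.prodCongrRight p.2).trans
              (Equiv.prodCongrLeft fun _ => p.1))) (l, 0)))
            (pairE h ((((Equiv.prodCongrRight p.2).trans
              (Equiv.prodCongrLeft fun _ => p.1))) (l, 1)))
          = ∏ l : Fin (n / 2), ((Equiv.Perm.sign (p.2 l) : ℤ) : ℝ) := by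
        refine Finset.prod_congr rfl fun l _ => ?_
        show Jmat n (pairE h (p.1 l, p.2 l 0)) (pairE h (p.1 l, p.2 l 1)) = _
        rw [Jmat_pairE h, if_pos rfl]
        rcases perm2 (p.2 l) with ⟨h0, h1, he⟩ | ⟨h0, h1, he⟩
        · rw [h0, h1, he]
          simp
        · rw [h0, h1, he]
          rw [Equiv.Perm.sign_swap (by decide)]
          simp
      rw [hsign, hprod, mul_assoc, ← Finset.prod_mul_distrib,
        Finset.prod_congr rfl fun l _ => sign_sq (Fin 2) (p.2 l),
        Finset.prod_const_one, mul_one, sign_sq]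
  rw [step3]
  rw [Finset.sum_const, Finset.card_univ, Fintype.card_prod, Fintype.card_perm,
    Fintype.card_fun, Fintype.card_perm]
  simp [Fintype.card_fin]
  push_cast
  ring


lemma triple_mul_apply {k : ℕ} (B J : Matrix (Fin k) (Fin k) ℝ) (s t : Fin k) :
    (Bᵀ * J * B) s t = ∑ r, ∑ r', B r s * J r r' * B r' t := by
  calc (Bᵀ * J * B) s t = ∑ r', (Bᵀ * J) s r' * B r' t := Matrix.mul_apply
    _ = ∑ r', (∑ r, B r s * J r r') * B r' t := by
        refine Finset.sum_congr rfl fun r' _ => ?_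
        rw [Matrix.mul_apply]
        rfl
    _ = ∑ r', ∑ r, B r s * J r r' * B r' t := by
        refine Finset.sum_congr rfl fun r' _ => ?_
        rw [Finset.sum_mul]
    _ = ∑ r, ∑ r', B r s * J r r' * B r' t := Finset.sum_comm

lemma sum_split {n : ℕ} (hn : 2 ≤ n) (f : Fin n → ℝ) :
    ∑ p, f p = f ⟨0, by omega⟩ + (f ⟨1, by omega⟩ +
      ∑ u : Fin (n - 2), f ⟨u.val + 2, by have := u.isLt; omega⟩) := by
  have hEq : n = (n - 2) + 1 + 1 := by omega
  rw [← Equiv.sum_comp (finCongr hEq.symm) f, Fin.sum_univ_succ, Fin.sum_univ_succ]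
  have e0 : finCongr hEq.symm (0 : Fin ((n - 2) + 1 + 1)) = (⟨0, by omega⟩ : Fin n) := by
    apply Fin.ext; simp
  have e1 : finCongr hEq.symm (Fin.succ (0 : Fin ((n - 2) + 1))) = (⟨1, by omega⟩ : Fin n) := by
    apply Fin.ext; simp
  rw [e0, e1]
  have e2 : ∀ u : Fin (n - 2), finCongr hEq.symm u.succ.succ
      = (⟨u.val + 2, by have := u.isLt; omega⟩ : Fin n) := by
    intro u
    apply Fin.ext
    simp [Fin.val_succ]
  rw [Finset.sum_congr rfl fun u _ => congrArg f (e2 u)]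

-- entries of Jmat
lemma J00 {n : ℕ} (p1 p2 : (0:ℕ) < n) : Jmat n ⟨0, p1⟩ ⟨0, p2⟩ = 0 := by
  simp [Jmat]
lemma J01 {n : ℕ} (p1 : (0:ℕ) < n) (p2 : (1:ℕ) < n) : Jmat n ⟨0, p1⟩ ⟨1, p2⟩ = 1 := by
  simp [Jmat]
lemma J10 {n : ℕ} (p1 : (1:ℕ) < n) (p2 : (0:ℕ) < n) : Jmat n ⟨1, p1⟩ ⟨0, p2⟩ = -1 := by
  simp [Jmat]
lemma J11 {n : ℕ} (p1 p2 : (1:ℕ) < n) : Jmat n ⟨1, p1⟩ ⟨1, p2⟩ = 0 := by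
  simp [Jmat]
lemma J0r {n : ℕ} (u : Fin (n - 2)) (p1 : (0:ℕ) < n) (p2 : u.val + 2 < n) :
    Jmat n ⟨0, p1⟩ ⟨u.val + 2, p2⟩ = 0 := by
  have hu := u.isLt
  simp only [Jmat, Fin.val_mk]
  split_ifs <;> first | rfl | omega | simp_all
lemma J1r {n : ℕ} (u : Fin (n - 2)) (p1 : (1:ℕ) < n) (p2 : u.val + 2 < n) :
    Jmat n ⟨1, p1⟩ ⟨u.val + 2, p2⟩ = 0 := by
  have hu := u.isLt
  simp only [Jmat, Fin.val_mk]
  split_ifs <;> first | rfl | omega | simp_all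
lemma Jr0 {n : ℕ} (u : Fin (n - 2)) (p1 : u.val + 2 < n) (p2 : (0:ℕ) < n) :
    Jmat n ⟨u.val + 2, p1⟩ ⟨0, p2⟩ = 0 := by
  have hu := u.isLt
  simp only [Jmat, Fin.val_mk]
  split_ifs <;> first | rfl | omega | simp_all
lemma Jr1 {n : ℕ} (u : Fin (n - 2)) (p1 : u.val + 2 < n) (p2 : (1:ℕ) < n) :
    Jmat n ⟨u.val + 2, p1⟩ ⟨1, p2⟩ = 0 := by
  have hu := u.isLt
  simp only [Jmat, Fin.val_mk]
  split_ifs <;> first | rfl | omega | simp_all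
lemma Jrr {n : ℕ} (u v : Fin (n - 2)) (p1 : u.val + 2 < n) (p2 : v.val + 2 < n) :
    Jmat n ⟨u.val + 2, p1⟩ ⟨v.val + 2, p2⟩ = Jmat (n - 2) u v := by
  have hu := u.isLt
  have hv := v.isLt
  simp only [Jmat, Fin.val_mk]
  split_ifs <;> first | rfl | omega | simp_all

lemma normal_form : ∀ n : ℕ, n % 2 = 0 → ∀ A : Matrix (Fin n) (Fin n) ℝ, Aᵀ = -A →
    ∃ B : Matrix (Fin n) (Fin n) ℝ, A = Bᵀ * Jmat n * B := by
  intro n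
  induction n using Nat.strong_induction_on with
  | _ n IH =>
  intro hn A hA
  have hskew : ∀ s t, A t s = -A s t := by
    intro s t
    have h1 := congrFun (congrFun hA s) t
    simpa [Matrix.transpose_apply, Matrix.neg_apply] using h1
  rcases Nat.eq_zero_or_pos n with hn0 | hnpos
  · subst hn0
    exact ⟨0, by ext i j; exact i.elim0⟩
  have hn2 : 2 ≤ n := by omega
  by_cases hA0 : A = 0
  · exact ⟨0, by rw [hA0]; simp⟩
  obtain ⟨i, j, hij⟩ : ∃ i j, A i j ≠ 0 := by
    by_contra hc
    push_neg at hc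
    exact hA0 (by ext i j; simpa using hc i j)
  have hii : ∀ s, A s s = 0 := fun s => by have := hskew s s; linarith
  have hij' : i ≠ j := by
    intro hEq
    rw [hEq] at hij
    exact hij (hii j)
  obtain ⟨π, hπz, hπo⟩ : ∃ π : Equiv.Perm (Fin n),
      π ⟨0, by omega⟩ = i ∧ π ⟨1, by omega⟩ = j := by
    set z : Fin n := ⟨0, by omega⟩ with hzdef
    set o : Fin n := ⟨1, by omega⟩ with hodef
    have hzo : z ≠ o := by simp [hzdef, hodef, Fin.ext_iff]
    set w : Fin n := Equiv.swap z i j with hwdef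
    have hwz : w ≠ z := by
      intro hEq
      have h2 : Equiv.swap z i w = Equiv.swap z i z := congrArg _ hEq
      rw [hwdef, Equiv.swap_apply_self, Equiv.swap_apply_left] at h2
      exact hij' h2.symm
    refine ⟨(Equiv.swap z i) * (Equiv.swap o w), ?_, ?_⟩
    · have h1 : Equiv.swap o w z = z := Equiv.swap_apply_of_ne_of_ne hzo (Ne.symm hwz)
      rw [Equiv.Perm.mul_apply, h1, Equiv.swap_apply_left]
    · rw [Equiv.Perm.mul_apply, Equiv.swap_apply_left, hwdef, Equiv.swap_apply_self]
  set A2 := A.submatrix π π with hA2def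
  have hA2skew : ∀ s t, A2 t s = -A2 s t := fun s t => hskew (π s) (π t)
  have ha2 : A2 ⟨0, by omega⟩ ⟨1, by omega⟩ ≠ 0 := by
    simpa [hA2def, hπz, hπo] using hij
  suffices hs : ∃ B2, A2 = B2ᵀ * Jmat n * B2 by
    obtain ⟨B2, hB2⟩ := hs
    refine ⟨B2.submatrix id π.symm, ?_⟩
    have hAA2 : A = A2.submatrix π.symm π.symm := by
      ext s t
      simp [hA2def]
    rw [hAA2, hB2]
    rw [Matrix.submatrix_mul (B2ᵀ * Jmat n) B2 π.symm id π.symm Function.bijective_id,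
      Matrix.submatrix_mul B2ᵀ (Jmat n) π.symm id id Function.bijective_id,
      Matrix.submatrix_id_id, ← Matrix.transpose_submatrix]
  clear hA hA0 hij hij' hskew hii hπz hπo hA2def
  have h0n : (0:ℕ) < n := by omega
  have h1n : (1:ℕ) < n := by omega
  have ha : A2 ⟨0, h0n⟩ ⟨1, h1n⟩ ≠ 0 := ha2
  set A' : Matrix (Fin (n - 2)) (Fin (n - 2)) ℝ := fun p q =>
    A2 ⟨p.val + 2, by have := p.isLt; omega⟩ ⟨q.val + 2, by have := q.isLt; omega⟩ -
      (A2 ⟨0, h0n⟩ ⟨p.val + 2, by have := p.isLt; omega⟩ *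
        A2 ⟨1, h1n⟩ ⟨q.val + 2, by have := q.isLt; omega⟩ -
       A2 ⟨0, h0n⟩ ⟨q.val + 2, by have := q.isLt; omega⟩ *
        A2 ⟨1, h1n⟩ ⟨p.val + 2, by have := p.isLt; omega⟩) / A2 ⟨0, h0n⟩ ⟨1, h1n⟩
    with hA'def
  have hA'skew : A'ᵀ = -A' := by
    ext p q
    have hpq := hA2skew ⟨p.val + 2, by have := p.isLt; omega⟩
      ⟨q.val + 2, by have := q.isLt; omega⟩
    rw [Matrix.transpose_apply, Matrix.neg_apply]; simp only [hA'def]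
    rw [hpq]
    ring
  obtain ⟨B', hB'⟩ := IH (n - 2) (by omega) (by omega) A' hA'skew
  have hB'entries : ∀ p q, A' p q = ∑ u, ∑ v, B' u p * Jmat (n - 2) u v * B' v q := by
    intro p q
    rw [hB', triple_mul_apply]
  set B : Matrix (Fin n) (Fin n) ℝ := fun r s =>
    if r.val = 0 then -A2 ⟨1, h1n⟩ s / A2 ⟨0, h0n⟩ ⟨1, h1n⟩
    else if r.val = 1 then A2 ⟨0, h0n⟩ s
    else if hrs : 2 ≤ r.val ∧ 2 ≤ s.val then
      B' ⟨r.val - 2, by have := r.isLt; omega⟩ ⟨s.val - 2, by have := s.isLt; omega⟩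
    else 0 with hBdef
  have hB0 : ∀ (pf : (0:ℕ) < n) (s' : Fin n),
      B ⟨0, pf⟩ s' = -A2 ⟨1, h1n⟩ s' / A2 ⟨0, h0n⟩ ⟨1, h1n⟩ := by
    intro pf s'
    simp [hBdef]
  have hB1 : ∀ (pf : (1:ℕ) < n) (s' : Fin n), B ⟨1, pf⟩ s' = A2 ⟨0, h0n⟩ s' := by
    intro pf s'
    simp [hBdef]
  have hBr0 : ∀ (u : Fin (n - 2)) (pf : u.val + 2 < n) (pf2 : (0:ℕ) < n),
      B ⟨u.val + 2, pf⟩ ⟨0, pf2⟩ = 0 := by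
    intro u pf pf2
    simp [hBdef]
  have hBr1 : ∀ (u : Fin (n - 2)) (pf : u.val + 2 < n) (pf2 : (1:ℕ) < n),
      B ⟨u.val + 2, pf⟩ ⟨1, pf2⟩ = 0 := by
    intro u pf pf2
    simp [hBdef]
  have hBrr : ∀ (u v : Fin (n - 2)) (pf : u.val + 2 < n) (pf2 : v.val + 2 < n),
      B ⟨u.val + 2, pf⟩ ⟨v.val + 2, pf2⟩ = B' u v := by
    intro u v pf pf2
    simp only [hBdef]
    rw [if_neg (by omega), if_neg (by omega), dif_pos ⟨by omega, by omega⟩]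
    congr 1 <;> exact Fin.ext (by simp)
  refine ⟨B, ?_⟩
  ext s t
  rw [triple_mul_apply]
  have scases : ∀ s' : Fin n, s' = ⟨0, h0n⟩ ∨ s' = ⟨1, h1n⟩ ∨
      ∃ p : Fin (n - 2), s' = ⟨p.val + 2, by have := p.isLt; omega⟩ := by
    intro s'
    have hlt := s'.isLt
    rcases Nat.lt_or_ge s'.val 2 with hl | hl
    · rcases (by omega : s'.val = 0 ∨ s'.val = 1) with hv | hv
      · exact Or.inl (Fin.ext hv)
      · exact Or.inr (Or.inl (Fin.ext hv))
    · exact Or.inr (Or.inr ⟨⟨s'.val - 2, by omega⟩, Fin.ext (by simp; omega)⟩)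
  have h00 : A2 ⟨0, h0n⟩ ⟨0, h0n⟩ = 0 := by
    have := hA2skew ⟨0, h0n⟩ ⟨0, h0n⟩; linarith
  have h11 : A2 ⟨1, h1n⟩ ⟨1, h1n⟩ = 0 := by
    have := hA2skew ⟨1, h1n⟩ ⟨1, h1n⟩; linarith
  have h10 : A2 ⟨1, h1n⟩ ⟨0, h0n⟩ = -A2 ⟨0, h0n⟩ ⟨1, h1n⟩ := hA2skew _ _
  have hsk0 : ∀ (u : Fin (n - 2)) (pf : u.val + 2 < n),
      A2 ⟨u.val + 2, pf⟩ ⟨0, h0n⟩ = -A2 ⟨0, h0n⟩ ⟨u.val + 2, pf⟩ := fun u pf =>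
    hA2skew _ _
  have hsk1 : ∀ (u : Fin (n - 2)) (pf : u.val + 2 < n),
      A2 ⟨u.val + 2, pf⟩ ⟨1, h1n⟩ = -A2 ⟨1, h1n⟩ ⟨u.val + 2, pf⟩ := fun u pf =>
    hA2skew _ _
  simp only [sum_split hn2]
  simp only [J00, J01, J10, J11, J0r, J1r, Jr0, Jr1, Jrr]
  simp only [mul_zero, zero_mul, mul_one, mul_neg_one, neg_mul, add_zero, zero_add,
    Finset.sum_const_zero]
  rcases scases s with rfl | rfl | ⟨p, rfl⟩ <;> rcases scases t with rfl | rfl | ⟨q, rfl⟩ <;>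
    simp only [hB0, hB1, hBr0, hBr1, hBrr, mul_zero, zero_mul, neg_zero, add_zero, zero_add,
      neg_neg, zero_div, Finset.sum_const_zero, h00, h11, h10, hsk0, hsk1] <;>
    (try rw [← hB'entries]) <;>
    (try simp only [hA'def]) <;>
    (try field_simp) <;>
    (try ring)

end CayleyAux

/-- **Cayley's theorem**: for any real skew-symmetric matrix `A`,
`det A = (Pf A)²`. -/
theorem cayley {n : ℕ} (A : Matrix (Fin n) (Fin n) ℝ) (hA : Aᵀ = -A) :
    A.det = (pf A) ^ 2 := by
  by_cases h : n % 2 = 0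
  · obtain ⟨B, hB⟩ := CayleyAux.normal_form n h A hA
    have hc : ((2 ^ (n / 2) * (n / 2).factorial : ℕ) : ℝ) ≠ 0 := by
      positivity
    have hpf : pf A = B.det := by
      rw [CayleyAux.pf_eq h, hB, CayleyAux.S_conj h, CayleyAux.S_Jmat h]
      field_simp
    rw [hpf, hB, Matrix.det_mul, Matrix.det_mul, Matrix.det_transpose,
      CayleyAux.det_Jmat h]
    ring
  · rw [CayleyAux.pf_odd h]
    have hodd : Odd (Fintype.card (Fin n)) := by
      rw [Fintype.card_fin]
      exact Nat.odd_iff.mpr (by omega)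
    have hd : A.det = -A.det := by
      conv_lhs => rw [← Matrix.det_transpose, hA]
      rw [Matrix.det_neg, hodd.neg_one_pow]
      ring
    have hz : A.det = 0 := by linarith
    rw [hz]
    norm_num
end

section
/- (Wenzel/Dress–Wenzel identity) Let A = (a_{ij}) be an n×n real skew-symmetric matrix with n even. Let I₁, I₂ ⊆ {1,…,n} be subsets of odd cardinality, and let i₁ < i₂ < … < i_t be the elements of the symmetric difference I₁ △ I₂ = (I₁\I₂) ∪ (I₂\I₁). Then Σ_{τ=1}^{t} (−1)^τ · Pf_A(I₁ △ {i_τ}) · Pf_A(I₂ △ {i_τ}) = 0. -/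
open Matrix

/-- The submatrix of `A` obtained by deleting the rows and columns indexed
by the subset `I` (keeping the remaining indices in increasing order). -/
noncomputable def delete {n : ℕ} (A : Matrix (Fin n) (Fin n) ℝ) (I : Finset (Fin n)) :
    Matrix (Fin (n - I.card)) (Fin (n - I.card)) ℝ :=
  A.submatrix (Iᶜ.orderEmbOfFin (by rw [Finset.card_compl, Fintype.card_fin]))
              (Iᶜ.orderEmbOfFin (by rw [Finset.card_compl, Fintype.card_fin]))

section WenzelAux
open Equiv Finset

lemma npow_par {a b : ℕ} (h : a % 2 = b % 2) : ((-1:ℝ))^a = (-1)^b := by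
  conv_lhs => rw [← Nat.div_add_mod a 2]
  conv_rhs => rw [← Nat.div_add_mod b 2]
  rw [pow_add, pow_add, pow_mul, pow_mul]
  simp [h]

lemma pf_cast {m m' : ℕ} (h : m' = m) (B : Matrix (Fin m) (Fin m) ℝ) :
    pf (B.submatrix (Fin.cast h) (Fin.cast h)) = pf B := by
  subst h; simp [show (Fin.cast rfl : Fin m' → Fin m') = id from rfl]

lemma pf_even {k : ℕ} (B : Matrix (Fin (2*k)) (Fin (2*k)) ℝ) :
    pf B = ((2 ^ k * k.factorial : ℕ) : ℝ)⁻¹ *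
      ∑ σ : Equiv.Perm (Fin (2*k)), ((Equiv.Perm.sign σ : ℤ) : ℝ) *
        ∏ i : Fin k, B (σ ⟨2 * i.val, by omega⟩) (σ ⟨2 * i.val + 1, by omega⟩) := by
  have h2 : (2*k) % 2 = 0 := by omega
  have hk : (2*k)/2 = k := by omega
  rw [pf, dif_pos h2]
  congr 1
  · rw [hk]
  · apply Finset.sum_congr rfl
    intro σ _
    congr 1
    exact Fintype.prod_equiv (finCongr hk) _ _ (fun i => by
      congr 1 <;> exact congrArg σ (Fin.ext (by simp)))

section Expand
variable {k : ℕ}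

def av (i : Fin (k+1)) : Fin (2*k+2) := ⟨2*i.1, by have := i.isLt; omega⟩
def bv (i : Fin (k+1)) : Fin (2*k+2) := ⟨2*i.1+1, by have := i.isLt; omega⟩

noncomputable def FF (B : Matrix (Fin (2*k+2)) (Fin (2*k+2)) ℝ)
    (σ : Equiv.Perm (Fin (2*k+2))) : ℝ :=
  ((Equiv.Perm.sign σ : ℤ) : ℝ) * ∏ i : Fin (k+1), B (σ (av i)) (σ (bv i))

lemma skew_apply {m : ℕ} {B : Matrix (Fin m) (Fin m) ℝ} (hB : Bᵀ = -B) (x y : Fin m) :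
    B y x = - B x y := by
  have := congrFun (congrFun hB x) y
  simpa [Matrix.transpose_apply] using this

lemma skew_diag {m : ℕ} {B : Matrix (Fin m) (Fin m) ℝ} (hB : Bᵀ = -B) (x : Fin m) :
    B x x = 0 := by
  have := skew_apply hB x x; linarith

lemma av_ne_bv (i j : Fin (k+1)) : av i ≠ bv j := by
  simp only [av, bv, Fin.ne_iff_vne]; omega

lemma bv_ne_av (i j : Fin (k+1)) : bv i ≠ av j := (av_ne_bv j i).symm

lemma av_inj {i j : Fin (k+1)} (h : i ≠ j) : av i ≠ av j := by
  simp only [av, Fin.ne_iff_vne]; have := Fin.val_ne_of_ne h; omega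

lemma bv_inj {i j : Fin (k+1)} (h : i ≠ j) : bv i ≠ bv j := by
  simp only [bv, Fin.ne_iff_vne]; have := Fin.val_ne_of_ne h; omega

variable {B : Matrix (Fin (2*k+2)) (Fin (2*k+2)) ℝ}

lemma FF_flip (hB : Bᵀ = -B) (σ : Equiv.Perm (Fin (2*k+2))) (c : Fin (k+1)) :
    FF B (σ * Equiv.swap (av c) (bv c)) = FF B σ := by
  unfold FF
  have hab : av c ≠ bv c := av_ne_bv c c
  rw [Equiv.Perm.sign_mul, Equiv.Perm.sign_swap hab]
  rw [← Finset.prod_erase_mul _ _ (Finset.mem_univ c),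
      ← Finset.prod_erase_mul _ _ (Finset.mem_univ c)]
  have h1 : ∀ i ∈ Finset.univ.erase c,
      B ((σ * Equiv.swap (av c) (bv c)) (av i)) ((σ * Equiv.swap (av c) (bv c)) (bv i))
      = B (σ (av i)) (σ (bv i)) := by
    intro i hi
    have hic : i ≠ c := (Finset.mem_erase.mp hi).1
    simp only [Equiv.Perm.mul_apply]
    rw [Equiv.swap_apply_of_ne_of_ne (av_inj hic) (av_ne_bv i c),
        Equiv.swap_apply_of_ne_of_ne (bv_ne_av i c) (bv_inj hic)]
  rw [Finset.prod_congr rfl h1]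
  simp only [Equiv.Perm.mul_apply, Equiv.swap_apply_left, Equiv.swap_apply_right]
  rw [skew_apply hB]
  push_cast
  ring

lemma FF_bswap (σ : Equiv.Perm (Fin (2*k+2))) (c d : Fin (k+1)) :
    FF B (σ * (Equiv.swap (av c) (av d) * Equiv.swap (bv c) (bv d))) = FF B σ := by
  rcases eq_or_ne c d with rfl | hcd
  · simp
    exact congrArg (FF B) (Equiv.ext fun _ => rfl)
  unfold FF
  have hsgn : Equiv.Perm.sign (Equiv.swap (av c) (av d) * Equiv.swap (bv c) (bv d)) = 1 := by
    rw [Equiv.Perm.sign_mul, Equiv.Perm.sign_swap (av_inj hcd), Equiv.Perm.sign_swap (bv_inj hcd)]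
    decide
  rw [Equiv.Perm.sign_mul, hsgn, mul_one]
  congr 1
  have keya : ∀ i : Fin (k+1),
      (Equiv.swap (av c) (av d) * Equiv.swap (bv c) (bv d)) (av i) = av (Equiv.swap c d i) := by
    intro i
    simp only [Equiv.Perm.mul_apply]
    rw [Equiv.swap_apply_of_ne_of_ne (av_ne_bv i c) (av_ne_bv i d)]
    rcases eq_or_ne i c with rfl | hic
    · rw [Equiv.swap_apply_left, Equiv.swap_apply_left]
    rcases eq_or_ne i d with rfl | hid
    · rw [Equiv.swap_apply_right, Equiv.swap_apply_right]
    · rw [Equiv.swap_apply_of_ne_of_ne (av_inj hic) (av_inj hid),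
        Equiv.swap_apply_of_ne_of_ne hic hid]
  have keyb : ∀ i : Fin (k+1),
      (Equiv.swap (av c) (av d) * Equiv.swap (bv c) (bv d)) (bv i) = bv (Equiv.swap c d i) := by
    intro i
    simp only [Equiv.Perm.mul_apply]
    rcases eq_or_ne i c with rfl | hic
    · rw [Equiv.swap_apply_left, Equiv.swap_apply_of_ne_of_ne (bv_ne_av d i) (bv_ne_av d d),
        Equiv.swap_apply_left]
    rcases eq_or_ne i d with rfl | hid
    · rw [Equiv.swap_apply_right, Equiv.swap_apply_of_ne_of_ne (bv_ne_av c c) (bv_ne_av c i),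
        Equiv.swap_apply_right]
    · rw [Equiv.swap_apply_of_ne_of_ne (bv_inj hic) (bv_inj hid),
        Equiv.swap_apply_of_ne_of_ne (bv_ne_av i c) (bv_ne_av i d),
        Equiv.swap_apply_of_ne_of_ne hic hid]
  calc ∏ i : Fin (k+1), B (σ ((Equiv.swap (av c) (av d) * Equiv.swap (bv c) (bv d)) (av i)))
          (σ ((Equiv.swap (av c) (av d) * Equiv.swap (bv c) (bv d)) (bv i)))
      = ∏ i : Fin (k+1), B (σ (av (Equiv.swap c d i))) (σ (bv (Equiv.swap c d i))) := by
        apply Finset.prod_congr rfl; intro i _; rw [keya, keyb]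
    _ = ∏ i : Fin (k+1), B (σ (av i)) (σ (bv i)) :=
        Equiv.prod_comp (Equiv.swap c d) (fun i => B (σ (av i)) (σ (bv i)))

end Expand

section Front
variable {k : ℕ} {B : Matrix (Fin (2*k+2)) (Fin (2*k+2)) ℝ}

def gp (p : Fin (2*k+2)) : Equiv.Perm (Fin (2*k+2)) :=
  if p.1 % 2 = 0 then
    Equiv.swap (av 0) (av ⟨p.1/2, by have := p.isLt; omega⟩) *
      Equiv.swap (bv 0) (bv ⟨p.1/2, by have := p.isLt; omega⟩)
  else
    (Equiv.swap (av 0) (av ⟨p.1/2, by have := p.isLt; omega⟩) *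
      Equiv.swap (bv 0) (bv ⟨p.1/2, by have := p.isLt; omega⟩)) * Equiv.swap (av 0) (bv 0)

lemma FF_gp (hB : Bᵀ = -B) (σ : Equiv.Perm (Fin (2*k+2))) (p : Fin (2*k+2)) :
    FF B (σ * gp p) = FF B σ := by
  unfold gp
  split
  · exact FF_bswap σ 0 _
  · rw [← mul_assoc]
    rw [FF_flip hB]
    exact FF_bswap σ 0 _

lemma av_zero : (av 0 : Fin (2*k+2)) = 0 := by
  simp [av, Fin.ext_iff]

lemma gp_zero (p : Fin (2*k+2)) : gp p 0 = p := by
  unfold gp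
  split
  · next hp =>
    rw [← av_zero, Equiv.Perm.mul_apply,
      Equiv.swap_apply_of_ne_of_ne (av_ne_bv 0 0) (av_ne_bv 0 _), Equiv.swap_apply_left]
    simp only [av, Fin.ext_iff]; omega
  · next hp =>
    rw [← av_zero, Equiv.Perm.mul_apply, Equiv.Perm.mul_apply, Equiv.swap_apply_left,
      Equiv.swap_apply_left, Equiv.swap_apply_of_ne_of_ne (bv_ne_av _ 0) (bv_ne_av _ _)]
    simp only [bv, Fin.ext_iff]; omega

lemma sum_FF_front (hB : Bᵀ = -B) (r : Fin (2*k+2)) :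
    ∑ σ : Equiv.Perm (Fin (2*k+2)), FF B σ =
      (2*k+2 : ℝ) * ∑ σ ∈ Finset.univ.filter (fun σ => σ 0 = r), FF B σ := by
  have h1 : ∑ σ : Equiv.Perm (Fin (2*k+2)), FF B σ =
      ∑ p : Fin (2*k+2), ∑ σ ∈ Finset.univ.filter (fun σ => σ⁻¹ r = p), FF B σ := by
    rw [Finset.sum_fiberwise_eq_sum_filter Finset.univ Finset.univ (fun σ => σ⁻¹ r) (FF B)]
    simp
  rw [h1]
  have h2 : ∀ p : Fin (2*k+2),
      ∑ σ ∈ Finset.univ.filter (fun σ => σ⁻¹ r = p), FF B σ =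
      ∑ σ ∈ Finset.univ.filter (fun σ => σ 0 = r), FF B σ := by
    intro p
    apply Finset.sum_nbij' (i := fun σ => σ * gp p) (j := fun σ => σ * (gp p)⁻¹)
    · intro σ hσ
      simp only [Finset.mem_filter, Finset.mem_univ, true_and] at hσ ⊢
      rw [Equiv.Perm.mul_apply, gp_zero, ← hσ]
      exact (Equiv.apply_symm_apply σ r)
    · intro σ hσ
      simp only [Finset.mem_filter, Finset.mem_univ, true_and] at hσ ⊢
      have h0 : σ⁻¹ r = 0 := by rw [← hσ]; exact Equiv.symm_apply_apply σ 0
      rw [_root_.mul_inv_rev, inv_inv, Equiv.Perm.mul_apply, h0, gp_zero]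
    · intro σ _; simp [mul_assoc]
    · intro σ _; simp [mul_assoc]
    · intro σ _; exact (FF_gp hB σ p).symm
  rw [Finset.sum_congr rfl (fun p _ => h2 p)]
  rw [Finset.sum_const, Finset.card_univ, Fintype.card_fin, nsmul_eq_mul]
  push_cast
  ring

end Front

section Ext1
def ext1 {N : ℕ} (e : Equiv.Perm (Fin N)) : Equiv.Perm (Fin (N+1)) :=
  Equiv.Perm.decomposeFin.symm (0, e)

lemma ext1_zero {N : ℕ} (e : Equiv.Perm (Fin N)) : ext1 e 0 = 0 :=
  Equiv.Perm.decomposeFin_symm_apply_zero 0 e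

lemma ext1_succ {N : ℕ} (e : Equiv.Perm (Fin N)) (x : Fin N) :
    ext1 e x.succ = (e x).succ := by
  rw [ext1, Equiv.Perm.decomposeFin_symm_apply_succ, Equiv.swap_self]
  rfl

lemma ext1_sign {N : ℕ} (e : Equiv.Perm (Fin N)) :
    Equiv.Perm.sign (ext1 e) = Equiv.Perm.sign e := by
  rw [ext1, Equiv.Perm.decomposeFin.symm_sign, if_pos rfl, one_mul]

lemma ext1_inj {N : ℕ} : Function.Injective (ext1 (N := N)) := by
  intro a b h
  have := Equiv.Perm.decomposeFin.symm.injective (a₁ := (0, a)) (a₂ := (0, b)) h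
  exact (Prod.mk.injEq _ _ _ _).mp this |>.2

lemma ext1_surj {N : ℕ} (σ : Equiv.Perm (Fin (N+1))) (h : σ 0 = 0) :
    ∃ e, σ = ext1 e := by
  refine ⟨(Equiv.Perm.decomposeFin σ).2, ?_⟩
  have h1 : σ = Equiv.Perm.decomposeFin.symm (Equiv.Perm.decomposeFin σ) :=
    (Equiv.symm_apply_apply _ _).symm
  have h2 : (Equiv.Perm.decomposeFin σ).1 = 0 := by
    conv_lhs => rw [show (Equiv.Perm.decomposeFin σ).1 =
      Equiv.Perm.decomposeFin.symm (Equiv.Perm.decomposeFin σ) 0 from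
        (Equiv.Perm.decomposeFin_symm_apply_zero _ _).symm]
    rw [← h1, h]
  rw [ext1]
  conv_lhs => rw [h1]
  congr 1
  rw [Prod.ext_iff]
  exact ⟨h2, rfl⟩
end Ext1
section Inner
open Equiv.Perm
variable {k : ℕ} {B : Matrix (Fin (2*k+2)) (Fin (2*k+2)) ℝ}

lemma bv_zero : (bv 0 : Fin (2*k+2)) = 1 := by
  simp [bv, Fin.ext_iff]

lemma av_succ (i : Fin k) : (av i.succ : Fin (2*k+2)) =
    Fin.succ (Fin.succ (⟨2*i.1, by omega⟩ : Fin (2*k))) := by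
  simp [av, Fin.ext_iff]; omega

lemma bv_succ (i : Fin k) : (bv i.succ : Fin (2*k+2)) =
    Fin.succ (Fin.succ (⟨2*i.1+1, by omega⟩ : Fin (2*k))) := by
  simp [bv, Fin.ext_iff]; omega

lemma innerSumKey (hB : Bᵀ = -B) (r j : Fin (2*k+2)) (hj : j ≠ r) :
    ∑ σ ∈ Finset.filter (fun σ => σ 1 = j)
        (Finset.filter (fun σ : Equiv.Perm (Fin (2*k+2)) => σ 0 = r) Finset.univ), FF B σ =
      (-1:ℝ)^((r:ℕ)+(j:ℕ)+(if r < j then 1 else 0)) * B r j *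
        (((2^k * k.factorial : ℕ) : ℝ) * pf (delete B {r, j})) := by
  classical
  -- the position of `j` in the complement of `r`
  have hj'' : Fin.cycleRange r j ≠ 0 := by
    intro h
    exact hj (r.cycleRange.injective (h.trans (Fin.cycleRange_self r).symm))
  set j' : Fin (2*k+1) := (Fin.cycleRange r j).pred hj'' with hj'def
  have hsucc : j'.succ = Fin.cycleRange r j := Fin.succ_pred _ _
  have hrj' : r.succAbove j' = j := by
    rw [← Fin.cycleRange_symm_succ, hsucc]
    exact r.cycleRange.symm_apply_apply j
  set ρ : Equiv.Perm (Fin (2*k+2)) := r.cycleRange⁻¹ * ext1 (j'.cycleRange⁻¹) with hρdef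
  have hρ0 : ρ 0 = r := by
    rw [hρdef, Equiv.Perm.mul_apply, ext1_zero]
    exact Fin.cycleRange_symm_zero r
  have hρ1 : ρ 1 = j := by
    rw [hρdef, Equiv.Perm.mul_apply, show (1 : Fin (2*k+2)) = Fin.succ 0 from rfl, ext1_succ]
    rw [show (j'.cycleRange⁻¹) 0 = j' from Fin.cycleRange_symm_zero j']
    rw [show (r.cycleRange⁻¹) j'.succ = r.succAbove j' from Fin.cycleRange_symm_succ r j']
    exact hrj'
  have hρ2 : ∀ x : Fin (2*k), ρ (Fin.succ (Fin.succ x)) = r.succAbove (j'.succAbove x) := by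
    intro x
    rw [hρdef, Equiv.Perm.mul_apply, ext1_succ]
    rw [show (j'.cycleRange⁻¹) x.succ = j'.succAbove x from Fin.cycleRange_symm_succ j' x]
    exact Fin.cycleRange_symm_succ r _
  have hne : r ∉ ({j} : Finset (Fin (2*k+2))) := by simp [hj.symm]
  have hcard2 : ({r,j} : Finset (Fin (2*k+2))).card = 2 := by
    rw [Finset.card_insert_of_notMem hne, Finset.card_singleton]
  have hcardc : (({r,j} : Finset (Fin (2*k+2)))ᶜ).card = 2*k := by
    rw [Finset.card_compl, hcard2, Fintype.card_fin]
    omega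
  have h2 : 2*k = 2*k+2 - ({r,j} : Finset (Fin (2*k+2))).card := by rw [hcard2]; omega
  set C' := (delete B {r,j}).submatrix (Fin.cast h2) (Fin.cast h2) with hC'def
  set d : Fin (2*k) → Fin (2*k+2) := fun x => r.succAbove (j'.succAbove x) with hddef
  have hd_mem : ∀ x, d x ∈ (({r,j} : Finset (Fin (2*k+2)))ᶜ) := by
    intro x
    simp only [Finset.mem_compl, Finset.mem_insert, Finset.mem_singleton]
    push_neg
    refine ⟨Fin.succAbove_ne r _, ?_⟩
    intro h
    rw [← hrj'] at h
    exact Fin.succAbove_ne j' x (Fin.succAbove_right_injective h)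
  have hd_mono : StrictMono d := (Fin.strictMono_succAbove r).comp (Fin.strictMono_succAbove j')
  have hd : d = ⇑(Finset.orderEmbOfFin _ hcardc) :=
    Finset.orderEmbOfFin_unique hcardc hd_mem hd_mono
  have hf : (fun x : Fin (2*k) => (({r,j} : Finset (Fin (2*k+2)))ᶜ).orderEmbOfFin
      (by rw [Finset.card_compl, Fintype.card_fin]) (Fin.cast h2 x))
      = ⇑(Finset.orderEmbOfFin _ hcardc) := by
    apply Finset.orderEmbOfFin_unique hcardc
    · intro x; exact Finset.orderEmbOfFin_mem _ _ _
    · intro a b hab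
      exact (Finset.orderEmbOfFin _ _).strictMono
        (show (Fin.cast h2 a) < Fin.cast h2 b from hab)
  have hC' : ∀ x y, C' x y = B (d x) (d y) := by
    intro x y
    rw [hC'def, hd]
    show B ((({r,j} : Finset (Fin (2*k+2)))ᶜ).orderEmbOfFin _ (Fin.cast h2 x))
      ((({r,j} : Finset (Fin (2*k+2)))ᶜ).orderEmbOfFin _ (Fin.cast h2 y)) = _
    rw [congrFun hf x, congrFun hf y]
  have himg : Finset.filter (fun σ => σ 1 = j)
      (Finset.filter (fun σ : Equiv.Perm (Fin (2*k+2)) => σ 0 = r) Finset.univ)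
      = Finset.image (fun π : Equiv.Perm (Fin (2*k)) => ρ * ext1 (ext1 π)) Finset.univ := by
    ext σ
    simp only [Finset.mem_filter, Finset.mem_image, Finset.mem_univ, true_and]
    constructor
    · rintro ⟨h0, h1⟩
      have hs0 : (ρ⁻¹ * σ) 0 = 0 := by
        rw [Equiv.Perm.mul_apply, h0, ← hρ0, Equiv.Perm.inv_def, Equiv.symm_apply_apply]
      obtain ⟨e, he⟩ := ext1_surj _ hs0
      have hs1 : (ρ⁻¹ * σ) 1 = 1 := by
        rw [Equiv.Perm.mul_apply, h1, ← hρ1, Equiv.Perm.inv_def, Equiv.symm_apply_apply]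
      have he0 : e 0 = 0 := by
        have h3 : ext1 e 1 = 1 := by rw [← he]; exact hs1
        rw [show (1 : Fin (2*k+2)) = Fin.succ 0 from rfl, ext1_succ] at h3
        exact Fin.succ_injective _ h3
      obtain ⟨π, hπ⟩ := ext1_surj e he0
      refine ⟨π, ?_⟩
      rw [← hπ, ← he]
      group
    · rintro ⟨π, rfl⟩
      constructor
      · rw [Equiv.Perm.mul_apply, ext1_zero, hρ0]
      · rw [Equiv.Perm.mul_apply, show (1 : Fin (2*k+2)) = Fin.succ 0 from rfl, ext1_succ,
          ext1_zero, show (Fin.succ (0 : Fin (2*k+1))) = 1 from rfl, hρ1]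
  have hinjim : ∀ x ∈ Finset.univ, ∀ y ∈ Finset.univ,
      (fun π : Equiv.Perm (Fin (2*k)) => ρ * ext1 (ext1 π)) x
        = (fun π : Equiv.Perm (Fin (2*k)) => ρ * ext1 (ext1 π)) y → x = y :=
    fun x _ y _ h => ext1_inj (ext1_inj (mul_left_cancel h))
  rw [himg, Finset.sum_image hinjim]
  have hFF : ∀ π : Equiv.Perm (Fin (2*k)), FF B (ρ * ext1 (ext1 π)) =
      ((Equiv.Perm.sign ρ : ℤ) : ℝ) * (((Equiv.Perm.sign π : ℤ) : ℝ) *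
        (B r j * ∏ i : Fin k, C' (π ⟨2*i.1, by omega⟩) (π ⟨2*i.1+1, by omega⟩))) := by
    intro π
    unfold FF
    rw [Fin.prod_univ_succ]
    have happ : ∀ x : Fin (2*k), (ρ * ext1 (ext1 π)) (Fin.succ (Fin.succ x)) = d (π x) := by
      intro x
      rw [Equiv.Perm.mul_apply, ext1_succ, ext1_succ, hρ2]
    have h00 : (ρ * ext1 (ext1 π)) (av 0) = r := by
      rw [av_zero, Equiv.Perm.mul_apply, ext1_zero, hρ0]
    have h01 : (ρ * ext1 (ext1 π)) (bv 0) = j := by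
      rw [bv_zero, Equiv.Perm.mul_apply, show (1 : Fin (2*k+2)) = Fin.succ 0 from rfl, ext1_succ,
        ext1_zero, show (Fin.succ (0 : Fin (2*k+1))) = 1 from rfl, hρ1]
    rw [h00, h01]
    have hsucc2 : ∀ i : Fin k, B ((ρ * ext1 (ext1 π)) (av i.succ)) ((ρ * ext1 (ext1 π)) (bv i.succ))
        = C' (π ⟨2*i.1, by omega⟩) (π ⟨2*i.1+1, by omega⟩) := by
      intro i
      rw [av_succ, bv_succ, happ, happ, hC']
    rw [Finset.prod_congr rfl (fun i _ => hsucc2 i)]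
    rw [Equiv.Perm.sign_mul, ext1_sign, ext1_sign]
    push_cast
    ring
  rw [Finset.sum_congr rfl (fun π _ => hFF π)]
  have hc0 : ((2^k * k.factorial : ℕ) : ℝ) ≠ 0 := by
    exact Nat.cast_ne_zero.mpr (by positivity)
  have hcast : pf C' = pf (delete B {r,j}) := by rw [hC'def]; exact pf_cast h2 _
  have hsum : ∑ π : Equiv.Perm (Fin (2*k)), ((Equiv.Perm.sign π : ℤ) : ℝ) *
      ∏ i : Fin k, C' (π ⟨2*i.1, by omega⟩) (π ⟨2*i.1+1, by omega⟩)
      = ((2^k * k.factorial : ℕ) : ℝ) * pf (delete B {r,j}) := by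
    rw [← hcast, pf_even (k := k) C', ← mul_assoc, mul_inv_cancel₀ hc0, one_mul]
  have hsr : ((Equiv.Perm.sign ρ : ℤ) : ℝ)
      = (-1:ℝ)^((r:ℕ)+(j:ℕ)+(if r < j then 1 else 0)) := by
    have h1 : Equiv.Perm.sign ρ = (-1)^(r:ℕ) * (-1)^(j':ℕ) := by
      rw [hρdef, Equiv.Perm.sign_mul, Equiv.Perm.sign_inv, Fin.sign_cycleRange, ext1_sign,
        Equiv.Perm.sign_inv, Fin.sign_cycleRange]
    have hj'val : (j':ℕ) = if j < r then (j:ℕ) else (j:ℕ) - 1 := by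
      rw [hj'def, Fin.coe_pred]
      rcases lt_or_gt_of_ne hj with hlt | hgt
      · rw [if_pos hlt, Fin.coe_cycleRange_of_lt hlt]; omega
      · rw [if_neg (not_lt.mpr hgt.le), Fin.cycleRange_of_gt hgt]
    rw [h1]
    push_cast
    rw [← pow_add]
    apply npow_par
    rcases lt_or_gt_of_ne hj with hlt | hgt
    · have hrj : ¬ (r < j) := not_lt.mpr hlt.le
      rw [hj'val, if_pos hlt, if_neg hrj]
      omega
    · have hjval : (r:ℕ) < (j:ℕ) := hgt
      rw [hj'val, if_neg (not_lt.mpr hgt.le), if_pos hgt]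
      omega
  calc ∑ π : Equiv.Perm (Fin (2*k)), ((Equiv.Perm.sign ρ : ℤ) : ℝ) *
        (((Equiv.Perm.sign π : ℤ) : ℝ) *
          (B r j * ∏ i : Fin k, C' (π ⟨2*i.1, by omega⟩) (π ⟨2*i.1+1, by omega⟩)))
      = ((Equiv.Perm.sign ρ : ℤ) : ℝ) * (B r j *
          ∑ π : Equiv.Perm (Fin (2*k)), ((Equiv.Perm.sign π : ℤ) : ℝ) *
            ∏ i : Fin k, C' (π ⟨2*i.1, by omega⟩) (π ⟨2*i.1+1, by omega⟩)) := by
        rw [Finset.mul_sum, Finset.mul_sum]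
        apply Finset.sum_congr rfl
        intro π _
        ring
    _ = _ := by rw [hsum, hsr]; ring
end Inner
lemma pf_expand {k : ℕ} (B : Matrix (Fin (2*k+2)) (Fin (2*k+2)) ℝ) (hB : Bᵀ = -B)
    (r : Fin (2*k+2)) :
    pf B = ∑ j ∈ Finset.univ.erase r,
      (-1:ℝ)^((r:ℕ)+(j:ℕ)+(if r < j then 1 else 0)) * B r j * pf (delete B {r, j}) := by
  classical
  have h0 := pf_even (k := k+1) B
  have hT : ∑ σ : Equiv.Perm (Fin (2*(k+1))), ((Equiv.Perm.sign σ : ℤ) : ℝ) *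
      ∏ i : Fin (k+1), B (σ ⟨2*i.1, by omega⟩) (σ ⟨2*i.1+1, by omega⟩)
      = ∑ σ : Equiv.Perm (Fin (2*k+2)), FF B σ := rfl
  rw [hT] at h0
  rw [h0, sum_FF_front hB r]
  have hfib := Finset.sum_fiberwise_eq_sum_filter
    (Finset.filter (fun σ : Equiv.Perm (Fin (2*k+2)) => σ 0 = r) Finset.univ)
    (Finset.univ.erase r) (fun σ => σ 1) (FF B)
  have hall : Finset.filter (fun σ => σ 1 ∈ Finset.univ.erase r)
      (Finset.filter (fun σ : Equiv.Perm (Fin (2*k+2)) => σ 0 = r) Finset.univ)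
      = Finset.filter (fun σ : Equiv.Perm (Fin (2*k+2)) => σ 0 = r) Finset.univ := by
    apply Finset.filter_true_of_mem
    intro σ hσ
    simp only [Finset.mem_filter, Finset.mem_univ, true_and] at hσ
    simp only [Finset.mem_erase, Finset.mem_univ, and_true]
    intro h
    have h10 : (1 : Fin (2*k+2)) = 0 := σ.injective (h.trans hσ.symm)
    simp [Fin.ext_iff] at h10
  rw [hall] at hfib
  rw [← hfib]
  have hstep : ∀ j ∈ Finset.univ.erase r,
      ∑ σ ∈ Finset.filter (fun σ => σ 1 = j)
        (Finset.filter (fun σ : Equiv.Perm (Fin (2*k+2)) => σ 0 = r) Finset.univ), FF B σ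
      = (-1:ℝ)^((r:ℕ)+(j:ℕ)+(if r < j then 1 else 0)) * B r j *
        (((2^k * k.factorial : ℕ) : ℝ) * pf (delete B {r, j})) := by
    intro j hj
    exact innerSumKey hB r j (Finset.mem_erase.mp hj).1
  rw [Finset.sum_congr rfl hstep]
  have hcc : ((2*k+2 : ℝ)) * ((2^k * k.factorial : ℕ) : ℝ)
      = ((2^(k+1) * (k+1).factorial : ℕ) : ℝ) := by
    push_cast
    rw [pow_succ, Nat.factorial_succ]
    push_cast
    ring
  have hc0 : ((2^(k+1) * (k+1).factorial : ℕ) : ℝ) ≠ 0 :=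
    Nat.cast_ne_zero.mpr (by positivity)
  rw [Finset.mul_sum, Finset.mul_sum]
  apply Finset.sum_congr rfl
  intro j _
  field_simp
  push_cast [pow_succ, Nat.factorial_succ]
  ring
lemma pos_orderEmb {n c : ℕ} (S : Finset (Fin n)) (hS : S.card = c) (p : Fin c) :
    (Finset.filter (fun x => x < S.orderEmbOfFin hS p) S).card = (p : ℕ) := by
  classical
  have h1 : Finset.filter (fun x => x < S.orderEmbOfFin hS p) S
      = Finset.image (S.orderEmbOfFin hS) (Finset.Iio p) := by
    ext x
    simp only [Finset.mem_filter, Finset.mem_image, Finset.mem_Iio]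
    constructor
    · rintro ⟨hxS, hxlt⟩
      have : x ∈ Set.range (S.orderEmbOfFin hS) := by
        rw [Finset.range_orderEmbOfFin]; exact hxS
      obtain ⟨q, rfl⟩ := this
      exact ⟨q, (S.orderEmbOfFin hS).strictMono.lt_iff_lt.mp hxlt, rfl⟩
    · rintro ⟨q, hq, rfl⟩
      exact ⟨Finset.orderEmbOfFin_mem _ _ _, (S.orderEmbOfFin hS).strictMono hq⟩
  rw [h1, Finset.card_image_of_injective _ (S.orderEmbOfFin hS).injective]
  simp

lemma skew_sub {m m' : ℕ} {B : Matrix (Fin m) (Fin m) ℝ} (hB : Bᵀ = -B) (f : Fin m' → Fin m) :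
    (B.submatrix f f)ᵀ = -(B.submatrix f f) := by
  ext x y
  simp only [Matrix.transpose_apply, Matrix.submatrix_apply, Matrix.neg_apply]
  exact skew_apply hB _ _

/-- count of elements of `U` below `x` -/
noncomputable def cnt {n : ℕ} (U : Finset (Fin n)) (x : Fin n) : ℕ :=
  (Finset.filter (fun y => y < x) U).card

lemma PP_expand {n : ℕ} (A : Matrix (Fin n) (Fin n) ℝ) (hA : Aᵀ = -A)
    (U : Finset (Fin n)) {c : ℕ} (hU : U.card = 2*c+2) {r : Fin n} (hr : r ∈ U) :
    pf (delete A Uᶜ) = ∑ j ∈ U.erase r,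
      (-1:ℝ)^(cnt U r + cnt U j + (if r < j then 1 else 0)) * A r j *
        pf (delete A (U \ {r,j})ᶜ) := by
  classical
  have hUn : U.card ≤ n := by
    simpa using Finset.card_le_card (Finset.subset_univ U)
  have hmm : 2*c+2 = n - Uᶜ.card := by
    rw [Finset.card_compl, Fintype.card_fin]
    omega
  set B' := (delete A Uᶜ).submatrix (Fin.cast hmm) (Fin.cast hmm) with hB'def
  have hB' : B'ᵀ = -B' := skew_sub (skew_sub hA _) _
  set f := U.orderEmbOfFin hU with hfdef
  -- entries of B' are entries of A along f
  have hfe : (fun x : Fin (2*c+2) => (Uᶜᶜ).orderEmbOfFin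
      (by rw [Finset.card_compl, Fintype.card_fin]) (Fin.cast hmm x)) = ⇑f := by
    rw [hfdef]
    apply Finset.orderEmbOfFin_unique
    · intro x
      have h9 := Finset.orderEmbOfFin_mem (Uᶜᶜ)
        (show (Uᶜᶜ).card = n - Uᶜ.card by rw [Finset.card_compl, Fintype.card_fin]) (Fin.cast hmm x)
      simpa using h9
    · intro a b hab
      exact (Finset.orderEmbOfFin _ _).strictMono (show (Fin.cast hmm a) < Fin.cast hmm b from hab)
  have hent : ∀ x y, B' x y = A (f x) (f y) := by
    intro x y
    show A ((Uᶜᶜ).orderEmbOfFin _ (Fin.cast hmm x)) ((Uᶜᶜ).orderEmbOfFin _ (Fin.cast hmm y)) = _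
    rw [congrFun hfe x, congrFun hfe y]
  -- the position of r
  set p : Fin (2*c+2) := (U.orderIsoOfFin hU).symm ⟨r, hr⟩ with hpdef
  have hfp : f p = r := by
    have : (U.orderIsoOfFin hU) p = ⟨r, hr⟩ := (U.orderIsoOfFin hU).apply_symm_apply _
    have h2 : f p = ((U.orderIsoOfFin hU) p : Fin n) := rfl
    rw [h2, this]
  have hkey := pf_expand B' hB' p
  rw [pf_cast hmm] at hkey
  rw [hkey]
  -- reindex the sum over q ∈ univ.erase p by j = f q ∈ U.erase r
  apply Finset.sum_nbij' (i := fun q => f q)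
    (j := fun j => if h : j ∈ U then (U.orderIsoOfFin hU).symm ⟨j, h⟩ else p)
  · intro q hq
    rw [Finset.mem_erase] at hq ⊢
    refine ⟨fun h => hq.1 (f.injective (by rw [h, hfp])), Finset.orderEmbOfFin_mem _ _ _⟩
  · intro j hj
    rw [Finset.mem_erase] at hj
    rw [dif_pos hj.2]
    rw [Finset.mem_erase]
    constructor
    · intro h
      apply hj.1
      have := congrArg (fun z => ((U.orderIsoOfFin hU) z : Fin n)) h
      rw [← hfp]; simpa using this
    · exact Finset.mem_univ _
  · intro q hq
    rw [dif_pos (Finset.orderEmbOfFin_mem _ _ _)]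
    have : (⟨f q, Finset.orderEmbOfFin_mem _ _ _⟩ : {x // x ∈ U}) = (U.orderIsoOfFin hU) q := rfl
    rw [this, OrderIso.symm_apply_apply]
  · intro j hj
    rw [Finset.mem_erase] at hj
    rw [dif_pos hj.2]
    have : f ((U.orderIsoOfFin hU).symm ⟨j, hj.2⟩) = ((U.orderIsoOfFin hU)
        ((U.orderIsoOfFin hU).symm ⟨j, hj.2⟩) : Fin n) := rfl
    rw [this, OrderIso.apply_symm_apply]
  · intro q hq
    rw [Finset.mem_erase] at hq
    have e1 : B' p q = A r (f q) := by rw [hent, hfp]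
    have e2 : ((p:ℕ)) = cnt U r := by
      rw [cnt, ← hfp, hfdef, pos_orderEmb]
    have e3 : ((q:ℕ)) = cnt U (f q) := by
      rw [cnt, hfdef, pos_orderEmb]
    have e4 : (if p < q then 1 else 0) = (if r < f q then 1 else 0) := by
      by_cases h : p < q
      · rw [if_pos h, if_pos (by rw [← hfp]; exact f.strictMono h)]
      · rw [if_neg h, if_neg (by rw [← hfp]; exact fun hh => h (f.strictMono.lt_iff_lt.mp hh))]
    have e5 : pf (delete B' {p, q}) = pf (delete A (U \ {r, f q})ᶜ) := by
      have hfqU : f q ∈ U := Finset.orderEmbOfFin_mem _ _ _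
      have hrfq : r ≠ f q := fun h => hq.1 (f.injective (hfp.trans h)).symm
      have hpq : p ≠ q := fun h => hq.1 h.symm
      have hsub : ({r, f q} : Finset (Fin n)) ⊆ U := by
        intro x hx
        rcases Finset.mem_insert.mp hx with rfl | hx
        · exact hr
        · rw [Finset.mem_singleton.mp hx]; exact hfqU
      have hc2 : ({r, f q} : Finset (Fin n)).card = 2 := by
        rw [Finset.card_insert_of_notMem (by simp [hrfq]), Finset.card_singleton]
      have hcd : (U \ {r, f q}).card = 2*c := by
        rw [Finset.card_sdiff_of_subset hsub, hc2, hU]; omega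
      have hcpq : ({p, q} : Finset (Fin (2*c+2))).card = 2 := by
        rw [Finset.card_insert_of_notMem (by simp [hpq]), Finset.card_singleton]
      have h3 : 2*c = (2*c+2) - ({p,q} : Finset (Fin (2*c+2))).card := by rw [hcpq]; omega
      have h4 : 2*c = n - ((U \ {r, f q})ᶜ).card := by
        rw [Finset.card_compl, Fintype.card_fin, hcd]
        omega
      have hg1 : (fun x : Fin (2*c) => f ((({p,q}ᶜ : Finset (Fin (2*c+2))).orderEmbOfFin
          (by rw [Finset.card_compl, Fintype.card_fin])) (Fin.cast h3 x)))
          = ⇑((U \ {r, f q}).orderEmbOfFin hcd) := by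
        apply Finset.orderEmbOfFin_unique
        · intro x
          rw [Finset.mem_sdiff]
          have hmem := Finset.orderEmbOfFin_mem ({p,q}ᶜ : Finset (Fin (2*c+2)))
            (by rw [Finset.card_compl, Fintype.card_fin]) (Fin.cast h3 x)
          rw [Finset.mem_compl, Finset.mem_insert, Finset.mem_singleton] at hmem
          push_neg at hmem
          refine ⟨Finset.orderEmbOfFin_mem _ _ _, ?_⟩
          rw [Finset.mem_insert, Finset.mem_singleton]
          push_neg
          exact ⟨fun h => hmem.1 (f.injective (h.trans hfp.symm)), fun h => hmem.2 (f.injective h)⟩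
        · intro a b hab
          apply f.strictMono
          apply (Finset.orderEmbOfFin _ _).strictMono
          exact (show (Fin.cast h3 a) < Fin.cast h3 b from hab)
      have hg2 : (fun x : Fin (2*c) => (((U \ {r, f q})ᶜᶜ).orderEmbOfFin
          (by rw [Finset.card_compl, Fintype.card_fin])) (Fin.cast h4 x))
          = ⇑((U \ {r, f q}).orderEmbOfFin hcd) := by
        apply Finset.orderEmbOfFin_unique
        · intro x
          have h9 := Finset.orderEmbOfFin_mem ((U \ {r, f q})ᶜᶜ)
            (by rw [Finset.card_compl, Fintype.card_fin]) (Fin.cast h4 x)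
          simpa using h9
        · intro a b hab
          exact (Finset.orderEmbOfFin _ _).strictMono (show (Fin.cast h4 a) < Fin.cast h4 b from hab)
      have key : (delete B' {p,q}).submatrix (Fin.cast h3) (Fin.cast h3)
          = (delete A (U \ {r, f q})ᶜ).submatrix (Fin.cast h4) (Fin.cast h4) := by
        ext x y
        have L : ((delete B' {p,q}).submatrix (Fin.cast h3) (Fin.cast h3)) x y
            = A ((U \ {r, f q}).orderEmbOfFin hcd x) ((U \ {r, f q}).orderEmbOfFin hcd y) := by
          show B' ((({p,q}ᶜ : Finset (Fin (2*c+2))).orderEmbOfFin _) (Fin.cast h3 x))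
            ((({p,q}ᶜ : Finset (Fin (2*c+2))).orderEmbOfFin _) (Fin.cast h3 y)) = _
          rw [hent]
          exact congrArg₂ A (congrFun hg1 x) (congrFun hg1 y)
        have R : ((delete A (U \ {r, f q})ᶜ).submatrix (Fin.cast h4) (Fin.cast h4)) x y
            = A ((U \ {r, f q}).orderEmbOfFin hcd x) ((U \ {r, f q}).orderEmbOfFin hcd y) :=
          congrArg₂ A (congrFun hg2 x) (congrFun hg2 y)
        rw [L, R]
      rw [← pf_cast h3 (delete B' {p,q}), ← pf_cast h4 (delete A (U \ {r, f q})ᶜ), key]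
    rw [e1, e2, e3, e4, e5]
lemma cnt_sdiff_add {n : ℕ} {S : Finset (Fin n)} {j : Fin n} (hj : j ∈ S) (x : Fin n) :
    cnt (S \ {j}) x + (if j < x then 1 else 0) = cnt S x := by
  unfold cnt
  have hfil : Finset.filter (fun y => y < x) (S \ {j})
      = (Finset.filter (fun y => y < x) S) \ {j} := by
    ext z
    simp only [Finset.mem_sdiff, Finset.mem_filter, Finset.mem_singleton]
    tauto
  rw [hfil]
  by_cases h : j < x
  · rw [if_pos h]
    have hjmem : j ∈ Finset.filter (fun y => y < x) S := Finset.mem_filter.mpr ⟨hj, h⟩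
    rw [Finset.card_sdiff_of_subset (Finset.singleton_subset_iff.mpr hjmem), Finset.card_singleton]
    have h1 : 0 < (Finset.filter (fun y => y < x) S).card := Finset.card_pos.mpr ⟨j, hjmem⟩
    omega
  · rw [if_neg h, Finset.sdiff_eq_self_iff_disjoint.mpr (by simp [h])]
    omega

lemma cnt_insert_self {n : ℕ} {S : Finset (Fin n)} {i : Fin n} :
    cnt (insert i S) i = cnt S i := by
  unfold cnt
  rw [Finset.filter_insert, if_neg (lt_irrefl i)]

lemma cnt_insert_other {n : ℕ} {S : Finset (Fin n)} {i : Fin n} (hi : i ∉ S) (j : Fin n) :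
    cnt (insert i S) j = cnt S j + (if i < j then 1 else 0) := by
  unfold cnt
  rw [Finset.filter_insert]
  by_cases h : i < j
  · rw [if_pos h, if_pos h, Finset.card_insert_of_notMem
      (fun hc => hi (Finset.mem_filter.mp hc).1)]
  · rw [if_neg h, if_neg h, add_zero]

lemma cnt_symmDiff_par {n : ℕ} (J₁ J₂ : Finset (Fin n)) (i : Fin n) :
    cnt J₁ i + cnt J₂ i = cnt (symmDiff J₁ J₂) i + 2 * cnt (J₁ ∩ J₂) i := by
  classical
  unfold cnt
  have h1 := Finset.card_union_add_card_inter
    (Finset.filter (fun y => y < i) J₁) (Finset.filter (fun y => y < i) J₂)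
  rw [← Finset.filter_union, ← Finset.filter_inter_distrib] at h1
  have h2 : J₁ ∪ J₂ = (symmDiff J₁ J₂) ∪ (J₁ ∩ J₂) := by
    ext x
    simp only [Finset.mem_union, Finset.mem_inter, Finset.mem_symmDiff]
    tauto
  have h3 : (Finset.filter (fun y => y < i) (J₁ ∪ J₂)).card
      = (Finset.filter (fun y => y < i) (symmDiff J₁ J₂)).card
        + (Finset.filter (fun y => y < i) (J₁ ∩ J₂)).card := by
    rw [h2, Finset.filter_union]
    apply Finset.card_union_of_disjoint
    apply Finset.disjoint_filter_filter
    rw [Finset.disjoint_left]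
    intro a ha hb
    rw [Finset.mem_symmDiff] at ha
    rw [Finset.mem_inter] at hb
    tauto
  omega
lemma GG_notmem {n c : ℕ} (A : Matrix (Fin n) (Fin n) ℝ) (hA : Aᵀ = -A)
    (S : Finset (Fin n)) (hS : S.card = 2*c+1) {i : Fin n} (hi : i ∉ S) :
    ∑ j ∈ S, (-1:ℝ)^(cnt S j) * A i j * pf (delete A (S \ {j})ᶜ)
      = (-1:ℝ)^(cnt S i) * pf (delete A (insert i S)ᶜ) := by
  classical
  have hcard : (insert i S).card = 2*c+2 := by
    rw [Finset.card_insert_of_notMem hi, hS]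
  have hexp := PP_expand A hA (insert i S) hcard (Finset.mem_insert_self i S)
  rw [Finset.erase_insert hi] at hexp
  rw [hexp, Finset.mul_sum]
  apply Finset.sum_congr rfl
  intro j hj
  have hij : i ≠ j := fun h => hi (h ▸ hj)
  have hU1 : insert i S \ {i, j} = S \ {j} := by
    ext x
    simp only [Finset.mem_sdiff, Finset.mem_insert, Finset.mem_singleton]
    constructor
    · rintro ⟨rfl | hx, hx2⟩
      · exact absurd (Or.inl rfl) hx2
      · push_neg at hx2; exact ⟨hx, hx2.2⟩
    · rintro ⟨hx, hx2⟩
      exact ⟨Or.inr hx, by push_neg; exact ⟨fun h => hi (h ▸ hx), hx2⟩⟩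
  rw [hU1, cnt_insert_self, cnt_insert_other hi j]
  rw [show ((-1:ℝ)^(cnt S i) * ((-1:ℝ)^(cnt S i + (cnt S j + (if i < j then 1 else 0))
      + (if i < j then 1 else 0)) * A i j * pf (delete A (S \ {j})ᶜ)))
    = ((-1:ℝ)^(cnt S i) * (-1:ℝ)^(cnt S i + (cnt S j + (if i < j then 1 else 0))
      + (if i < j then 1 else 0))) * A i j * pf (delete A (S \ {j})ᶜ) from by ring]
  rw [← pow_add]
  have hpw : ((-1:ℝ))^(cnt S i + (cnt S i + (cnt S j + (if i < j then 1 else 0))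
      + (if i < j then 1 else 0))) = (-1:ℝ)^(cnt S j) := by
    apply npow_par
    by_cases h : i < j
    · rw [if_pos h]; omega
    · rw [if_neg h]; omega
  rw [hpw]

lemma GG_mem {n c : ℕ} (A : Matrix (Fin n) (Fin n) ℝ) (hA : Aᵀ = -A)
    (S : Finset (Fin n)) (hS : S.card = 2*c+1) {i : Fin n} (hi : i ∈ S) :
    ∑ j ∈ S, (-1:ℝ)^(cnt S j) * A i j * pf (delete A (S \ {j})ᶜ) = 0 := by
  classical
  have hAii : A i i = 0 := skew_diag hA i
  rw [← Finset.add_sum_erase _ _ hi, hAii, mul_zero, zero_mul, zero_add]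
  rcases c with _ | c'
  · -- S = {i}
    have : S = {i} := Finset.eq_singleton_iff_unique_mem.mpr
      ⟨hi, fun x hx => by
        have h1 := Finset.card_eq_one.mp hS
        obtain ⟨a, ha⟩ := h1
        rw [ha] at hx hi
        rw [Finset.mem_singleton] at hx hi
        rw [hx, hi]⟩
    rw [this]
    simp
  · -- expand each term once more
    set E := S.erase i with hEdef
    have hstep : ∀ j ∈ E, (-1:ℝ)^(cnt S j) * A i j * pf (delete A (S \ {j})ᶜ)
        = ∑ l ∈ E.erase j, (-1:ℝ)^(cnt S j + cnt (S \ {j}) i + cnt (S \ {j}) l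
            + (if i < l then 1 else 0)) * (A i j * A i l)
            * pf (delete A ((S \ {j}) \ {i, l})ᶜ) := by
      intro j hj
      have hjS : j ∈ S := (Finset.mem_erase.mp hj).2
      have hji : j ≠ i := (Finset.mem_erase.mp hj).1
      have hcardj : (S \ {j}).card = 2*c'+2 := by
        rw [Finset.card_sdiff_of_subset (Finset.singleton_subset_iff.mpr hjS),
          Finset.card_singleton, hS]
        omega
      have hiSj : i ∈ S \ {j} := Finset.mem_sdiff.mpr ⟨hi, by simp [hji.symm]⟩
      have hexp := PP_expand A hA (S \ {j}) hcardj hiSj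
      rw [hexp, Finset.mul_sum]
      have herase : (S \ {j}).erase i = E.erase j := by
        ext x
        simp only [Finset.mem_erase, Finset.mem_sdiff, Finset.mem_singleton, hEdef]
        tauto
      rw [herase]
      apply Finset.sum_congr rfl
      intro l hl
      rw [pow_add, pow_add, pow_add]
      ring
    rw [Finset.sum_congr rfl hstep]
    -- now double sum is antisymmetric
    have hcomm := Finset.sum_comm' (s := E) (t := fun j => E.erase j)
      (s' := fun l => E.erase l) (t' := E)
      (f := fun j l => (-1:ℝ)^(cnt S j + cnt (S \ {j}) i + cnt (S \ {j}) l
            + (if i < l then 1 else 0)) * (A i j * A i l)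
            * pf (delete A ((S \ {j}) \ {i, l})ᶜ))
      (by intro x y; simp only [Finset.mem_erase]; tauto)
    have hanti : ∀ l ∈ E, ∀ j ∈ E.erase l,
        (-1:ℝ)^(cnt S j + cnt (S \ {j}) i + cnt (S \ {j}) l
            + (if i < l then 1 else 0)) * (A i j * A i l)
            * pf (delete A ((S \ {j}) \ {i, l})ᶜ)
        = - ((-1:ℝ)^(cnt S l + cnt (S \ {l}) i + cnt (S \ {l}) j
            + (if i < j then 1 else 0)) * (A i l * A i j)
            * pf (delete A ((S \ {l}) \ {i, j})ᶜ)) := by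
      intro l hl j hj
      have hlS : l ∈ S := (Finset.mem_erase.mp hl).2
      have hli : l ≠ i := (Finset.mem_erase.mp hl).1
      have hjE : j ∈ E := (Finset.mem_erase.mp hj).2
      have hjS : j ∈ S := (Finset.mem_erase.mp hjE).2
      have hji : j ≠ i := (Finset.mem_erase.mp hjE).1
      have hjl : j ≠ l := (Finset.mem_erase.mp hj).1
      have hsets : (S \ {j}) \ {i, l} = (S \ {l}) \ {i, j} := by
        ext x
        simp only [Finset.mem_sdiff, Finset.mem_singleton, Finset.mem_insert]
        tauto
      rw [hsets]
      have c1 := cnt_sdiff_add hjS i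
      have c2 := cnt_sdiff_add hjS l
      have c3 := cnt_sdiff_add hlS i
      have c4 := cnt_sdiff_add hlS j
      have hpar : ((-1:ℝ)^(cnt S j + cnt (S \ {j}) i + cnt (S \ {j}) l
            + (if i < l then 1 else 0)))
          = - ((-1:ℝ)^(cnt S l + cnt (S \ {l}) i + cnt (S \ {l}) j
            + (if i < j then 1 else 0))) := by
        rw [show -((-1:ℝ)^(cnt S l + cnt (S \ {l}) i + cnt (S \ {l}) j
            + (if i < j then 1 else 0)))
          = (-1:ℝ)^(cnt S l + cnt (S \ {l}) i + cnt (S \ {l}) j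
            + (if i < j then 1 else 0) + 1) from by rw [pow_succ]; ring]
        apply npow_par
        have t1 : (if j < i then 1 else 0) + (if i < j then 1 else 0) = 1 := by
          rcases lt_or_gt_of_ne hji with h | h
          · rw [if_pos h, if_neg (not_lt.mpr h.le)]
          · rw [if_neg (not_lt.mpr h.le), if_pos h]
        have t2 : (if j < l then 1 else 0) + (if l < j then 1 else 0) = 1 := by
          rcases lt_or_gt_of_ne hjl with h | h
          · rw [if_pos h, if_neg (not_lt.mpr h.le)]
          · rw [if_neg (not_lt.mpr h.le), if_pos h]
        have t3 : (if l < i then 1 else 0) + (if i < l then 1 else 0) = 1 := by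
          rcases lt_or_gt_of_ne hli with h | h
          · rw [if_pos h, if_neg (not_lt.mpr h.le)]
          · rw [if_neg (not_lt.mpr h.le), if_pos h]
        omega
      rw [hpar]
      ring
    have h9 : ∀ x : ℝ, x = -x → x = 0 := fun x h => by linarith
    apply h9
    conv_lhs => rw [hcomm]
    rw [Finset.sum_congr rfl (fun l hl => Finset.sum_congr rfl (hanti l hl))]
    simp [Finset.sum_neg_distrib]
noncomputable def EEf {n : ℕ} (A : Matrix (Fin n) (Fin n) ℝ) (S : Finset (Fin n)) (i : Fin n) : ℝ :=
  if i ∈ S then (-1:ℝ)^(cnt S i) * pf (delete A (S \ {i})ᶜ) else 0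

noncomputable def GGf {n : ℕ} (A : Matrix (Fin n) (Fin n) ℝ) (i : Fin n) (S : Finset (Fin n)) : ℝ :=
  ∑ j ∈ S, (-1:ℝ)^(cnt S j) * A i j * pf (delete A (S \ {j})ᶜ)

lemma symm_compl_mem {n : ℕ} {S : Finset (Fin n)} {i : Fin n} (hi : i ∈ S) :
    symmDiff S {i} = (insert i Sᶜ)ᶜ := by
  ext x
  by_cases hx : x = i
  · subst hx
    simp [Finset.mem_symmDiff, hi]
  · simp [Finset.mem_symmDiff, hx]

lemma symm_compl_notmem {n : ℕ} {S : Finset (Fin n)} {i : Fin n} (hi : i ∉ S) :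
    symmDiff S {i} = (Sᶜ \ {i})ᶜ := by
  ext x
  by_cases hx : x = i
  · subst hx
    simp [Finset.mem_symmDiff, hi]
  · simp [Finset.mem_symmDiff, hx]

lemma GGf_of_mem {n c : ℕ} (A : Matrix (Fin n) (Fin n) ℝ) (hA : Aᵀ = -A)
    {S : Finset (Fin n)} (hS : S.card = 2*c+1) {i : Fin n} (hi : i ∈ S) :
    GGf A i S = 0 := by
  unfold GGf; exact GG_mem A hA S hS hi

lemma GGf_of_notmem {n c : ℕ} (A : Matrix (Fin n) (Fin n) ℝ) (hA : Aᵀ = -A)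
    {S : Finset (Fin n)} (hS : S.card = 2*c+1) {i : Fin n} (hi : i ∉ S) :
    GGf A i S = (-1:ℝ)^(cnt S i) * pf (delete A (insert i S)ᶜ) := by
  unfold GGf; exact GG_notmem A hA S hS hi

lemma sum_univ_H {n : ℕ} (A : Matrix (Fin n) (Fin n) ℝ) (hA : Aᵀ = -A)
    (J₁ J₂ : Finset (Fin n)) :
    ∑ i : Fin n, (GGf A i J₁ * EEf A J₂ i + EEf A J₁ i * GGf A i J₂) = 0 := by
  classical
  have hGG : ∀ (i : Fin n) (S : Finset (Fin n)), GGf A i S = ∑ j : Fin n, A i j * EEf A S j := by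
    intro i S
    unfold GGf
    rw [← Finset.sum_subset (Finset.subset_univ S)
      (fun j _ hj => by unfold EEf; rw [if_neg hj, mul_zero])]
    apply Finset.sum_congr rfl
    intro j hj
    unfold EEf
    rw [if_pos hj]
    ring
  have hH : ∀ i : Fin n, GGf A i J₁ * EEf A J₂ i + EEf A J₁ i * GGf A i J₂
      = ∑ j : Fin n, A i j * (EEf A J₁ j * EEf A J₂ i + EEf A J₁ i * EEf A J₂ j) := by
    intro i
    rw [hGG, hGG, Finset.sum_mul, Finset.mul_sum, ← Finset.sum_add_distrib]
    apply Finset.sum_congr rfl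
    intro j _
    ring
  rw [Finset.sum_congr rfl (fun i _ => hH i)]
  have h9 : ∀ x : ℝ, x = -x → x = 0 := fun x h => by linarith
  apply h9
  conv_lhs => rw [Finset.sum_comm]
  rw [← Finset.sum_neg_distrib]
  apply Finset.sum_congr rfl
  intro x _
  rw [← Finset.sum_neg_distrib]
  apply Finset.sum_congr rfl
  intro y _
  rw [skew_apply hA]
  ring


end WenzelAux

/-- **Wenzel / Dress–Wenzel identity.**  For a real skew-symmetric `n × n`
matrix `A` (`n` even) and subsets `I₁, I₂ ⊆ {1,…,n}` of odd cardinality,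
with `i₁ < i₂ < … < i_t` the elements of the symmetric difference `I₁ △ I₂`,
`Σ_{τ=1}^t (−1)^τ Pf_A(I₁ △ {i_τ}) Pf_A(I₂ △ {i_τ}) = 0`. -/
theorem wenzel_dress {n : ℕ} (hn : Even n) (A : Matrix (Fin n) (Fin n) ℝ)
    (hA : Aᵀ = -A) (I₁ I₂ : Finset (Fin n))
    (h₁ : Odd I₁.card) (h₂ : Odd I₂.card) :
    ∑ τ : Fin (symmDiff I₁ I₂).card,
      (-1 : ℝ) ^ (τ.val + 1) *
        pf (delete A (symmDiff I₁ {(symmDiff I₁ I₂).orderEmbOfFin rfl τ})) *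
        pf (delete A (symmDiff I₂ {(symmDiff I₁ I₂).orderEmbOfFin rfl τ})) = 0 := by
  classical
  set D := symmDiff I₁ I₂ with hDdef
  set J₁ := I₁ᶜ with hJ₁def
  set J₂ := I₂ᶜ with hJ₂def
  have hDJ : D = symmDiff J₁ J₂ := by
    ext x
    simp only [hDdef, hJ₁def, hJ₂def, Finset.mem_symmDiff, Finset.mem_compl]
    tauto
  obtain ⟨m₁, hm₁⟩ := h₁
  obtain ⟨m₂, hm₂⟩ := h₂
  obtain ⟨m, hm⟩ := hn
  have hI₁n : I₁.card ≤ n := by simpa using Finset.card_le_card (Finset.subset_univ I₁)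
  have hI₂n : I₂.card ≤ n := by simpa using Finset.card_le_card (Finset.subset_univ I₂)
  have hJ₁card : J₁.card = n - I₁.card := by
    rw [hJ₁def, Finset.card_compl, Fintype.card_fin]
  have hJ₂card : J₂.card = n - I₂.card := by
    rw [hJ₂def, Finset.card_compl, Fintype.card_fin]
  obtain ⟨c₁, hc₁⟩ : ∃ c, J₁.card = 2*c+1 := ⟨(n - I₁.card - 1)/2, by omega⟩
  obtain ⟨c₂, hc₂⟩ : ∃ c, J₂.card = 2*c+1 := ⟨(n - I₂.card - 1)/2, by omega⟩
  -- Step 1 : sum over τ ↦ sum over i ∈ D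
  have hstep1 : ∑ τ : Fin D.card,
      (-1 : ℝ) ^ (τ.val + 1) *
        pf (delete A (symmDiff I₁ {D.orderEmbOfFin rfl τ})) *
        pf (delete A (symmDiff I₂ {D.orderEmbOfFin rfl τ}))
      = ∑ i ∈ D, (-1:ℝ)^(cnt D i + 1) *
          pf (delete A (symmDiff I₁ {i})) * pf (delete A (symmDiff I₂ {i})) := by
    apply Finset.sum_bij (i := fun τ (_ : τ ∈ Finset.univ) => D.orderEmbOfFin rfl τ)
    · intro τ _
      exact Finset.orderEmbOfFin_mem _ _ _
    · intro τ _ τ' _ h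
      exact (D.orderEmbOfFin rfl).injective h
    · intro b hb
      have : b ∈ Set.range (D.orderEmbOfFin rfl) := by
        rw [Finset.range_orderEmbOfFin]; exact hb
      obtain ⟨q, hq⟩ := this
      exact ⟨q, Finset.mem_univ q, hq⟩
    · intro τ _
      rw [show cnt D (D.orderEmbOfFin rfl τ) = τ.val from pos_orderEmb D rfl τ]
  rw [hstep1]
  -- Step 2 : each term equals minus the H-term
  have hstep2 : ∀ i ∈ D, (-1:ℝ)^(cnt D i + 1) *
      pf (delete A (symmDiff I₁ {i})) * pf (delete A (symmDiff I₂ {i}))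
      = - (GGf A i J₁ * EEf A J₂ i + EEf A J₁ i * GGf A i J₂) := by
    intro i hiD
    have hiD' : (i ∈ J₁ ∧ i ∉ J₂) ∨ (i ∈ J₂ ∧ i ∉ J₁) := by
      have := hiD
      rw [hDJ, Finset.mem_symmDiff] at this
      tauto
    have hpar : ((-1:ℝ))^(cnt D i + 1) = -((-1:ℝ))^(cnt J₁ i + cnt J₂ i) := by
      rw [show -((-1:ℝ))^(cnt J₁ i + cnt J₂ i) = ((-1:ℝ))^(cnt J₁ i + cnt J₂ i + 1) from by
        rw [pow_succ]; ring]
      apply npow_par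
      have := cnt_symmDiff_par J₁ J₂ i
      rw [← hDJ] at this
      omega
    rcases hiD' with ⟨hi1, hi2⟩ | ⟨hi2, hi1⟩
    · -- i ∈ J₁ \ J₂ : i ∉ I₁, i ∈ I₂
      have hiI₁ : i ∉ I₁ := by rwa [hJ₁def, Finset.mem_compl] at hi1
      have hiI₂ : i ∈ I₂ := by
        rw [hJ₂def, Finset.mem_compl] at hi2
        exact not_not.mp hi2
      have e1 : symmDiff I₁ {i} = (J₁ \ {i})ᶜ := by
        rw [hJ₁def]; exact symm_compl_notmem hiI₁
      have e2 : symmDiff I₂ {i} = (insert i J₂)ᶜ := by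
        rw [hJ₂def]; exact symm_compl_mem hiI₂
      have hEE1 : EEf A J₁ i = (-1:ℝ)^(cnt J₁ i) * pf (delete A (J₁ \ {i})ᶜ) := by
        unfold EEf; rw [if_pos hi1]
      have hEE2 : EEf A J₂ i = 0 := by unfold EEf; rw [if_neg hi2]
      have hGG2 : GGf A i J₂ = (-1:ℝ)^(cnt J₂ i) * pf (delete A (insert i J₂)ᶜ) :=
        GGf_of_notmem A hA hc₂ hi2
      rw [e1, e2, hEE1, hEE2, hGG2, hpar]
      ring
    · -- i ∈ J₂ \ J₁ : i ∈ I₁, i ∉ I₂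
      have hiI₁ : i ∈ I₁ := by
        rw [hJ₁def, Finset.mem_compl] at hi1
        exact not_not.mp hi1
      have hiI₂ : i ∉ I₂ := by rwa [hJ₂def, Finset.mem_compl] at hi2
      have e1 : symmDiff I₁ {i} = (insert i J₁)ᶜ := by
        rw [hJ₁def]; exact symm_compl_mem hiI₁
      have e2 : symmDiff I₂ {i} = (J₂ \ {i})ᶜ := by
        rw [hJ₂def]; exact symm_compl_notmem hiI₂
      have hEE2 : EEf A J₂ i = (-1:ℝ)^(cnt J₂ i) * pf (delete A (J₂ \ {i})ᶜ) := by
        unfold EEf; rw [if_pos hi2]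
      have hEE1 : EEf A J₁ i = 0 := by unfold EEf; rw [if_neg hi1]
      have hGG1 : GGf A i J₁ = (-1:ℝ)^(cnt J₁ i) * pf (delete A (insert i J₁)ᶜ) :=
        GGf_of_notmem A hA hc₁ hi1
      rw [e1, e2, hEE2, hEE1, hGG1, hpar]
      ring
  rw [Finset.sum_congr rfl hstep2]
  rw [Finset.sum_neg_distrib]
  -- Step 3 : the sum over D equals sum over univ minus sum over Dᶜ, both zero
  have hC3 : ∀ i ∈ Dᶜ, GGf A i J₁ * EEf A J₂ i + EEf A J₁ i * GGf A i J₂ = 0 := by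
    intro i hiDc
    rw [Finset.mem_compl] at hiDc
    have : ¬ ((i ∈ J₁ ∧ i ∉ J₂) ∨ (i ∈ J₂ ∧ i ∉ J₁)) := by
      intro h
      apply hiDc
      rw [hDJ, Finset.mem_symmDiff]
      tauto
    push_neg at this
    by_cases h1 : i ∈ J₁
    · have h2 : i ∈ J₂ := this.1 h1
      rw [GGf_of_mem A hA hc₁ h1, GGf_of_mem A hA hc₂ h2]
      ring
    · have h2 : i ∉ J₂ := fun hc => h1 (this.2 hc)
      rw [show EEf A J₁ i = 0 from by unfold EEf; rw [if_neg h1],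
        show EEf A J₂ i = 0 from by unfold EEf; rw [if_neg h2]]
      ring
  have hsplit := Finset.sum_add_sum_compl D
    (fun i => GGf A i J₁ * EEf A J₂ i + EEf A J₁ i * GGf A i J₂)
  rw [Finset.sum_eq_zero hC3, add_zero, sum_univ_H A hA J₁ J₂] at hsplit
  rw [hsplit, neg_zero]
end

section
/- (Dodgson's determinant-evaluation rule) Let A be an arbitrary n×n real matrix with n ≥ 2. Then det(A_{\{1,n\}}) · det(A) = det(A₁₁) · det(A_{nn}) − det(A_{1n}) · det(A_{n1}), where A_{\{1,n\}} is the (n−2)×(n−2) matrix obtained from A by deleting rows 1 and n and columns 1 and n, and A_{ij} is the (n−1)×(n−1) matrix obtained from A by deleting row i and column j. -/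
open Matrix

/-- The `(n−1) × (n−1)` minor matrix of an `n × n` matrix obtained by deleting
row `i` and column `j` (keeping the remaining indices in increasing order). -/
noncomputable def minorRC {n : ℕ} (A : Matrix (Fin n) (Fin n) ℝ) (i j : Fin n) :
    Matrix (Fin (n - 1)) (Fin (n - 1)) ℝ :=
  A.submatrix
    (({i}ᶜ : Finset (Fin n)).orderEmbOfFin
      (by rw [Finset.card_compl, Fintype.card_fin, Finset.card_singleton]))
    (({j}ᶜ : Finset (Fin n)).orderEmbOfFin
      (by rw [Finset.card_compl, Fintype.card_fin, Finset.card_singleton]))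

open Polynomial

lemma orderEmb_compl_eq {n : ℕ} (i : Fin (n + 1)) (h : ({i}ᶜ : Finset (Fin (n+1))).card = n + 1 - 1) :
    ⇑(({i}ᶜ : Finset (Fin (n+1))).orderEmbOfFin h) = i.succAbove := by
  have := Finset.orderEmbOfFin_unique' (s := ({i}ᶜ : Finset (Fin (n+1)))) h
    (f := i.succAboveOrderEmb) (fun x => by simp [Fin.succAbove_ne])
  rw [← this]; rfl

lemma minorRC_eq {n : ℕ} (A : Matrix (Fin (n+1)) (Fin (n+1)) ℝ) (i j : Fin (n+1)) :
    minorRC A i j = A.submatrix i.succAbove j.succAbove := by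
  unfold minorRC
  rw [orderEmb_compl_eq, orderEmb_compl_eq]

section Core

variable {n : ℕ}

private abbrev gmap (n : ℕ) : Fin n → Fin (n + 2) := fun k => k.succ.castSucc

private lemma g_ne_zero (k : Fin n) : gmap n k ≠ 0 := by
  simp [gmap, Fin.ext_iff]

private lemma g_ne_last (k : Fin n) : gmap n k ≠ Fin.last (n + 1) := by
  intro h
  have hk := k.is_lt
  have : (k : ℕ) + 1 = n + 1 := by simpa [gmap, Fin.ext_iff] using h
  omega

private lemma zero_ne_last : (0 : Fin (n + 2)) ≠ Fin.last (n + 1) := by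
  simp [Fin.ext_iff]

/-- The reindexing equivalence. -/
noncomputable def reidx (n : ℕ) : (Fin 2 ⊕ Fin n) ≃ Fin (n + 2) := by
  refine Equiv.ofBijective (Sum.elim ![0, Fin.last (n + 1)] (gmap n)) ?_
  refine (Fintype.bijective_iff_injective_and_card _).mpr ⟨?_, by simp; omega⟩
  rintro (a | a) (b | b) h <;>
      simp only [Sum.elim_inl, Sum.elim_inr] at h
  · fin_cases a <;> fin_cases b <;> simp_all [Fin.ext_iff]
  · exfalso; fin_cases a <;>
      simp only [Matrix.cons_val_zero, Matrix.cons_val_one, Matrix.head_cons] at h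
    · exact g_ne_zero b h.symm
    · exact g_ne_last b h.symm
  · exfalso; fin_cases b <;>
      simp only [Matrix.cons_val_zero, Matrix.cons_val_one, Matrix.head_cons] at h
    · exact g_ne_zero a h
    · exact g_ne_last a h
  · simp only [gmap, Fin.ext_iff, Fin.coe_castSucc, Fin.val_succ] at h
    exact congrArg Sum.inr (Fin.ext (by omega))

@[simp] lemma reidx_inl_zero : reidx n (Sum.inl 0) = 0 := rfl
@[simp] lemma reidx_inl_one : reidx n (Sum.inl 1) = Fin.last (n + 1) := rfl
@[simp] lemma reidx_inr (k : Fin n) : reidx n (Sum.inr k) = gmap n k := rfl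

lemma core_ns (M : Matrix (Fin (n + 2)) (Fin (n + 2)) ℝ) (hM : M.det ≠ 0) :
    (M.submatrix (gmap n) (gmap n)).det * M.det =
      adjugate M 0 0 * adjugate M (Fin.last (n + 1)) (Fin.last (n + 1)) -
        adjugate M 0 (Fin.last (n + 1)) * adjugate M (Fin.last (n + 1)) 0 := by
  set l := Fin.last (n + 1) with hl
  have h0l : (0 : Fin (n + 2)) ≠ l := zero_ne_last
  have hl0 : l ≠ (0 : Fin (n + 2)) := zero_ne_last.symm
  have hg0 : ∀ k : Fin n, gmap n k ≠ 0 := g_ne_zero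
  have hgl : ∀ k : Fin n, gmap n k ≠ l := g_ne_last
  set N : Matrix (Fin (n + 2)) (Fin (n + 2)) ℝ :=
    Matrix.of fun i j =>
      if j = 0 then adjugate M i 0
      else if j = l then adjugate M i l
      else (1 : Matrix (Fin (n + 2)) (Fin (n + 2)) ℝ) i j with hN
  -- compute M * N
  have hMN : M * N = Matrix.of fun i j =>
      if j = 0 then M.det * (1 : Matrix (Fin (n + 2)) (Fin (n + 2)) ℝ) i 0
      else if j = l then M.det * (1 : Matrix (Fin (n + 2)) (Fin (n + 2)) ℝ) i l
      else M i j := by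
    ext i j
    rw [mul_apply]
    by_cases hj0 : j = 0
    · subst hj0
      simp only [hN, Matrix.of_apply, if_pos rfl]
      calc ∑ k, M i k * adjugate M k 0 = (M * adjugate M) i 0 := (mul_apply).symm
        _ = M.det * (1 : Matrix (Fin (n + 2)) (Fin (n + 2)) ℝ) i 0 := by
            rw [mul_adjugate]; simp [Matrix.smul_apply]
    · by_cases hjl : j = l
      · subst hjl
        simp only [hN, Matrix.of_apply, if_neg hj0, if_pos rfl]
        calc ∑ k, M i k * adjugate M k l = (M * adjugate M) i l := (mul_apply).symm
          _ = M.det * (1 : Matrix (Fin (n + 2)) (Fin (n + 2)) ℝ) i l := by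
              rw [mul_adjugate]; simp [Matrix.smul_apply]
      · simp only [hN, Matrix.of_apply, if_neg hj0, if_neg hjl]
        rw [Finset.sum_eq_single j]
        · simp [Matrix.one_apply]
        · intro k _ hk
          simp [Matrix.one_apply, hk]
        · simp
  -- determinant of M * N via blocks
  have hdetMN : (M * N).det = M.det ^ 2 * (M.submatrix (gmap n) (gmap n)).det := by
    rw [← Matrix.det_submatrix_equiv_self (reidx n) (M * N)]
    have hblock : (M * N).submatrix (reidx n) (reidx n) =
        fromBlocks (M.det • (1 : Matrix (Fin 2) (Fin 2) ℝ))
          (Matrix.of fun a k => M (reidx n (Sum.inl a)) (gmap n k)) 0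
          (M.submatrix (gmap n) (gmap n)) := by
      ext (a | a) (b | b) <;>
        simp only [Matrix.submatrix_apply, fromBlocks_apply₁₁, fromBlocks_apply₁₂,
          fromBlocks_apply₂₁, fromBlocks_apply₂₂, hMN, Matrix.of_apply, reidx_inr]
      · fin_cases a <;> fin_cases b <;>
          simp [Matrix.one_apply, h0l, hl0, Matrix.smul_apply, ← hl]
      · rw [if_neg (hg0 b), if_neg (hgl b)]
      · fin_cases b <;>
          simp [Matrix.one_apply, hg0 a, hgl a, Matrix.zero_apply, ← hl, (by simpa using hgl a : a.castSucc.succ ≠ l)]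
      · rw [if_neg (hg0 b), if_neg (hgl b)]
    rw [hblock, det_fromBlocks_zero₂₁, det_smul, det_one]
    simp [mul_comm]
  -- determinant of N via blocks
  have hdetN : N.det =
      adjugate M 0 0 * adjugate M l l - adjugate M 0 l * adjugate M l 0 := by
    rw [← Matrix.det_submatrix_equiv_self (reidx n) N]
    have hblock : N.submatrix (reidx n) (reidx n) =
        fromBlocks !![adjugate M 0 0, adjugate M 0 l; adjugate M l 0, adjugate M l l] 0
          (Matrix.of fun k a => N (gmap n k) (reidx n (Sum.inl a)))
          (1 : Matrix (Fin n) (Fin n) ℝ) := by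
      ext (a | a) (b | b) <;>
        simp only [Matrix.submatrix_apply, fromBlocks_apply₁₁, fromBlocks_apply₁₂,
          fromBlocks_apply₂₁, fromBlocks_apply₂₂, reidx_inr]
      · fin_cases a <;> fin_cases b <;>
          simp [hN, h0l, hl0, ← hl]
      · fin_cases a <;>
          simp [hN, hg0 b, (hg0 b).symm, hgl b, (hgl b).symm, Matrix.one_apply, ← hl, (by simpa using hgl b : b.castSucc.succ ≠ l), (by simpa using (hg0 b).symm : 0 ≠ b.castSucc.succ), (by simpa using (hgl b).symm : l ≠ b.castSucc.succ)]
      · rfl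
      · simp only [hN, Matrix.of_apply, if_neg (hg0 b), if_neg (hgl b)]
        simp [Matrix.one_apply, Fin.ext_iff, gmap]
    rw [hblock, det_fromBlocks_zero₁₂, det_one, mul_one, det_fin_two_of]
  have key : M.det * N.det = M.det * ((M.submatrix (gmap n) (gmap n)).det * M.det) := by
    rw [← det_mul, hdetMN]; ring
  have := mul_left_cancel₀ hM key
  rw [← this, hdetN]

end Core

lemma core_all {n : ℕ} (A : Matrix (Fin (n + 2)) (Fin (n + 2)) ℝ) :
    (A.submatrix (gmap n) (gmap n)).det * A.det =
      adjugate A 0 0 * adjugate A (Fin.last (n + 1)) (Fin.last (n + 1)) -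
        adjugate A 0 (Fin.last (n + 1)) * adjugate A (Fin.last (n + 1)) 0 := by
  set l := Fin.last (n + 1) with hl
  set B : Matrix (Fin (n + 2)) (Fin (n + 2)) ℝ[X] := A.map C + (X : ℝ[X]) • 1 with hBdef
  have hB : B = charmatrix (-A) := by
    ext i j
    by_cases h : i = j <;>
      simp [hBdef, charmatrix_apply_eq, charmatrix_apply_ne, h, Matrix.one_apply,
        sub_neg_eq_add, add_comm]
  have hBdet : B.det ≠ 0 := by
    rw [hB]; exact ((-A).charpoly_monic).ne_zero
  have hmap : ∀ t : ℝ, B.map (evalRingHom t) = A + t • 1 := by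
    intro t
    ext i j
    by_cases h : i = j <;> simp [hBdef, Matrix.one_apply, h]
  have hdet : ∀ t : ℝ, (B.det).eval t = (A + t • 1).det := by
    intro t
    rw [← coe_evalRingHom, RingHom.map_det, RingHom.mapMatrix_apply, hmap]
  have hadj : ∀ (t : ℝ) (i j), ((adjugate B) i j).eval t = adjugate (A + t • 1) i j := by
    intro t i j
    rw [← hmap t, ← RingHom.mapMatrix_apply, ← RingHom.map_adjugate]
    rfl
  have hsub : ∀ t : ℝ,
      ((B.submatrix (gmap n) (gmap n)).det).eval t
        = ((A + t • 1).submatrix (gmap n) (gmap n)).det := by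
    intro t
    rw [← coe_evalRingHom, RingHom.map_det, RingHom.mapMatrix_apply, ← hmap t]
    rfl
  set P : ℝ[X] := (B.submatrix (gmap n) (gmap n)).det * B.det with hP
  set Q : ℝ[X] := adjugate B 0 0 * adjugate B l l - adjugate B 0 l * adjugate B l 0 with hQ
  have hPQ : P = Q := by
    apply Polynomial.eq_of_infinite_eval_eq
    have hinf : {x : ℝ | ¬ B.det.IsRoot x}.Infinite :=
      Set.Finite.infinite_compl (Polynomial.finite_setOf_isRoot hBdet)
    refine hinf.mono ?_
    intro t ht
    have hdt : (A + t • 1).det ≠ 0 := by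
      intro h
      exact ht (show B.det.IsRoot t by rw [IsRoot, hdet]; exact h)
    have hcore := core_ns (A + t • 1) hdt
    simp only [Set.mem_setOf_eq, hP, hQ, eval_mul, eval_sub, hsub, hdet, hadj]
    exact hcore
  have h0 := congrArg (eval 0) hPQ
  simp only [hP, hQ, eval_mul, eval_sub, hsub, hdet, hadj] at h0
  simpa using h0

/-- **Dodgson's determinant-evaluation rule**: for an arbitrary real square
matrix `A` of order `n ≥ 2` (written as `n + 2`),
`det(A_{{1,n}})·det(A) = det(A₁₁)·det(A_{nn}) − det(A_{1n})·det(A_{n1})`,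
where `A_{{1,n}}` deletes the first and last rows and columns and `A_{ij}`
deletes row `i` and column `j`. -/
theorem dodgson {n : ℕ} (A : Matrix (Fin (n + 2)) (Fin (n + 2)) ℝ) :
    (A.submatrix (fun i : Fin n => i.succ.castSucc)
        (fun j : Fin n => j.succ.castSucc)).det * A.det =
      (minorRC A 0 0).det * (minorRC A (Fin.last (n + 1)) (Fin.last (n + 1))).det -
        (minorRC A 0 (Fin.last (n + 1))).det * (minorRC A (Fin.last (n + 1)) 0).det := by
  set l := Fin.last (n + 1) with hl
  have hsq : ((-1 : ℝ) ^ (n + 1)) * ((-1 : ℝ) ^ (n + 1)) = 1 := by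
    rw [← pow_add]
    exact Even.neg_one_pow ⟨n + 1, by ring⟩
  have h1 : (minorRC A 0 0).det = adjugate A 0 0 := by
    rw [minorRC_eq, adjugate_fin_succ_eq_det_submatrix]
    simp
  have heven : ((-1 : ℝ)) ^ ((n + 1) + (n + 1)) = 1 := Even.neg_one_pow ⟨n + 1, rfl⟩
  have h2 : (minorRC A l l).det = adjugate A l l := by
    rw [minorRC_eq, adjugate_fin_succ_eq_det_submatrix]
    simp [hl, Fin.val_last, heven]
  have h3 : (minorRC A 0 l).det = (-1 : ℝ) ^ (n + 1) * adjugate A l 0 := by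
    rw [minorRC_eq, adjugate_fin_succ_eq_det_submatrix]
    rw [← mul_assoc]
    simp [hl, Fin.val_last, hsq]
  have h4 : (minorRC A l 0).det = (-1 : ℝ) ^ (n + 1) * adjugate A 0 l := by
    rw [minorRC_eq, adjugate_fin_succ_eq_det_submatrix]
    rw [← mul_assoc]
    simp [hl, Fin.val_last, hsq]
  have hmix : ((-1 : ℝ) ^ (n + 1) * adjugate A l 0) * ((-1 : ℝ) ^ (n + 1) * adjugate A 0 l)
      = adjugate A 0 l * adjugate A l 0 := by
    rw [mul_mul_mul_comm, hsq, one_mul, mul_comm]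
  rw [h1, h2, h3, h4, hmix]
  exact core_all A
end

section
/- Let A = (a_{st}) be an n×n real skew-symmetric matrix with n even, and fix indices i < j in {1,…,n} with a_{ij} ≥ 0. Define the (n+2)×(n+2) real skew-symmetric matrix B = (b_{st}) by: b_{st} = a_{st} for all s,t ∈ {1,…,n} with (s,t) ∉ {(i,j),(j,i)}; b_{ij} = b_{ji} = 0; b_{i,n+1} = b_{n+2,j} = √(a_{ij}); b_{n+1,i} = b_{j,n+2} = −√(a_{ij}); b_{n+1,n+2} = 1; b_{n+2,n+1} = −1; and all remaining entries equal to 0. Then Pf(B) = Pf(A). -/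
open Matrix

/-- The `(n+2) × (n+2)` skew-symmetric matrix `B` of Lemma 2.4, obtained from an
`n × n` skew-symmetric `A` and indices `i < j` by deleting the entry `a_{ij}`
(and `a_{ji}`) and adding the new entries `b_{i,n+1} = b_{n+2,j} = √(a_{ij})`,
`b_{n+1,i} = b_{j,n+2} = −√(a_{ij})`, `b_{n+1,n+2} = 1`, `b_{n+2,n+1} = −1`
(with 1-based vertex labels `n+1, n+2` corresponding to 0-based indices
`n, n+1`), all other new entries being `0`. -/
noncomputable def replaceEdge {n : ℕ} (A : Matrix (Fin n) (Fin n) ℝ) (i j : Fin n) :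
    Matrix (Fin (n + 2)) (Fin (n + 2)) ℝ := fun s t =>
  if hs : s.val < n then
    if ht : t.val < n then
      if (s.val = i.val ∧ t.val = j.val) ∨ (s.val = j.val ∧ t.val = i.val) then 0
      else A ⟨s.val, hs⟩ ⟨t.val, ht⟩
    else
      if t.val = n ∧ s.val = i.val then Real.sqrt (A i j)
      else if t.val = n + 1 ∧ s.val = j.val then -Real.sqrt (A i j)
      else 0
  else
    if _ht : t.val < n then
      if s.val = n ∧ t.val = i.val then -Real.sqrt (A i j)
      else if s.val = n + 1 ∧ t.val = j.val then Real.sqrt (A i j)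
      else 0
    else
      if s.val = n ∧ t.val = n + 1 then 1
      else if s.val = n + 1 ∧ t.val = n then -1
      else 0

namespace PfAux

open Matrix Equiv Finset

def pos0 {N : ℕ} (k : Fin (N / 2)) : Fin N := ⟨2 * k.1, by have := k.isLt; omega⟩
def pos1 {N : ℕ} (k : Fin (N / 2)) : Fin N := ⟨2 * k.1 + 1, by have := k.isLt; omega⟩

noncomputable def S {N : ℕ} (M : Matrix (Fin N) (Fin N) ℝ) : ℝ :=
  ∑ σ : Equiv.Perm (Fin N), ((Equiv.Perm.sign σ : ℤ) : ℝ) *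
    ∏ k : Fin (N / 2), M (σ (pos0 k)) (σ (pos1 k))

lemma prod_pairs {N : ℕ} (hN : N % 2 = 0) (f : Fin N → ℝ) :
    ∏ k : Fin (N / 2), (f (pos0 k) * f (pos1 k)) = ∏ s, f s := by
  set g : ℕ → ℝ := fun s => if h : s < N then f ⟨s, h⟩ else 1 with hg
  have haux : ∀ m : ℕ, 2 * m ≤ N →
      ∏ s ∈ Finset.range (2 * m), g s = ∏ k ∈ Finset.range m, (g (2 * k) * g (2 * k + 1)) := by
    intro m
    induction m with
    | zero => simp
    | succ m ih =>
      intro hm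
      have h2 : 2 * (m + 1) = 2 * m + 1 + 1 := by omega
      rw [h2, Finset.prod_range_succ, Finset.prod_range_succ, Finset.prod_range_succ,
        ih (by omega)]
      ring
  have hN2 : 2 * (N / 2) = N := by omega
  have h1 : ∏ s, f s = ∏ s ∈ Finset.range N, g s := by
    rw [← Fin.prod_univ_eq_prod_range g N]
    exact Finset.prod_congr rfl fun x _ => by simp [hg, x.isLt]
  have h2 : ∏ k : Fin (N / 2), (f (pos0 k) * f (pos1 k))
      = ∏ k ∈ Finset.range (N / 2), (g (2 * k) * g (2 * k + 1)) := by
    rw [← Fin.prod_univ_eq_prod_range (fun k => g (2 * k) * g (2 * k + 1)) (N / 2)]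
    refine Finset.prod_congr rfl fun k _ => ?_
    have hk0 : 2 * (k : ℕ) < N := by have := k.isLt; omega
    have hk1 : 2 * (k : ℕ) + 1 < N := by have := k.isLt; omega
    simp [hg, hk0, hk1, pos0, pos1]
  rw [h2, h1, ← haux (N / 2) (by omega), hN2]

lemma S_conj {N : ℕ} (hN : N % 2 = 0) (M C : Matrix (Fin N) (Fin N) ℝ) :
    S (Cᵀ * M * C) = C.det * S M := by
  have entry : ∀ a b : Fin N, (Cᵀ * M * C) a b
      = ∑ pq : Fin N × Fin N, C pq.1 a * M pq.1 pq.2 * C pq.2 b := by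
    intro a b
    rw [Fintype.sum_prod_type]
    simp only [Matrix.mul_apply, Matrix.transpose_apply, Finset.sum_mul]
    rw [Finset.sum_comm]
  -- the equivalence between functions on positions and functions on pairs
  have hdiv : ∀ s : Fin N, (s : ℕ) / 2 < N / 2 := by
    intro s; have := s.isLt; omega
  let E : (Fin N → Fin N) ≃ (Fin (N / 2) → Fin N × Fin N) :=
    { toFun := fun ψ k => (ψ (pos0 k), ψ (pos1 k))
      invFun := fun φ s => if (s : ℕ) % 2 = 0 then (φ ⟨(s : ℕ) / 2, hdiv s⟩).1
        else (φ ⟨(s : ℕ) / 2, hdiv s⟩).2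
      left_inv := by
        intro ψ; funext s
        dsimp only
        by_cases h : (s : ℕ) % 2 = 0
        · rw [if_pos h]
          congr 1
          exact Fin.ext (by simp only [pos0]; omega)
        · rw [if_neg h]
          congr 1
          exact Fin.ext (by simp only [pos1]; omega)
      right_inv := by
        intro φ; funext k
        have h0 : ((pos0 k : Fin N) : ℕ) % 2 = 0 := by simp only [pos0]; omega
        have h1 : ¬ (((pos1 k : Fin N) : ℕ) % 2 = 0) := by simp only [pos1]; omega
        dsimp only
        rw [if_pos h0, if_neg h1]
        have e0 : (⟨((pos0 k : Fin N) : ℕ) / 2, hdiv _⟩ : Fin (N / 2)) = k :=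
          Fin.ext (by simp only [pos0]; omega)
        have e1 : (⟨((pos1 k : Fin N) : ℕ) / 2, hdiv _⟩ : Fin (N / 2)) = k :=
          Fin.ext (by simp only [pos1]; omega)
        rw [e0, e1] }
  calc S (Cᵀ * M * C)
      = ∑ σ : Perm (Fin N), ∑ φ : Fin (N / 2) → Fin N × Fin N,
          ((Equiv.Perm.sign σ : ℤ) : ℝ) * ((∏ k, M (φ k).1 (φ k).2) *
            ∏ k, (C (φ k).1 (σ (pos0 k)) * C (φ k).2 (σ (pos1 k)))) := by
        unfold S
        refine Finset.sum_congr rfl fun σ _ => ?_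
        simp_rw [entry]
        rw [Finset.prod_univ_sum, Finset.mul_sum]
        simp only [Fintype.piFinset_univ]
        refine Finset.sum_congr rfl fun φ _ => ?_
        congr 1
        rw [← Finset.prod_mul_distrib]
        exact Finset.prod_congr rfl fun k _ => by ring
    _ = ∑ φ : Fin (N / 2) → Fin N × Fin N, (∏ k, M (φ k).1 (φ k).2) *
          ∑ σ : Perm (Fin N), ((Equiv.Perm.sign σ : ℤ) : ℝ) *
            ∏ k, (C (φ k).1 (σ (pos0 k)) * C (φ k).2 (σ (pos1 k))) := by
        rw [Finset.sum_comm]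
        refine Finset.sum_congr rfl fun φ _ => ?_
        rw [Finset.mul_sum]
        exact Finset.sum_congr rfl fun σ _ => by ring
    _ = ∑ ψ : Fin N → Fin N, (∏ k, M (ψ (pos0 k)) (ψ (pos1 k))) *
          det ((Cᵀ).submatrix id ψ) := by
        rw [← Equiv.sum_comp E]
        refine Finset.sum_congr rfl fun ψ _ => ?_
        congr 1
        rw [Matrix.det_apply']
        refine Finset.sum_congr rfl fun σ _ => ?_
        congr 1
        have hsub : ∀ i, (Cᵀ).submatrix id ψ (σ i) i = C (ψ i) (σ i) := fun i => rfl
        simp only [hsub]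
        rw [← prod_pairs hN (fun s => C (ψ s) (σ s))]
        rfl
    _ = ∑ ψ ∈ (Finset.univ : Finset (Fin N → Fin N)).filter Function.Bijective,
          (∏ k, M (ψ (pos0 k)) (ψ (pos1 k))) * det ((Cᵀ).submatrix id ψ) := by
        refine (Finset.sum_subset (Finset.filter_subset _ _) fun ψ _ hψ => ?_).symm
        have hnb : ¬ Function.Bijective ψ := by
          simpa only [Finset.mem_filter, Finset.mem_univ, true_and] using hψ
        have hni : ¬ Function.Injective ψ := fun h =>
          hnb ((Finite.injective_iff_bijective).mp h)
        rw [Function.Injective] at hni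
        push_neg at hni
        obtain ⟨x, y, hxy, hne⟩ := hni
        have : det ((Cᵀ).submatrix id ψ) = 0 := by
          refine Matrix.det_zero_of_column_eq hne fun r => ?_
          simp [Matrix.submatrix_apply, hxy]
        rw [this, mul_zero]
    _ = ∑ τ : Perm (Fin N), (∏ k, M (τ (pos0 k)) (τ (pos1 k))) *
          det ((Cᵀ).submatrix id τ) := by
        refine Finset.sum_bij (fun p h => Equiv.ofBijective p (Finset.mem_filter.1 h).2)
          (fun _ _ => Finset.mem_univ _) (fun _ _ _ _ h => by injection h)
          (fun b _ => ⟨b, Finset.mem_filter.2 ⟨Finset.mem_univ _, b.bijective⟩,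
            Equiv.coe_fn_injective rfl⟩) fun _ _ => rfl
    _ = C.det * S M := by
        unfold S
        rw [Finset.mul_sum]
        refine Finset.sum_congr rfl fun τ _ => ?_
        rw [Matrix.det_permute', Matrix.det_transpose]
        push_cast
        ring

variable {n : ℕ}

def vLo : Fin (n + 2) := ⟨n, by omega⟩
def vHi : Fin (n + 2) := ⟨n + 1, by omega⟩

lemma vLo_ne_vHi : (vLo : Fin (n + 2)) ≠ vHi := by
  simp [vLo, vHi, Fin.ext_iff]

def blockJ (A : Matrix (Fin n) (Fin n) ℝ) : Matrix (Fin (n + 2)) (Fin (n + 2)) ℝ :=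
  fun s t =>
    if hs : (s : ℕ) < n then (if ht : (t : ℕ) < n then A ⟨s, hs⟩ ⟨t, ht⟩ else 0)
    else if (t : ℕ) < n then 0
    else if (s : ℕ) = n ∧ (t : ℕ) = n + 1 then 1
    else if (s : ℕ) = n + 1 ∧ (t : ℕ) = n then -1 else 0

lemma blockJ_lt_lt (A : Matrix (Fin n) (Fin n) ℝ) (x y : Fin (n + 2))
    (hx : (x : ℕ) < n) (hy : (y : ℕ) < n) : blockJ A x y = A ⟨x, hx⟩ ⟨y, hy⟩ := by
  simp [blockJ, hx, hy]

lemma blockJ_cross₁ (A : Matrix (Fin n) (Fin n) ℝ) (x y : Fin (n + 2))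
    (hx : ¬ (x : ℕ) < n) (hy : (y : ℕ) < n) : blockJ A x y = 0 := by
  simp [blockJ, hx, hy]

lemma blockJ_cross₂ (A : Matrix (Fin n) (Fin n) ℝ) (x y : Fin (n + 2))
    (hx : (x : ℕ) < n) (hy : ¬ (y : ℕ) < n) : blockJ A x y = 0 := by
  simp [blockJ, hx, hy]

lemma blockJ_lo_hi (A : Matrix (Fin n) (Fin n) ℝ) : blockJ A vLo vHi = 1 := by
  simp [blockJ, vLo, vHi]

lemma blockJ_hi_lo (A : Matrix (Fin n) (Fin n) ℝ) : blockJ A vHi vLo = -1 := by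
  simp [blockJ, vLo, vHi]

def emb : Fin n ≃ {x : Fin (n + 2) // (x : ℕ) < n} where
  toFun x := ⟨⟨x.1, by omega⟩, x.2⟩
  invFun y := ⟨y.1.1, y.2⟩
  left_inv x := rfl
  right_inv y := rfl

def ext (τ : Perm (Fin n)) : Perm (Fin (n + 2)) := τ.extendDomain emb

lemma ext_apply_lt (τ : Perm (Fin n)) (y : Fin (n + 2)) (hy : (y : ℕ) < n) :
    ext τ y = ⟨(τ ⟨y, hy⟩ : Fin n), by have := (τ ⟨y, hy⟩).isLt; omega⟩ := by
  rw [ext, Equiv.Perm.extendDomain_apply_subtype τ emb hy]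
  rfl

lemma ext_apply_ge (τ : Perm (Fin n)) (y : Fin (n + 2)) (hy : ¬ (y : ℕ) < n) :
    ext τ y = y :=
  Equiv.Perm.extendDomain_apply_not_subtype τ emb hy

lemma sign_ext (τ : Perm (Fin n)) : Equiv.Perm.sign (ext τ) = Equiv.Perm.sign τ := by
  simp [ext]

def kLast : Fin ((n + 2) / 2) := ⟨n / 2, by omega⟩

def sb : Bool → Perm (Fin (n + 2)) := fun b => if b then Equiv.swap vLo vHi else 1

def wv : Bool → Fin (n + 2) := fun b => if b then vHi else vLo

def ρ (k : Fin ((n + 2) / 2)) : Perm (Fin (n + 2)) :=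
  Equiv.swap (pos0 k) (pos0 kLast) * Equiv.swap (pos1 k) (pos1 kLast)

lemma pos0_kLast (hn : n % 2 = 0) : pos0 (kLast (n := n)) = vLo :=
  Fin.ext (by simp only [pos0, kLast, vLo]; omega)

lemma pos1_kLast (hn : n % 2 = 0) : pos1 (kLast (n := n)) = vHi :=
  Fin.ext (by simp only [pos1, kLast, vHi]; omega)

lemma pos0_injective {k k' : Fin ((n + 2) / 2)} (h : pos0 (N := n + 2) k = pos0 k') : k = k' := by
  have := congrArg Fin.val h
  simp only [pos0] at this
  exact Fin.ext (by omega)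

lemma pos0_ne_pos1 (k k' : Fin ((n + 2) / 2)) : pos0 (N := n + 2) k ≠ pos1 k' := by
  intro h
  have := congrArg Fin.val h
  simp only [pos0, pos1] at this
  omega

noncomputable def Fterm (A : Matrix (Fin n) (Fin n) ℝ) (σ : Perm (Fin (n + 2))) : ℝ :=
  ((Equiv.Perm.sign σ : ℤ) : ℝ) * ∏ k : Fin ((n + 2) / 2), blockJ A (σ (pos0 k)) (σ (pos1 k))

lemma cond_unique (σ : Perm (Fin (n + 2))) (k k' : Fin ((n + 2) / 2)) (b b' : Bool)
    (h1 : σ (pos0 k) = wv b) (h2 : σ (pos1 k) = wv (!b))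
    (h3 : σ (pos0 k') = wv b') (h4 : σ (pos1 k') = wv (!b')) : k = k' ∧ b = b' := by
  by_cases hbb : b = b'
  · subst hbb
    exact ⟨pos0_injective (σ.injective (h1.trans h3.symm)), rfl⟩
  · exfalso
    have hb' : b' = !b := by cases b <;> cases b' <;> simp_all
    subst hb'
    exact pos0_ne_pos1 k' k (σ.injective (h3.trans h2.symm))

lemma Fterm_eq_zero (hn : n % 2 = 0) (A : Matrix (Fin n) (Fin n) ℝ) (σ : Perm (Fin (n + 2)))
    (h : ∀ (k : Fin ((n + 2) / 2)) (b : Bool),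
      ¬(σ (pos0 k) = wv b ∧ σ (pos1 k) = wv (!b))) :
    Fterm A σ = 0 := by
  obtain ⟨q, hσq⟩ : ∃ q, σ q = vLo := ⟨σ.symm vLo, σ.apply_symm_apply vLo⟩
  have hqlt : (q : ℕ) < n + 2 := q.isLt
  set k : Fin ((n + 2) / 2) := ⟨(q : ℕ) / 2, by omega⟩ with hk
  have hother : ∀ r : Fin (n + 2), σ r = vLo → ∀ x : Fin (n + 2), x ≠ r → σ x ≠ vLo → ¬ ((σ x : ℕ) < n) → σ x = vHi := by
    intro r hr x hxr hxlo hxn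
    have := (σ x).isLt
    refine Fin.ext ?_
    have hne : ((σ x : Fin (n + 2)) : ℕ) ≠ n := fun hv => hxlo (Fin.ext (by simp only [vLo]; omega))
    simp only [vHi]; omega
  rcases Nat.even_or_odd (q : ℕ) with he | ho
  · have hmod := Nat.even_iff.mp he
    have hq0 : pos0 k = q := by
      refine Fin.ext ?_
      rw [hk]
      show 2 * ((q : ℕ) / 2) = (q : ℕ)
      omega
    have h0 : σ (pos0 k) = vLo := by rw [hq0]; exact hσq
    by_cases hr : ((σ (pos1 k)) : ℕ) < n
    · unfold Fterm
      rw [Finset.prod_eq_zero (Finset.mem_univ k) (by rw [h0]; exact blockJ_cross₁ A _ _ (by simp [vLo]) hr), mul_zero]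
    · exfalso
      have hne : σ (pos1 k) ≠ vLo := by
        intro hh
        exact pos0_ne_pos1 k k (σ.injective (h0.trans hh.symm))
      have hhi : σ (pos1 k) = vHi := hother (pos0 k) h0 (pos1 k) (Ne.symm (pos0_ne_pos1 k k)) hne hr
      exact h k false ⟨by simpa [wv] using h0, by simpa [wv] using hhi⟩
  · have hmod := Nat.odd_iff.mp ho
    have hq1 : pos1 k = q := by
      refine Fin.ext ?_
      rw [hk]
      show 2 * ((q : ℕ) / 2) + 1 = (q : ℕ)
      omega
    have h0 : σ (pos1 k) = vLo := by rw [hq1]; exact hσq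
    by_cases hr : ((σ (pos0 k)) : ℕ) < n
    · unfold Fterm
      rw [Finset.prod_eq_zero (Finset.mem_univ k) (by rw [h0]; exact blockJ_cross₂ A _ _ hr (by simp [vLo])), mul_zero]
    · exfalso
      have hne : σ (pos0 k) ≠ vLo := by
        intro hh
        exact pos0_ne_pos1 k k (σ.injective (hh.trans h0.symm))
      have hhi : σ (pos0 k) = vHi := hother (pos1 k) h0 (pos0 k) (pos0_ne_pos1 k k) hne hr
      exact h k true ⟨by simpa [wv] using hhi, by simpa [wv] using h0⟩

lemma ext_fix_lo (τ : Perm (Fin n)) : ext τ vLo = vLo :=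
  ext_apply_ge τ vLo (by simp [vLo])

lemma ext_fix_hi (τ : Perm (Fin n)) : ext τ vHi = vHi :=
  ext_apply_ge τ vHi (by simp [vHi])

lemma ext_fix_wv (τ : Perm (Fin n)) (b : Bool) : ext τ (wv b) = wv b := by
  cases b <;> simp [wv, ext_fix_lo, ext_fix_hi]

lemma ext_inj : Function.Injective (ext (n := n)) := by
  intro τ τ' h
  apply Equiv.ext
  intro x
  have hx : ((⟨x.1, by omega⟩ : Fin (n + 2)) : ℕ) < n := x.isLt
  have h2 : ext τ ⟨x.1, by omega⟩ = ext τ' ⟨x.1, by omega⟩ := by rw [h]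
  rw [ext_apply_lt τ _ hx, ext_apply_lt τ' _ hx] at h2
  have hval := congrArg Fin.val h2
  simp only at hval
  have he : (⟨(⟨x.1, by omega⟩ : Fin (n + 2)).1, hx⟩ : Fin n) = x := Fin.ext rfl
  rw [he] at hval
  exact Fin.ext hval

lemma fix_iff (π : Perm (Fin (n + 2))) (h1 : π vLo = vLo) (h2 : π vHi = vHi) :
    ∀ x : Fin (n + 2), (x : ℕ) < n ↔ ((π x : Fin (n + 2)) : ℕ) < n := by
  intro x
  constructor
  · intro hx
    have hπx := (π x).isLt
    have hne1 : π x ≠ vLo := fun hh => by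
      have : x = vLo := π.injective (hh.trans h1.symm)
      rw [this] at hx; simp [vLo] at hx
    have hne2 : π x ≠ vHi := fun hh => by
      have : x = vHi := π.injective (hh.trans h2.symm)
      rw [this] at hx; simp [vHi] at hx
    have hv1 : ((π x : Fin (n + 2)) : ℕ) ≠ n := fun hv => hne1 (Fin.ext (by simp only [vLo]; omega))
    have hv2 : ((π x : Fin (n + 2)) : ℕ) ≠ n + 1 := fun hv => hne2 (Fin.ext (by simp only [vHi]; omega))
    omega
  · intro hx
    by_contra hxn
    have hcase : x = vLo ∨ x = vHi := by
      have := x.isLt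
      rcases (by omega : (x : ℕ) = n ∨ (x : ℕ) = n + 1) with h | h
      · exact Or.inl (Fin.ext (by simp only [vLo]; omega))
      · exact Or.inr (Fin.ext (by simp only [vHi]; omega))
    rcases hcase with h | h <;> subst h
    · rw [h1] at hx; simp [vLo] at hx
    · rw [h2] at hx; simp [vHi] at hx

def restrict (π : Perm (Fin (n + 2)))
    (h : ∀ x : Fin (n + 2), (x : ℕ) < n ↔ ((π x : Fin (n + 2)) : ℕ) < n) : Perm (Fin n) :=
  (Equiv.permCongr emb.symm) (π.subtypePerm (fun x => (h x).symm))

lemma ext_restrict (π : Perm (Fin (n + 2)))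
    (h : ∀ x : Fin (n + 2), (x : ℕ) < n ↔ ((π x : Fin (n + 2)) : ℕ) < n)
    (h1 : π vLo = vLo) (h2 : π vHi = vHi) :
    ext (restrict π h) = π := by
  apply Equiv.ext
  intro x
  by_cases hx : (x : ℕ) < n
  · rw [ext_apply_lt _ x hx]
    apply Fin.ext
    simp only [restrict, Equiv.permCongr_apply, Equiv.symm_symm, emb,
      Equiv.coe_fn_mk, Equiv.coe_fn_symm_mk, Equiv.Perm.subtypePerm_apply]
  · rw [ext_apply_ge _ x hx]
    have hcase : x = vLo ∨ x = vHi := by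
      have := x.isLt
      rcases (by omega : (x : ℕ) = n ∨ (x : ℕ) = n + 1) with h' | h'
      · exact Or.inl (Fin.ext (by simp only [vLo]; omega))
      · exact Or.inr (Fin.ext (by simp only [vHi]; omega))
    rcases hcase with h' | h' <;> subst h'
    · exact h1.symm
    · exact h2.symm

def ι (k : Fin ((n + 2) / 2)) (l : Fin (n / 2)) : Fin ((n + 2) / 2) :=
  if l.1 = k.1 then kLast else ⟨l.1, by have := l.isLt; omega⟩

lemma ι_pos {k : Fin ((n + 2) / 2)} {l : Fin (n / 2)} (h : l.1 = k.1) : ι k l = kLast := by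
  simp [ι, h]

lemma ι_neg_val {k : Fin ((n + 2) / 2)} {l : Fin (n / 2)} (h : ¬ l.1 = k.1) :
    (ι k l : ℕ) = l.1 := by
  simp [ι, h]

lemma prod_split (k : Fin ((n + 2) / 2)) (f : Fin ((n + 2) / 2) → ℝ) :
    ∏ x, f x = f k * ∏ l : Fin (n / 2), f (ι k l) := by
  rw [← Finset.mul_prod_erase univ f (Finset.mem_univ k)]
  congr 1
  refine (Finset.prod_bij (fun l (_ : l ∈ (univ : Finset (Fin (n / 2)))) => ι k l)
    ?_ ?_ ?_ ?_).symm
  · intro l _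
    rw [Finset.mem_erase]
    refine ⟨?_, Finset.mem_univ _⟩
    by_cases hlk : l.1 = k.1
    · rw [ι_pos hlk]
      intro hh
      have := congrArg Fin.val hh
      simp only [kLast] at this
      have := l.isLt
      omega
    · intro hh
      have := (ι_neg_val hlk).symm.trans (congrArg Fin.val hh)
      exact hlk this
  · intro l₁ _ l₂ _ hee
    have hv := congrArg Fin.val hee
    by_cases e1 : l₁.1 = k.1 <;> by_cases e2 : l₂.1 = k.1
    · exact Fin.ext (e1.trans e2.symm)
    · rw [ι_pos e1] at hv
      rw [ι_neg_val e2] at hv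
      exfalso
      simp only [kLast] at hv
      have := l₂.isLt
      omega
    · rw [ι_pos e2] at hv
      rw [ι_neg_val e1] at hv
      exfalso
      simp only [kLast] at hv
      have := l₁.isLt
      omega
    · rw [ι_neg_val e1, ι_neg_val e2] at hv
      exact Fin.ext hv
  · intro y hy
    rw [Finset.mem_erase] at hy
    by_cases hyv : (y : ℕ) < n / 2
    · refine ⟨⟨y.1, hyv⟩, Finset.mem_univ _, ?_⟩
      have hne : ¬ ((⟨y.1, hyv⟩ : Fin (n / 2)) : ℕ) = k.1 := by
        intro hh
        exact hy.1 (Fin.ext hh)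
      exact Fin.ext (ι_neg_val hne)
    · have hy2 : (y : ℕ) = n / 2 := by have := y.isLt; omega
      have hkv : (k : ℕ) < n / 2 := by
        have hkl := k.isLt
        rcases Nat.lt_or_ge (k : ℕ) (n / 2) with h | h
        · exact h
        · exfalso
          exact hy.1 (Fin.ext (by omega))
      refine ⟨⟨k.1, hkv⟩, Finset.mem_univ _, ?_⟩
      rw [ι_pos (l := ⟨k.1, hkv⟩) rfl]
      exact Fin.ext (by simp only [kLast]; omega)
  · intro l _
    rfl
lemma sb_lo (b : Bool) : sb (n := n) b vLo = wv b := by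
  cases b <;> simp [sb, wv, Equiv.swap_apply_left]

lemma sb_hi (b : Bool) : sb (n := n) b vHi = wv (!b) := by
  cases b <;> simp [sb, wv, Equiv.swap_apply_right]

lemma sb_fix (b : Bool) (x : Fin (n + 2)) (hx : (x : ℕ) < n) : sb b x = x := by
  cases b
  · rfl
  · exact Equiv.swap_apply_of_ne_of_ne
      (fun h => by rw [h] at hx; simp [vLo] at hx)
      (fun h => by rw [h] at hx; simp [vHi] at hx)

lemma sgn_sb (b : Bool) :
    Equiv.Perm.sign (sb (n := n) b) = if b then -1 else 1 := by
  cases b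
  · simp [sb]
  · simp [sb, Equiv.Perm.sign_swap (vLo_ne_vHi (n := n))]

lemma sgn_ρ (k : Fin ((n + 2) / 2)) : Equiv.Perm.sign (ρ k) = 1 := by
  by_cases hk : k = kLast
  · subst hk
    rw [ρ, Equiv.swap_self, Equiv.swap_self]
    simp
  · rw [ρ, _root_.map_mul,
      Equiv.Perm.sign_swap (fun h => hk (pos0_injective h)),
      Equiv.Perm.sign_swap (fun h => hk (by
        have := congrArg Fin.val h
        simp only [pos1] at this
        exact Fin.ext (by omega)))]
    norm_num

lemma hρ0k (hn : n % 2 = 0) (k : Fin ((n + 2) / 2)) : ρ k (pos0 k) = vLo := by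
  rw [ρ, Equiv.Perm.mul_apply,
    Equiv.swap_apply_of_ne_of_ne (pos0_ne_pos1 k k) (pos0_ne_pos1 k kLast),
    Equiv.swap_apply_left, pos0_kLast hn]

lemma hρ1k (hn : n % 2 = 0) (k : Fin ((n + 2) / 2)) : ρ k (pos1 k) = vHi := by
  rw [ρ, Equiv.Perm.mul_apply, Equiv.swap_apply_left,
    Equiv.swap_apply_of_ne_of_ne (Ne.symm (pos0_ne_pos1 k kLast))
      (Ne.symm (pos0_ne_pos1 kLast kLast)), pos1_kLast hn]

lemma key_term (hn : n % 2 = 0) (A : Matrix (Fin n) (Fin n) ℝ)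
    (k : Fin ((n + 2) / 2)) (b : Bool) (τ : Perm (Fin n)) :
    Fterm A (ext τ * (sb b * ρ k)) =
      ((Equiv.Perm.sign τ : ℤ) : ℝ) * ∏ l : Fin (n / 2), A (τ (pos0 l)) (τ (pos1 l)) := by
  set σ := ext τ * (sb b * ρ k) with hσ
  have happ : ∀ x, σ x = ext τ (sb b (ρ k x)) := fun x => rfl
  have hσ0k : σ (pos0 k) = wv b := by rw [happ, hρ0k hn, sb_lo, ext_fix_wv]
  have hσ1k : σ (pos1 k) = wv (!b) := by rw [happ, hρ1k hn, sb_hi, ext_fix_wv]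
  have hsmall : ∀ l : Fin (n / 2),
      σ (pos0 (ι k l)) = ⟨((τ (pos0 l) : Fin n) : ℕ), by have := (τ (pos0 l)).isLt; omega⟩ ∧
      σ (pos1 (ι k l)) = ⟨((τ (pos1 l) : Fin n) : ℕ), by have := (τ (pos1 l)).isLt; omega⟩ := by
    intro l
    have hl := l.isLt
    by_cases hlk : l.1 = k.1
    · rw [ι_pos hlk]
      have hr0 : ρ k (pos0 kLast) = pos0 k := by
        rw [ρ, Equiv.Perm.mul_apply,
          Equiv.swap_apply_of_ne_of_ne (pos0_ne_pos1 kLast k) (pos0_ne_pos1 kLast kLast),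
          Equiv.swap_apply_right]
      have hr1 : ρ k (pos1 kLast) = pos1 k := by
        rw [ρ, Equiv.Perm.mul_apply, Equiv.swap_apply_right,
          Equiv.swap_apply_of_ne_of_ne (Ne.symm (pos0_ne_pos1 k k))
            (Ne.symm (pos0_ne_pos1 kLast k))]
      constructor
      · rw [happ, hr0]
        have hv : ((pos0 k : Fin (n + 2)) : ℕ) < n := by simp only [pos0]; omega
        rw [sb_fix b _ hv, ext_apply_lt τ _ hv]
        have he : (⟨((pos0 k : Fin (n + 2)) : ℕ), hv⟩ : Fin n) = pos0 l :=
          Fin.ext (by simp only [pos0]; omega)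
        exact Fin.ext (congrArg (fun x => ((τ x : Fin n) : ℕ)) he)
      · rw [happ, hr1]
        have hv : ((pos1 k : Fin (n + 2)) : ℕ) < n := by simp only [pos1]; omega
        rw [sb_fix b _ hv, ext_apply_lt τ _ hv]
        have he : (⟨((pos1 k : Fin (n + 2)) : ℕ), hv⟩ : Fin n) = pos1 l :=
          Fin.ext (by simp only [pos1]; omega)
        exact Fin.ext (congrArg (fun x => ((τ x : Fin n) : ℕ)) he)
    · have hι : (ι k l : ℕ) = l.1 := ι_neg_val hlk
      have hne0k : pos0 (ι k l) ≠ pos0 k := fun h => hlk (by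
        have := congrArg Fin.val h
        simp only [pos0, hι] at this
        omega)
      have hne0L : pos0 (ι k l) ≠ pos0 kLast := fun h => by
        have := congrArg Fin.val h
        simp only [pos0, hι, kLast] at this
        omega
      have hne1k : pos1 (ι k l) ≠ pos1 k := fun h => hlk (by
        have := congrArg Fin.val h
        simp only [pos1, hι] at this
        omega)
      have hne1L : pos1 (ι k l) ≠ pos1 kLast := fun h => by
        have := congrArg Fin.val h
        simp only [pos1, hι, kLast] at this
        omega
      have hr0 : ρ k (pos0 (ι k l)) = pos0 (ι k l) := by
        rw [ρ, Equiv.Perm.mul_apply,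
          Equiv.swap_apply_of_ne_of_ne (pos0_ne_pos1 (ι k l) k) (pos0_ne_pos1 (ι k l) kLast),
          Equiv.swap_apply_of_ne_of_ne hne0k hne0L]
      have hr1 : ρ k (pos1 (ι k l)) = pos1 (ι k l) := by
        rw [ρ, Equiv.Perm.mul_apply,
          Equiv.swap_apply_of_ne_of_ne hne1k hne1L,
          Equiv.swap_apply_of_ne_of_ne (Ne.symm (pos0_ne_pos1 k (ι k l)))
            (Ne.symm (pos0_ne_pos1 kLast (ι k l)))]
      constructor
      · rw [happ, hr0]
        have hv : ((pos0 (ι k l) : Fin (n + 2)) : ℕ) < n := by simp only [pos0, hι]; omega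
        rw [sb_fix b _ hv, ext_apply_lt τ _ hv]
        have he : (⟨((pos0 (ι k l) : Fin (n + 2)) : ℕ), hv⟩ : Fin n) = pos0 l :=
          Fin.ext (by simp only [pos0, hι])
        exact Fin.ext (congrArg (fun x => ((τ x : Fin n) : ℕ)) he)
      · rw [happ, hr1]
        have hv : ((pos1 (ι k l) : Fin (n + 2)) : ℕ) < n := by simp only [pos1, hι]; omega
        rw [sb_fix b _ hv, ext_apply_lt τ _ hv]
        have he : (⟨((pos1 (ι k l) : Fin (n + 2)) : ℕ), hv⟩ : Fin n) = pos1 l :=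
          Fin.ext (by simp only [pos1, hι])
        exact Fin.ext (congrArg (fun x => ((τ x : Fin n) : ℕ)) he)
  have hfk : blockJ A (σ (pos0 k)) (σ (pos1 k)) = (if b then (-1 : ℝ) else 1) := by
    rw [hσ0k, hσ1k]
    cases b
    · simpa [wv] using blockJ_lo_hi A
    · simpa [wv] using blockJ_hi_lo A
  have hfι : ∀ l : Fin (n / 2),
      blockJ A (σ (pos0 (ι k l))) (σ (pos1 (ι k l))) = A (τ (pos0 l)) (τ (pos1 l)) := by
    intro l
    rw [(hsmall l).1, (hsmall l).2,
      blockJ_lt_lt A _ _ ((τ (pos0 l)).isLt) ((τ (pos1 l)).isLt)]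
  have hsgn : Equiv.Perm.sign σ = Equiv.Perm.sign τ * (if b then -1 else 1) := by
    rw [hσ, _root_.map_mul, _root_.map_mul, sign_ext, sgn_ρ, sgn_sb, mul_one]
  unfold Fterm
  rw [prod_split k (fun x => blockJ A (σ (pos0 x)) (σ (pos1 x)))]
  rw [hfk, hsgn]
  simp only [hfι]
  cases b
  · simp only [if_false, Bool.false_eq_true, mul_one, Units.val_mul]
    push_cast
    ring
  · simp only [if_true, Units.val_mul]
    push_cast
    ring

lemma step3 (hn : n % 2 = 0) (A : Matrix (Fin n) (Fin n) ℝ)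
    (p : Fin ((n + 2) / 2) × Bool) :
    (∑ σ : Perm (Fin (n + 2)),
      if σ (pos0 p.1) = wv p.2 ∧ σ (pos1 p.1) = wv (!p.2) then Fterm A σ else 0) = S A := by
  obtain ⟨k, b⟩ := p
  dsimp only
  have hc0 : (sb b * ρ k : Perm (Fin (n + 2))) (pos0 k) = wv b := by
    rw [Equiv.Perm.mul_apply, hρ0k hn, sb_lo]
  have hc1 : (sb b * ρ k : Perm (Fin (n + 2))) (pos1 k) = wv (!b) := by
    rw [Equiv.Perm.mul_apply, hρ1k hn, sb_hi]
  rw [← Equiv.sum_comp (Equiv.mulRight (sb b * ρ k))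
    (fun σ => if σ (pos0 k) = wv b ∧ σ (pos1 k) = wv (!b) then Fterm A σ else 0)]
  simp only [Equiv.coe_mulRight]
  have hcond : ∀ π : Perm (Fin (n + 2)),
      ((π * (sb b * ρ k) : Perm (Fin (n + 2))) (pos0 k) = wv b ∧ (π * (sb b * ρ k) : Perm (Fin (n + 2))) (pos1 k) = wv (!b)) ↔
        (π vLo = vLo ∧ π vHi = vHi) := by
    intro π
    have e0 : (π * (sb b * ρ k) : Perm (Fin (n + 2))) (pos0 k) = π (wv b) := by
      rw [Equiv.Perm.mul_apply, hc0]
    have e1 : (π * (sb b * ρ k) : Perm (Fin (n + 2))) (pos1 k) = π (wv (!b)) := by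
      rw [Equiv.Perm.mul_apply, hc1]
    rw [e0, e1]
    cases b
    · simp [wv]
    · simp [wv, and_comm]
  calc (∑ π : Perm (Fin (n + 2)),
        if (π * (sb b * ρ k) : Perm (Fin (n + 2))) (pos0 k) = wv b ∧ (π * (sb b * ρ k) : Perm (Fin (n + 2))) (pos1 k) = wv (!b)
          then Fterm A (π * (sb b * ρ k)) else 0)
      = ∑ π : Perm (Fin (n + 2)),
          if π vLo = vLo ∧ π vHi = vHi then Fterm A (π * (sb b * ρ k)) else 0 := by
        exact Finset.sum_congr rfl fun π _ => if_congr (hcond π) rfl rfl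
    _ = ∑ π ∈ Finset.univ.filter (fun π : Perm (Fin (n + 2)) => π vLo = vLo ∧ π vHi = vHi),
          Fterm A (π * (sb b * ρ k)) := (Finset.sum_filter _ _).symm
    _ = S A := by
        unfold S
        refine Finset.sum_bij (fun π hπ => restrict π
          (fix_iff π (Finset.mem_filter.mp hπ).2.1 (Finset.mem_filter.mp hπ).2.2))
          (fun _ _ => Finset.mem_univ _) ?_ ?_ ?_
        · intro π₁ hπ₁ π₂ hπ₂ hee
          have h1 := (Finset.mem_filter.mp hπ₁).2
          have h2 := (Finset.mem_filter.mp hπ₂).2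
          have := congrArg ext hee
          rwa [ext_restrict _ _ h1.1 h1.2, ext_restrict _ _ h2.1 h2.2] at this
        · intro τ _
          refine ⟨ext τ, Finset.mem_filter.mpr ⟨Finset.mem_univ _, ext_fix_lo τ, ext_fix_hi τ⟩, ?_⟩
          apply ext_inj
          rw [ext_restrict _ _ (ext_fix_lo τ) (ext_fix_hi τ)]
        · intro π hπ
          have h12 := (Finset.mem_filter.mp hπ).2
          have h5 := key_term hn A k b (restrict π (fix_iff π h12.1 h12.2))
          rw [ext_restrict _ _ h12.1 h12.2] at h5
          exact h5

lemma S_blockJ (hn : n % 2 = 0) (A : Matrix (Fin n) (Fin n) ℝ) :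
    S (blockJ A) = ((n : ℝ) + 2) * S A := by
  have step1 : ∀ σ : Perm (Fin (n + 2)), Fterm A σ =
      ∑ p : Fin ((n + 2) / 2) × Bool,
        (if σ (pos0 p.1) = wv p.2 ∧ σ (pos1 p.1) = wv (!p.2) then Fterm A σ else 0) := by
    intro σ
    by_cases hP : ∃ p : Fin ((n + 2) / 2) × Bool,
        σ (pos0 p.1) = wv p.2 ∧ σ (pos1 p.1) = wv (!p.2)
    · obtain ⟨p₀, hp₀⟩ := hP
      rw [Finset.sum_eq_single p₀]
      · rw [if_pos hp₀]
      · intro q _ hqp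
        rw [if_neg]
        intro hq
        obtain ⟨hk, hb⟩ := cond_unique σ q.1 p₀.1 q.2 p₀.2 hq.1 hq.2 hp₀.1 hp₀.2
        exact hqp (Prod.ext hk hb)
      · intro hh
        exact absurd (Finset.mem_univ p₀) hh
    · rw [Finset.sum_eq_zero fun p _ => if_neg (fun hc => hP ⟨p, hc⟩)]
      exact Fterm_eq_zero hn A σ fun k b hc => hP ⟨(k, b), hc⟩
  have hSb : S (blockJ A) = ∑ σ : Perm (Fin (n + 2)), Fterm A σ := rfl
  rw [hSb, Finset.sum_congr rfl fun σ _ => step1 σ, Finset.sum_comm,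
    Finset.sum_congr rfl fun p _ => step3 hn A p, Finset.sum_const]
  rw [Finset.card_univ, Fintype.card_prod, Fintype.card_fin, Fintype.card_bool,
    nsmul_eq_mul]
  congr 1
  have h2 : (n + 2) / 2 * 2 = n + 2 := by omega
  rw [h2]
  push_cast
  ring


lemma pf_eq {m : ℕ} (h : m % 2 = 0) (A : Matrix (Fin m) (Fin m) ℝ) :
    pf A = ((2 ^ (m / 2) * (m / 2).factorial : ℕ) : ℝ)⁻¹ * S A := by
  rw [pf, dif_pos h]
  rfl

def emb2 (x : Fin n) : Fin (n + 2) := ⟨x.1, by have := x.isLt; omega⟩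

noncomputable def Cmat (a : ℝ) (i j : Fin n) : Matrix (Fin (n + 2)) (Fin (n + 2)) ℝ :=
  fun s t =>
    (if s = t then 1 else 0) +
    ((if s = vLo then (if t = emb2 j then -Real.sqrt a else 0) else 0) +
     (if s = vHi then (if t = emb2 i then -Real.sqrt a else 0) else 0))

lemma vLo_ne_emb2 (x : Fin n) : (vLo : Fin (n + 2)) ≠ emb2 x := by
  intro h
  have := congrArg Fin.val h
  simp only [vLo, emb2] at this
  have := x.isLt
  omega

lemma vHi_ne_emb2 (x : Fin n) : (vHi : Fin (n + 2)) ≠ emb2 x := by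
  intro h
  have := congrArg Fin.val h
  simp only [vHi, emb2] at this
  have := x.isLt
  omega

lemma det_Cmat (a : ℝ) (i j : Fin n) : (Cmat a i j).det = 1 := by
  have htri : (Cmat a i j).BlockTriangular OrderDual.toDual := by
    intro s t hst
    have hlt : s < t := hst
    have hv : (s : ℕ) < (t : ℕ) := hlt
    simp only [Cmat]
    rw [if_neg (fun h : s = t => by subst h; exact lt_irrefl _ hv)]
    have h1 : (if s = vLo then (if t = emb2 j then -Real.sqrt a else 0) else 0) = 0 := by
      split_ifs with p q
      · exfalso
        have hp := congrArg Fin.val p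
        have hq := congrArg Fin.val q
        have := j.isLt
        simp only [vLo, emb2] at hp hq
        omega
      · rfl
      · rfl
    have h2 : (if s = vHi then (if t = emb2 i then -Real.sqrt a else 0) else 0) = 0 := by
      split_ifs with p q
      · exfalso
        have hp := congrArg Fin.val p
        have hq := congrArg Fin.val q
        have := i.isLt
        simp only [vHi, emb2] at hp hq
        omega
      · rfl
      · rfl
    rw [h1, h2]
    ring
  rw [Matrix.det_of_lowerTriangular _ htri]
  apply Finset.prod_eq_one
  intro s _
  simp only [Cmat, if_pos rfl]
  have h1 : (if s = vLo then (if s = emb2 j then -Real.sqrt a else 0) else 0) = 0 := by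
    split_ifs with p q
    · exact absurd (p.symm.trans q) (vLo_ne_emb2 j)
    · rfl
    · rfl
  have h2 : (if s = vHi then (if s = emb2 i then -Real.sqrt a else 0) else 0) = 0 := by
    split_ifs with p q
    · exact absurd (p.symm.trans q) (vHi_ne_emb2 i)
    · rfl
    · rfl
  rw [h1, h2]
  simp

lemma mul_Cmat (a : ℝ) (i j : Fin n) (X : Matrix (Fin (n + 2)) (Fin (n + 2)) ℝ)
    (p t : Fin (n + 2)) :
    (X * Cmat a i j) p t = X p t +
      ((if t = emb2 j then -Real.sqrt a * X p vLo else 0) +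
       (if t = emb2 i then -Real.sqrt a * X p vHi else 0)) := by
  rw [Matrix.mul_apply]
  simp only [Cmat, mul_add]
  rw [Finset.sum_add_distrib, Finset.sum_add_distrib]
  congr 1
  · simp [mul_ite, mul_one, mul_zero, Finset.sum_ite_eq']
  congr 1
  · simp only [mul_ite, mul_zero, Finset.sum_ite_eq', Finset.mem_univ, if_true]
    split_ifs <;> ring
  · simp only [mul_ite, mul_zero, Finset.sum_ite_eq', Finset.mem_univ, if_true]
    split_ifs <;> ring

lemma CmatT_mul (a : ℝ) (i j : Fin n) (Y : Matrix (Fin (n + 2)) (Fin (n + 2)) ℝ)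
    (s t : Fin (n + 2)) :
    ((Cmat a i j)ᵀ * Y) s t = Y s t +
      ((if s = emb2 j then -Real.sqrt a * Y vLo t else 0) +
       (if s = emb2 i then -Real.sqrt a * Y vHi t else 0)) := by
  rw [Matrix.mul_apply]
  have hterm : ∀ q, (Cmat a i j)ᵀ s q * Y q t =
      (if q = s then Y q t else 0) +
      ((if q = vLo then (if s = emb2 j then -Real.sqrt a * Y q t else 0) else 0) +
       (if q = vHi then (if s = emb2 i then -Real.sqrt a * Y q t else 0) else 0)) := by
    intro q
    simp only [Matrix.transpose_apply, Cmat]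
    split_ifs <;> ring
  rw [Finset.sum_congr rfl fun q _ => hterm q]
  rw [Finset.sum_add_distrib, Finset.sum_add_distrib,
    Finset.sum_ite_eq' Finset.univ s (fun q => Y q t),
    Finset.sum_ite_eq' Finset.univ (vLo : Fin (n + 2))
      (fun q => if s = emb2 j then -Real.sqrt a * Y q t else 0),
    Finset.sum_ite_eq' Finset.univ (vHi : Fin (n + 2))
      (fun q => if s = emb2 i then -Real.sqrt a * Y q t else 0)]
  simp

lemma emb2_iff (x : Fin (n + 2)) (y : Fin n) : x = emb2 y ↔ (x : ℕ) = (y : ℕ) :=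
  ⟨fun h => congrArg Fin.val h, fun h => Fin.ext h⟩

lemma hi_case (x : Fin (n + 2)) (hx : ¬ (x : ℕ) < n) : x = vLo ∨ x = vHi := by
  have := x.isLt
  rcases (by omega : (x : ℕ) = n ∨ (x : ℕ) = n + 1) with h | h
  · exact Or.inl (Fin.ext (by simp only [vLo]; omega))
  · exact Or.inr (Fin.ext (by simp only [vHi]; omega))

lemma repl_eq (A : Matrix (Fin n) (Fin n) ℝ) (hA : Aᵀ = -A) (i j : Fin n) (hij : i < j)
    (ha : 0 ≤ A i j) :
    replaceEdge A i j = (Cmat (A i j) i j)ᵀ * blockJ A * Cmat (A i j) i j := by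
  have hijv : (i : ℕ) < (j : ℕ) := hij
  have hne : (i : ℕ) ≠ (j : ℕ) := Nat.ne_of_lt hijv
  have hin := i.isLt
  have hjn := j.isLt
  have hni : ¬ ((n : ℕ) = (i : ℕ)) := by omega
  have hnj : ¬ ((n : ℕ) = (j : ℕ)) := by omega
  have h1i : ¬ ((n + 1 : ℕ) = (i : ℕ)) := by omega
  have h1j : ¬ ((n + 1 : ℕ) = (j : ℕ)) := by omega
  have hsucc : ¬ ((n : ℕ) = n + 1) := by omega
  have hsucc' : ¬ ((n + 1 : ℕ) = n) := by omega
  have hAji : A j i = -(A i j) := by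
    have := congrFun (congrFun hA i) j
    simpa using this
  have hsq : Real.sqrt (A i j) * Real.sqrt (A i j) = A i j := Real.mul_self_sqrt ha
  have eLL : blockJ A vLo vLo = 0 := by simp [blockJ, vLo]
  have eLH : blockJ A vLo vHi = 1 := blockJ_lo_hi A
  have eHL : blockJ A vHi vLo = -1 := blockJ_hi_lo A
  have eHH : blockJ A vHi vHi = 0 := by simp [blockJ, vHi]
  have hvLo : ((vLo : Fin (n + 2)) : ℕ) = n := rfl
  have hvHi : ((vHi : Fin (n + 2)) : ℕ) = n + 1 := rfl
  funext s t
  rw [Matrix.mul_assoc, CmatT_mul, mul_Cmat, mul_Cmat, mul_Cmat]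
  rw [eLL, eLH, eHL, eHH]
  by_cases hs : (s : ℕ) < n <;> by_cases ht : (t : ℕ) < n
  · -- both indices small
    have f1 : blockJ A s vLo = 0 := blockJ_cross₂ A s vLo hs (by simp [vLo])
    have f2 : blockJ A s vHi = 0 := blockJ_cross₂ A s vHi hs (by simp [vHi])
    have f3 : blockJ A vLo t = 0 := blockJ_cross₁ A vLo t (by simp [vLo]) ht
    have f4 : blockJ A vHi t = 0 := blockJ_cross₁ A vHi t (by simp [vHi]) ht
    rw [f1, f2, f3, f4, blockJ_lt_lt A s t hs ht]
    have hre : replaceEdge A i j s t =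
        if ((s : ℕ) = (i : ℕ) ∧ (t : ℕ) = (j : ℕ)) ∨ ((s : ℕ) = (j : ℕ) ∧ (t : ℕ) = (i : ℕ))
          then 0 else A ⟨s, hs⟩ ⟨t, ht⟩ := by
      simp only [replaceEdge]
      rw [dif_pos hs, dif_pos ht]
    rw [hre]
    simp only [emb2_iff]
    by_cases h1 : (s : ℕ) = (i : ℕ) <;> by_cases h2 : (s : ℕ) = (j : ℕ) <;>
      by_cases h3 : (t : ℕ) = (i : ℕ) <;> by_cases h4 : (t : ℕ) = (j : ℕ) <;>
      first
        | (exfalso; omega)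
        | (simp only [h1, h2, h3, h4, if_true, if_false, eq_self_iff_true, and_true,
            true_and, and_false, false_and, or_false, false_or, or_self, not_true,
            hne, Ne.symm hne, Fin.eta, hAji, mul_zero, mul_one,
            add_zero, zero_add, ite_self, neg_neg, mul_neg, neg_zero]
           try first
             | ring1
             | linear_combination hsq
             | linear_combination -hsq
             | linear_combination Real.sq_sqrt ha
             | linear_combination -(Real.sq_sqrt ha)
             | nlinarith [hsq])
  · -- s small, t large
    have f1 : blockJ A s vLo = 0 := blockJ_cross₂ A s vLo hs (by simp [vLo])
    have f2 : blockJ A s vHi = 0 := blockJ_cross₂ A s vHi hs (by simp [vHi])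
    have hre : replaceEdge A i j s t =
        (if (t : ℕ) = n ∧ (s : ℕ) = (i : ℕ) then Real.sqrt (A i j)
         else if (t : ℕ) = n + 1 ∧ (s : ℕ) = (j : ℕ) then -Real.sqrt (A i j) else 0) := by
      simp only [replaceEdge]
      rw [dif_pos hs, dif_neg ht]
    rw [hre]
    rcases hi_case t ht with h | h <;> subst h
    · rw [f1, eLL, eHL]
      simp only [emb2_iff, hvLo, hvHi]
      by_cases h1 : (s : ℕ) = (i : ℕ) <;> by_cases h2 : (s : ℕ) = (j : ℕ) <;>
        first
          | (exfalso; omega)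
          | (simp only [h1, h2, hni, hnj, h1i, h1j, hsucc, hsucc', if_true, if_false,
              eq_self_iff_true, and_true, true_and, and_false, false_and, and_self,
              mul_zero, mul_one, add_zero, zero_add, ite_self, ite_true, ite_false,
              not_false_iff, mul_neg, neg_zero]
             try ring)
    · rw [f2, eLH, eHH]
      simp only [emb2_iff, hvLo, hvHi]
      by_cases h1 : (s : ℕ) = (i : ℕ) <;> by_cases h2 : (s : ℕ) = (j : ℕ) <;>
        first
          | (exfalso; omega)
          | (simp only [h1, h2, hni, hnj, h1i, h1j, hsucc, hsucc', if_true, if_false,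
              eq_self_iff_true, and_true, true_and, and_false, false_and, and_self,
              mul_zero, mul_one, add_zero, zero_add, ite_self, ite_true, ite_false,
              not_false_iff, mul_neg, neg_zero]
             try ring)
  · -- s large, t small
    have f3 : blockJ A vLo t = 0 := blockJ_cross₁ A vLo t (by simp [vLo]) ht
    have f4 : blockJ A vHi t = 0 := blockJ_cross₁ A vHi t (by simp [vHi]) ht
    have hre : replaceEdge A i j s t =
        (if (s : ℕ) = n ∧ (t : ℕ) = (i : ℕ) then -Real.sqrt (A i j)
         else if (s : ℕ) = n + 1 ∧ (t : ℕ) = (j : ℕ) then Real.sqrt (A i j) else 0) := by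
      simp only [replaceEdge]
      rw [dif_neg hs, dif_pos ht]
    rw [hre]
    rcases hi_case s hs with h | h <;> subst h
    · rw [f3, eLL, eLH]
      simp only [emb2_iff, hvLo, hvHi]
      by_cases h3 : (t : ℕ) = (i : ℕ) <;> by_cases h4 : (t : ℕ) = (j : ℕ) <;>
        first
          | (exfalso; omega)
          | (simp only [h3, h4, hni, hnj, h1i, h1j, hsucc, hsucc', if_true, if_false,
              eq_self_iff_true, and_true, true_and, and_false, false_and, and_self,
              mul_zero, mul_one, add_zero, zero_add, ite_self, ite_true, ite_false,
              not_false_iff, mul_neg, neg_zero]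
             try ring)
    · rw [f4, eHL, eHH]
      simp only [emb2_iff, hvLo, hvHi]
      by_cases h3 : (t : ℕ) = (i : ℕ) <;> by_cases h4 : (t : ℕ) = (j : ℕ) <;>
        first
          | (exfalso; omega)
          | (simp only [h3, h4, hni, hnj, h1i, h1j, hsucc, hsucc', if_true, if_false,
              eq_self_iff_true, and_true, true_and, and_false, false_and, and_self,
              mul_zero, mul_one, add_zero, zero_add, ite_self, ite_true, ite_false,
              not_false_iff, mul_neg, neg_zero]
             try ring)
  · -- both large
    have hre : replaceEdge A i j s t =
        (if (s : ℕ) = n ∧ (t : ℕ) = n + 1 then 1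
         else if (s : ℕ) = n + 1 ∧ (t : ℕ) = n then -1 else 0) := by
      simp only [replaceEdge]
      rw [dif_neg hs, dif_neg ht]
    rw [hre]
    rcases hi_case s hs with h | h <;> rcases hi_case t ht with h' | h' <;>
      subst h <;> subst h'
    · rw [eLL]
      simp only [emb2_iff, hvLo, hvHi]
      simp only [hni, hnj, h1i, h1j, hsucc, hsucc', if_true, if_false,
        eq_self_iff_true, and_true, true_and, and_false, false_and, and_self,
        mul_zero, mul_one, add_zero, zero_add, ite_self, ite_true, ite_false,
        not_false_iff, mul_neg, neg_zero]
      try ring1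
    · rw [eLH]
      simp only [emb2_iff, hvLo, hvHi]
      simp only [hni, hnj, h1i, h1j, hsucc, hsucc', if_true, if_false,
        eq_self_iff_true, and_true, true_and, and_false, false_and, and_self,
        mul_zero, mul_one, add_zero, zero_add, ite_self, ite_true, ite_false,
        not_false_iff, mul_neg, neg_zero]
      try ring1
    · rw [eHL]
      simp only [emb2_iff, hvLo, hvHi]
      simp only [hni, hnj, h1i, h1j, hsucc, hsucc', if_true, if_false,
        eq_self_iff_true, and_true, true_and, and_false, false_and, and_self,
        mul_zero, mul_one, add_zero, zero_add, ite_self, ite_true, ite_false,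
        not_false_iff, mul_neg, neg_zero]
      try ring1
    · rw [eHH]
      simp only [emb2_iff, hvLo, hvHi]
      simp only [hni, hnj, h1i, h1j, hsucc, hsucc', if_true, if_false,
        eq_self_iff_true, and_true, true_and, and_false, false_and, and_self,
        mul_zero, mul_one, add_zero, zero_add, ite_self, ite_true, ite_false,
        not_false_iff, mul_neg, neg_zero]
      try ring1

end PfAux

/-- Lemma 2.4: replacing a nonnegative entry `a_{ij}` (with `i < j`) of an even-order
real skew-symmetric matrix `A` by a path of new entries `√(a_{ij}), 1, √(a_{ij})`
through two new indices `n+1, n+2` does not change the Pfaffian. -/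
theorem pf_replaceEdge {n : ℕ} (hn : Even n) (A : Matrix (Fin n) (Fin n) ℝ)
    (hA : Aᵀ = -A) (i j : Fin n) (hij : i < j) (ha : 0 ≤ A i j) :
    pf (replaceEdge A i j) = pf A := by
  have hn2 : n % 2 = 0 := Nat.even_iff.mp hn
  have hm2 : (n + 2) % 2 = 0 := by omega
  rw [PfAux.pf_eq hm2, PfAux.pf_eq hn2]
  rw [PfAux.repl_eq A hA i j hij ha]
  rw [PfAux.S_conj hm2 (PfAux.blockJ A) (PfAux.Cmat (A i j) i j), PfAux.det_Cmat,
    one_mul, PfAux.S_blockJ hn2 A]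
  have hfac : (2 ^ ((n + 2) / 2) * ((n + 2) / 2).factorial : ℕ)
      = (2 ^ (n / 2) * (n / 2).factorial) * (n + 2) := by
    have h2 : (n + 2) / 2 = n / 2 + 1 := by omega
    rw [h2, pow_succ, Nat.factorial_succ]
    calc 2 ^ (n / 2) * 2 * ((n / 2 + 1) * (n / 2).factorial)
        = 2 ^ (n / 2) * (n / 2).factorial * (2 * (n / 2 + 1)) := by ring
      _ = 2 ^ (n / 2) * (n / 2).factorial * (n + 2) := by
          congr 1
          omega
  rw [hfac]
  have hx : ((2 ^ (n / 2) * (n / 2).factorial : ℕ) : ℝ) ≠ 0 := by positivity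
  have hy : ((n : ℝ) + 2) ≠ 0 := by positivity
  rw [Nat.cast_mul]
  have hcast : ((n + 2 : ℕ) : ℝ) = (n : ℝ) + 2 := by push_cast; ring
  rw [hcast, mul_inv]
  calc ((2 ^ (n / 2) * (n / 2).factorial : ℕ) : ℝ)⁻¹ * ((n : ℝ) + 2)⁻¹ *
        (((n : ℝ) + 2) * PfAux.S A)
      = ((2 ^ (n / 2) * (n / 2).factorial : ℕ) : ℝ)⁻¹ * ((((n : ℝ) + 2)⁻¹ * ((n : ℝ) + 2)) *
          PfAux.S A) := by ring
    _ = ((2 ^ (n / 2) * (n / 2).factorial : ℕ) : ℝ)⁻¹ * PfAux.S A := by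
        rw [inv_mul_cancel₀ hy, one_mul]
end

section
/- Let A = (a_{ij}) be an n×n real matrix and let E = {(i_l, j_l) : l = 1,…,k} be a nonempty set of distinct pairs in {1,…,n}×{1,…,n} with i₁ ≤ i₂ ≤ … ≤ i_k and with a_{i_l j_l} ≠ 0 for each l. Fix p ∈ {1,…,k} and set E_p := E\{(i_p,j_p)} and E̅_p := {(i_p,j_p)}. Then det(E[A]) · det(A) = det(E_p[A]) · det(E̅_p[A]) − Σ_{1≤l≤k, l≠p} (−1)^{i_l+j_l+i_p+j_p} · a_{i_p j_p} · a_{i_l j_l} · det(E[A]_{i_l j_p}) · det(A_{i_p j_l}). -/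
open Matrix

/-- Given a family of pairs `(I l, J l)` indexed by `l : Fin k` and a predicate `P`
selecting some of them, `zeroEntries A P I J` is the matrix obtained from `A` by
replacing the `(I l, J l)`-entry by `0` for every `l` with `P l`, leaving all
other entries unchanged.  Taking `P := fun _ => True` gives the matrix `E[A]`
of the paper. -/
def zeroEntries {n k : ℕ} (A : Matrix (Fin n) (Fin n) ℝ) (P : Fin k → Prop)
    [DecidablePred P] (I J : Fin k → Fin n) : Matrix (Fin n) (Fin n) ℝ := fun s t =>
  if ∃ l, P l ∧ s = I l ∧ t = J l then 0 else A s t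

private lemma orderEmb_compl_singleton {m : ℕ} (i : Fin (m + 1))
    (h : ({i}ᶜ : Finset (Fin (m + 1))).card = m + 1 - 1) (s : Fin (m + 1 - 1)) :
    ({i}ᶜ : Finset (Fin (m + 1))).orderEmbOfFin h s = i.succAbove s :=
  congrFun ((Finset.orderEmbOfFin_unique h (fun x => by simp [Fin.succAbove_ne])
    (Fin.strictMono_succAbove i)).symm) s

private lemma det_minorRC {m : ℕ} (M : Matrix (Fin (m + 1)) (Fin (m + 1)) ℝ)
    (i j : Fin (m + 1)) :
    (minorRC M i j).det = (-1 : ℝ) ^ (i.val + j.val) * adjugate M j i := by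
  have e1 : minorRC M i j = M.submatrix i.succAbove j.succAbove := by
    ext s t
    show M _ _ = M _ _
    rw [orderEmb_compl_singleton i _ s, orderEmb_compl_singleton j _ t]
  rw [e1, adjugate_fin_succ_eq_det_submatrix, ← mul_assoc, ← pow_add,
    Even.neg_one_pow ⟨i.val + j.val, by ring⟩, one_mul]

private lemma det_add_std {m : ℕ} (B : Matrix (Fin m) (Fin m) ℝ) (r c : Fin m) (a : ℝ) :
    (B + Matrix.single r c a).det = B.det + a * adjugate B c r := by
  have h : B + Matrix.single r c a =
      updateRow B r (B r + a • (Pi.single c 1 : Fin m → ℝ)) := by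
    funext s t
    by_cases hs : s = r
    · subst hs
      simp [Matrix.single, Pi.single_apply, eq_comm, mul_ite]
    · simp [updateRow_apply, hs, Matrix.single, Ne.symm hs]
  rw [h, det_updateRow_add, det_updateRow_smul, updateRow_eq_self, adjugate_apply]

private lemma triple_entry {m : ℕ} (M N : Matrix (Fin m) (Fin m) ℝ) (i j u v : Fin m)
    (x : ℝ) : (M * Matrix.single i j x * N) u v = M u i * x * N j v := by
  rw [Matrix.mul_assoc, Matrix.mul_apply]
  have hstd : ∀ t, (Matrix.single i j x * N) t v = if t = i then x * N j v else 0 := by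
    intro t
    rw [Matrix.mul_apply]
    by_cases ht : t = i
    · subst ht
      rw [if_pos rfl, Finset.sum_eq_single j]
      · simp [Matrix.single]
      · intro b _ hb
        simp [Matrix.single, Ne.symm hb]
      · intro h
        exact absurd (Finset.mem_univ j) h
    · rw [if_neg ht]
      apply Finset.sum_eq_zero
      intro b _
      simp only [Matrix.single, Matrix.of_apply]
      rw [if_neg, zero_mul]
      rintro ⟨h, -⟩
      exact ht h.symm
  simp only [hstd, mul_ite, mul_zero]
  rw [Finset.sum_ite_eq' Finset.univ i (fun t => M u t * (x * N j v))]
  simp [mul_assoc]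

/-- **Theorem 4.3.**  For an arbitrary `n × n` real matrix `A`, a nonempty set
`E = {(i_l, j_l) : l ∈ [k]}` of distinct pairs with `i₁ ≤ … ≤ i_k` and
`a_{i_l j_l} ≠ 0`, and any fixed `p ∈ [k]`:
`det(E[A])·det(A) = det(E_p[A])·det(E̅_p[A]) −
 Σ_{l ≠ p} (−1)^{i_l+j_l+i_p+j_p} a_{i_p j_p} a_{i_l j_l} det(E[A]_{i_l j_p}) det(A_{i_p j_l})`. -/
theorem det_replacing' {n k : ℕ} (A : Matrix (Fin n) (Fin n) ℝ)
    (I J : Fin k → Fin n) (hI : Monotone I)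
    (hdist : Function.Injective (fun l => (I l, J l)))
    (hnz : ∀ l, A (I l) (J l) ≠ 0) (p : Fin k) :
    (zeroEntries A (fun _ => True) I J).det * A.det =
      (zeroEntries A (· ≠ p) I J).det * (zeroEntries A (· = p) I J).det -
        ∑ l ∈ Finset.univ.erase p,
          (-1 : ℝ) ^ ((I l).val + (J l).val + (I p).val + (J p).val) *
            A (I p) (J p) * A (I l) (J l) *
            (minorRC (zeroEntries A (fun _ => True) I J) (I l) (J p)).det *
            (minorRC A (I p) (J l)).det := by
  cases n with
  | zero => exact (I p).elim0
  | succ m =>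
  have hdist' : ∀ {l l'}, I l = I l' → J l = J l' → l = l' := by
    intro l l' h1 h2
    exact hdist (show (fun l => (I l, J l)) l = (fun l => (I l, J l)) l' by
      simp [h1, h2])
  set r := I p with hr
  set c := J p with hc
  set a := A r c with ha
  set B := zeroEntries A (fun _ => True) I J with hB
  set X := zeroEntries A (· ≠ p) I J with hX
  set Y := zeroEntries A (· = p) I J with hY
  -- X = B + a E_{rc}
  have hXB : X = B + Matrix.single r c a := by
    funext s t
    simp only [Matrix.add_apply, hX, hB, zeroEntries, Matrix.single, Matrix.of_apply]
    by_cases h1 : ∃ l, l ≠ p ∧ s = I l ∧ t = J l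
    · obtain ⟨l, hlp, rfl, rfl⟩ := h1
      rw [if_pos ⟨l, hlp, rfl, rfl⟩, if_pos ⟨l, trivial, rfl, rfl⟩,
        if_neg (fun h => hlp (hdist' h.1.symm h.2.symm))]
      ring
    · rw [if_neg h1]
      by_cases h2 : s = r ∧ t = c
      · obtain ⟨rfl, rfl⟩ := h2
        rw [if_pos ⟨p, trivial, rfl, rfl⟩, if_pos ⟨rfl, rfl⟩]
        ring
      · rw [if_neg, if_neg (fun h => h2 ⟨h.1.symm, h.2.symm⟩), add_zero]
        rintro ⟨l, -, rfl, rfl⟩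
        by_cases hlp : l = p
        · exact h2 ⟨by rw [hlp], by rw [hlp]⟩
        · exact h1 ⟨l, hlp, rfl, rfl⟩
  -- A = Y + a E_{rc}
  have hAY : A = Y + Matrix.single r c a := by
    funext s t
    simp only [Matrix.add_apply, hY, zeroEntries, Matrix.single, Matrix.of_apply]
    by_cases h2 : s = r ∧ t = c
    · obtain ⟨rfl, rfl⟩ := h2
      rw [if_pos ⟨p, rfl, rfl, rfl⟩, if_pos ⟨rfl, rfl⟩, zero_add]
    · rw [if_neg, if_neg (fun h => h2 ⟨h.1.symm, h.2.symm⟩), add_zero]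
      rintro ⟨l, rfl, rfl, rfl⟩
      exact h2 ⟨rfl, rfl⟩
  set D := A - X with hDdef
  have hAX : A = X + D := by rw [hDdef]; abel
  -- D as a sum of standard basis matrices
  have hDsum : D = ∑ l ∈ Finset.univ.erase p,
      Matrix.single (I l) (J l) (A (I l) (J l)) := by
    funext s t
    rw [hDdef]
    simp only [Matrix.sub_apply, Matrix.sum_apply, hX, zeroEntries,
      Matrix.single, Matrix.of_apply]
    by_cases h1 : ∃ l, l ≠ p ∧ s = I l ∧ t = J l
    · obtain ⟨l, hlp, rfl, rfl⟩ := h1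
      rw [if_pos ⟨l, hlp, rfl, rfl⟩, sub_zero, eq_comm,
        Finset.sum_eq_single_of_mem l (Finset.mem_erase.2 ⟨hlp, Finset.mem_univ l⟩)
          (fun b _ hbl => if_neg (fun h => hbl (hdist' h.1 h.2)))]
      exact if_pos ⟨rfl, rfl⟩
    · rw [if_neg h1, sub_self, eq_comm]
      apply Finset.sum_eq_zero
      intro l hl
      rw [if_neg]
      rintro ⟨rfl, rfl⟩
      exact h1 ⟨l, Finset.ne_of_mem_erase hl, rfl, rfl⟩
  -- adjugate entries agree for matrices equal off row r
  have hadjY : adjugate Y c r = adjugate A c r := by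
    rw [adjugate_apply, adjugate_apply]
    congr 1
    funext s t
    by_cases hs : s = r
    · subst hs; simp
    · rw [updateRow_apply, updateRow_apply, if_neg hs, if_neg hs, hY]
      simp only [zeroEntries]
      rw [if_neg]
      rintro ⟨l, rfl, rfl, rfl⟩
      exact hs rfl
  -- determinant of X and Y
  have hdX : X.det = B.det + a * adjugate B c r := by rw [hXB, det_add_std]
  have hdY : Y.det = A.det - a * adjugate A c r := by
    have := det_add_std Y r c a
    rw [← hAY, hadjY] at this
    linarith
  -- the key triple product computation
  have hkey : (adjugate B * D * adjugate A) c r =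
      A.det * adjugate B c r - B.det * adjugate A c r
        - a * adjugate B c r * adjugate A c r := by
    have e1 : adjugate B * D * adjugate A =
        adjugate B * A * adjugate A - adjugate B * X * adjugate A := by
      rw [hDdef]; noncomm_ring
    have e2 : adjugate B * A * adjugate A = A.det • adjugate B := by
      rw [Matrix.mul_assoc, mul_adjugate, Matrix.mul_smul, Matrix.mul_one]
    have e3 : adjugate B * X * adjugate A =
        B.det • adjugate A + adjugate B * Matrix.single r c a * adjugate A := by
      rw [hXB, Matrix.mul_add, Matrix.add_mul, adjugate_mul, Matrix.smul_mul,
        Matrix.one_mul]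
    rw [e1, e2, e3]
    simp only [Matrix.sub_apply, Matrix.add_apply, Matrix.smul_apply, smul_eq_mul,
      triple_entry]
    ring
  -- rewrite the big sum
  have hsum : ∑ l ∈ Finset.univ.erase p,
      (-1 : ℝ) ^ ((I l).val + (J l).val + (I p).val + (J p).val) *
        A (I p) (J p) * A (I l) (J l) *
        (minorRC B (I l) (J p)).det * (minorRC A (I p) (J l)).det
      = a * (adjugate B * D * adjugate A) c r := by
    have expand : (adjugate B * D * adjugate A) c r =
        ∑ l ∈ Finset.univ.erase p,
          adjugate B c (I l) * A (I l) (J l) * adjugate A (J l) r := by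
      rw [hDsum, Finset.mul_sum, Finset.sum_mul, Matrix.sum_apply]
      exact Finset.sum_congr rfl fun l _ => triple_entry _ _ _ _ _ _ _
    rw [expand, Finset.mul_sum]
    refine Finset.sum_congr rfl fun l _ => ?_
    rw [det_minorRC, det_minorRC]
    have hsgn : (-1 : ℝ) ^ ((I l).val + (J l).val + r.val + c.val) *
        (-1 : ℝ) ^ ((I l).val + c.val) * (-1 : ℝ) ^ (r.val + (J l).val) = 1 := by
      rw [← pow_add, ← pow_add]
      exact Even.neg_one_pow ⟨(I l).val + (J l).val + r.val + c.val, by ring⟩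
    linear_combination
      (a * A (I l) (J l) * adjugate B c (I l) * adjugate A (J l) r) * hsgn
  rw [hsum, hdX, hdY, hkey]
  ring
end

section
/- Let A = (a_{ij}) be an n×n real matrix and let E = {(i_l, j_l) : l = 1,…,k} be a nonempty set of distinct pairs in {1,…,n}×{1,…,n} with i₁ ≤ i₂ ≤ … ≤ i_k and with a_{i_l j_l} ≠ 0 for each l. Then for any fixed p ∈ {1,…,k}: Σ_{l=1}^{k} (−1)^{i_l+j_l} · a_{i_l j_l} · [ det(E[A]_{i_p j_l}) · det(A_{i_l j_p}) − det(E[A]_{i_l j_p}) · det(A_{i_p j_l}) ] = 0. -/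
open Matrix

lemma compl_orderEmbOfFin {m : ℕ} (i : Fin (m + 1))
    (h : ({i}ᶜ : Finset (Fin (m + 1))).card = (m + 1) - 1) :
    ⇑(({i}ᶜ : Finset (Fin (m + 1))).orderEmbOfFin h) = i.succAbove :=
  (Finset.orderEmbOfFin_unique h
    (fun x => by simp [Fin.succAbove_ne]) (Fin.strictMono_succAbove i)).symm

lemma minorRC_det {m : ℕ} (M : Matrix (Fin (m + 1)) (Fin (m + 1)) ℝ) (i j : Fin (m + 1)) :
    (minorRC M i j).det = (-1 : ℝ) ^ ((i : ℕ) + (j : ℕ)) * adjugate M j i := by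
  have hsub : minorRC M i j = M.submatrix i.succAbove j.succAbove := by
    unfold minorRC
    rw [compl_orderEmbOfFin, compl_orderEmbOfFin]
  rw [hsub, adjugate_fin_succ_eq_det_submatrix, ← mul_assoc, ← pow_add]
  have : (-1 : ℝ) ^ (((i : ℕ) + (j : ℕ)) + ((i : ℕ) + (j : ℕ))) = 1 := by
    rw [← two_mul, pow_mul]; norm_num
  rw [this, one_mul]

lemma key_adj_sum {n k : ℕ} (A B : Matrix (Fin n) (Fin n) ℝ) (I J : Fin k → Fin n)
    (hdist : Function.Injective (fun l => (I l, J l)))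
    (hB0 : ∀ l, B (I l) (J l) = 0)
    (hBe : ∀ s t, (¬ ∃ l, s = I l ∧ t = J l) → B s t = A s t) (p : Fin k) :
    ∑ l : Fin k, A (I l) (J l) *
      (adjugate B (J l) (I p) * adjugate A (J p) (I l) -
       adjugate B (J p) (I l) * adjugate A (J l) (I p)) = 0 := by
  set D := A - B with hD
  set F : Fin n × Fin n → ℝ := fun q =>
    D q.1 q.2 * (adjugate B q.2 (I p) * adjugate A (J p) q.1 -
      adjugate B (J p) q.1 * adjugate A q.2 (I p)) with hF
  have hDl : ∀ l, D (I l) (J l) = A (I l) (J l) := by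
    intro l; rw [hD, Matrix.sub_apply, hB0 l, sub_zero]
  have step1 : ∑ l : Fin k, A (I l) (J l) *
      (adjugate B (J l) (I p) * adjugate A (J p) (I l) -
       adjugate B (J p) (I l) * adjugate A (J l) (I p)) = ∑ l : Fin k, F (I l, J l) :=
    Finset.sum_congr rfl fun l _ => by rw [hF]; dsimp only; rw [hDl l]
  have step2 : ∑ l : Fin k, F (I l, J l)
      = ∑ q ∈ Finset.univ.image (fun l => (I l, J l)), F q :=
    (Finset.sum_image (fun a _ b _ h => hdist h)).symm
  have step3 : ∑ q ∈ Finset.univ.image (fun l => (I l, J l)), F q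
      = ∑ q : Fin n × Fin n, F q := by
    refine Finset.sum_subset (Finset.subset_univ _) fun q _ hq => ?_
    have hq' : ¬ ∃ l, q.1 = I l ∧ q.2 = J l := by
      simp only [Finset.mem_image, Finset.mem_univ, true_and] at hq
      rintro ⟨l, h1, h2⟩
      exact hq ⟨l, by rw [← h1, ← h2]⟩
    have : D q.1 q.2 = 0 := by rw [hD, Matrix.sub_apply, hBe q.1 q.2 hq', sub_self]
    rw [hF]; dsimp only; rw [this, zero_mul]
  have hentry : ∀ (X Y : Matrix (Fin n) (Fin n) ℝ) (x y : Fin n),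
      (X * D * Y) x y = ∑ s, ∑ t, X x s * D s t * Y t y := by
    intro X Y x y
    simp only [Matrix.mul_apply, Finset.sum_mul]
    exact Finset.sum_comm
  have step4 : ∑ q : Fin n × Fin n, F q =
      (adjugate A * D * adjugate B) (J p) (I p) -
      (adjugate B * D * adjugate A) (J p) (I p) := by
    rw [hentry, hentry, ← Finset.sum_sub_distrib, Fintype.sum_prod_type]
    refine Finset.sum_congr rfl fun s _ => ?_
    rw [← Finset.sum_sub_distrib]
    refine Finset.sum_congr rfl fun t _ => ?_
    rw [hF]; dsimp only; ring
  have hmat : adjugate A * D * adjugate B = adjugate B * D * adjugate A := by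
    rw [hD, mul_sub, sub_mul, adjugate_mul, smul_mul_assoc, one_mul,
      mul_assoc (adjugate A), mul_adjugate, mul_smul_comm, mul_one,
      mul_sub, sub_mul, mul_assoc (adjugate B), mul_adjugate, mul_smul_comm, mul_one,
      adjugate_mul, smul_mul_assoc, one_mul]
  rw [step1, step2, step3, step4, hmat, sub_self]

lemma neg_one_pow_helper (a b c d : ℕ) :
    (-1 : ℝ) ^ (a + b) * ((-1) ^ (c + b) * (-1) ^ (a + d)) = (-1) ^ (c + d) := by
  rw [← pow_add, ← pow_add]
  have : (a + b) + ((c + b) + (a + d)) = 2 * (a + b) + (c + d) := by ring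
  rw [this, pow_add, pow_mul]
  norm_num

/-- **Corollary 4.1.**  For an arbitrary `n × n` real matrix `A`, a nonempty set
`E = {(i_l, j_l) : l ∈ [k]}` of distinct pairs with `i₁ ≤ … ≤ i_k` and
`a_{i_l j_l} ≠ 0`, and any fixed `p ∈ [k]`:
`Σ_{l=1}^k (−1)^{i_l+j_l} a_{i_l j_l}
 [det(E[A]_{i_p j_l}) det(A_{i_l j_p}) − det(E[A]_{i_l j_p}) det(A_{i_p j_l})] = 0`. -/
theorem det_replacing_sum {n k : ℕ} (A : Matrix (Fin n) (Fin n) ℝ)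
    (I J : Fin k → Fin n) (hI : Monotone I)
    (hdist : Function.Injective (fun l => (I l, J l)))
    (hnz : ∀ l, A (I l) (J l) ≠ 0) (p : Fin k) :
    ∑ l : Fin k,
      (-1 : ℝ) ^ ((I l).val + (J l).val) * A (I l) (J l) *
        ((minorRC (zeroEntries A (fun _ => True) I J) (I p) (J l)).det *
            (minorRC A (I l) (J p)).det -
          (minorRC (zeroEntries A (fun _ => True) I J) (I l) (J p)).det *
            (minorRC A (I p) (J l)).det) = 0 := by
  obtain _ | m := n
  · exact (I p).elim0
  set B := zeroEntries A (fun _ => True) I J with hBdef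
  have hB0 : ∀ l, B (I l) (J l) = 0 := by
    intro l
    rw [hBdef, zeroEntries, if_pos ⟨l, trivial, rfl, rfl⟩]
  have hBe : ∀ s t, (¬ ∃ l, s = I l ∧ t = J l) → B s t = A s t := by
    intro s t h
    rw [hBdef, zeroEntries, if_neg]
    rintro ⟨l, -, h1, h2⟩
    exact h ⟨l, h1, h2⟩
  have key := key_adj_sum A B I J hdist hB0 hBe p
  calc ∑ l : Fin k,
      (-1 : ℝ) ^ ((I l).val + (J l).val) * A (I l) (J l) *
        ((minorRC B (I p) (J l)).det * (minorRC A (I l) (J p)).det -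
          (minorRC B (I l) (J p)).det * (minorRC A (I p) (J l)).det)
      = ∑ l : Fin k, (-1 : ℝ) ^ ((I p).val + (J p).val) *
          (A (I l) (J l) *
            (adjugate B (J l) (I p) * adjugate A (J p) (I l) -
             adjugate B (J p) (I l) * adjugate A (J l) (I p))) := by
        refine Finset.sum_congr rfl fun l _ => ?_
        rw [minorRC_det, minorRC_det, minorRC_det, minorRC_det]
        have hsgn := neg_one_pow_helper ((I l) : ℕ) ((J l) : ℕ) ((I p) : ℕ) ((J p) : ℕ)
        linear_combination (A (I l) (J l) *
          (adjugate B (J l) (I p) * adjugate A (J p) (I l) -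
           adjugate B (J p) (I l) * adjugate A (J l) (I p))) * hsgn
    _ = 0 := by rw [← Finset.mul_sum, key, mul_zero]
end
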